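/- arXiv:1807.09120 — 9 statements merged into one kernel-verified Lean document; each statement's English description precedes it below -/
import Mathlib

section
/- Let Q ∈ ℝ^{p×p} and R ∈ ℝ^{r×r} be positive definite, A ∈ ℝ^{p×p}, B ∈ ℝ^{p×r}. If a positive semidefinite matrix K ∈ ℝ^{p×p} satisfies the discrete algebraic Riccati equation K = Q + AᵀKA − AᵀKB(BᵀKB+R)^{-1}BᵀKA, then the linear feedback matrix L = −(BᵀKB+R)^{-1}BᵀKA is a stabilizer: the matrix A+BL has spectral radius less than 1. -/
/-!
The Riccati equation says exactly that `K` is a Lyapunov matrix for the closed loop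
`M = A + B L`: `K - Mᵀ K M = Q + Lᵀ R L`, which is positive definite. If `M v = μ v` for a
complex `v ≠ 0`, then `v* (K - Mᴴ K M) v = (1 - |μ|²) v* K v`; the left side is positive and
`v* K v ≥ 0`, so `|μ| < 1`.
-/

open Matrix

/-- A real square matrix has spectral radius less than one: every complex root of its
characteristic polynomial has modulus less than one. -/
def SpecRadiusLtOne {p : ℕ} (D : Matrix (Fin p) (Fin p) ℝ) : Prop :=
  ∀ lam : ℂ, ((D.map (algebraMap ℝ ℂ)).charpoly).IsRoot lam → ‖lam‖ < 1

open scoped ComplexOrder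

namespace Matrix

theorem lyapunov_closedLoop_of_riccati {m n α : Type*} [Fintype m] [Fintype n] [DecidableEq m]
    [CommRing α] {Q A K : Matrix n n α} {R : Matrix m m α} {B : Matrix n m α}
    {L : Matrix m n α} (hS : IsUnit (Bᵀ * K * B + R).det)
    (hric : K = Q + Aᵀ * K * A - Aᵀ * K * B * (Bᵀ * K * B + R)⁻¹ * (Bᵀ * K * A))
    (hL : L = -(Bᵀ * K * B + R)⁻¹ * (Bᵀ * K * A)) :
    K - (A + B * L)ᵀ * K * (A + B * L) = Q + Lᵀ * R * L := by
  set S := Bᵀ * K * B + R with hS_def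
  have hSL : S * L = -(Bᵀ * K * A) := by
    rw [hL, Matrix.neg_mul, Matrix.mul_neg, ← Matrix.mul_assoc, mul_nonsing_inv _ hS,
      Matrix.one_mul]
  have hBL : Aᵀ * K * (B * L) = -(Aᵀ * K * B * S⁻¹ * (Bᵀ * K * A)) := by
    simp only [hL, Matrix.neg_mul, Matrix.mul_neg, Matrix.mul_assoc]
  have hLBKB : Lᵀ * (Bᵀ * K * B) * L = -(Lᵀ * (Bᵀ * K * A)) - Lᵀ * R * L := by
    calc Lᵀ * (Bᵀ * K * B) * L = Lᵀ * (S * L) - Lᵀ * R * L := by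
          simp only [hS_def, Matrix.add_mul, Matrix.mul_add, Matrix.mul_assoc]
          abel
      _ = -(Lᵀ * (Bᵀ * K * A)) - Lᵀ * R * L := by rw [hSL, Matrix.mul_neg]
  calc K - (A + B * L)ᵀ * K * (A + B * L)
        = K - (Aᵀ * K * A + Aᵀ * K * (B * L) + Lᵀ * (Bᵀ * K * A) + Lᵀ * (Bᵀ * K * B) * L) := by
        simp only [transpose_add, transpose_mul, Matrix.add_mul, Matrix.mul_add, Matrix.mul_assoc]
        abel
    _ = Q + Lᵀ * R * L := by
        rw [hBL, hLBKB]
        nth_rewrite 1 [hric]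
        abel

theorem exists_mulVec_eq_smul_of_isRoot_charpoly {n K : Type*} [Fintype n] [DecidableEq n]
    [Field K] {M : Matrix n n K} {μ : K} (hμ : M.charpoly.IsRoot μ) :
    ∃ v, v ≠ 0 ∧ M *ᵥ v = μ • v := by
  rw [Polynomial.IsRoot, eval_charpoly, ← exists_mulVec_eq_zero_iff] at hμ
  obtain ⟨v, hv, hMv⟩ := hμ
  refine ⟨v, hv, ?_⟩
  rw [sub_mulVec, sub_eq_zero, scalar_apply] at hMv
  ext i
  simp [← hMv, mulVec_diagonal]

theorem norm_eigenvalue_lt_one_of_lyapunov {n 𝕜 : Type*} [Fintype n] [RCLike 𝕜]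
    {M K : Matrix n n 𝕜} (hK : K.PosSemidef) (hP : (K - Mᴴ * K * M).PosDef) {μ : 𝕜}
    {v : n → 𝕜} (hv : v ≠ 0) (hMv : M *ᵥ v = μ • v) : ‖μ‖ < 1 := by
  have hquad : star v ⬝ᵥ ((K - Mᴴ * K * M) *ᵥ v)
      = (1 - ‖μ‖ ^ 2 : ℝ) • (star v ⬝ᵥ (K *ᵥ v)) := by
    rw [sub_mulVec, dotProduct_sub, ← mulVec_mulVec, ← mulVec_mulVec,
      dotProduct_mulVec (star v) Mᴴ, ← star_mulVec, hMv, mulVec_smul, star_smul, smul_dotProduct,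
      dotProduct_smul, smul_smul, smul_eq_mul, RCLike.star_def, RCLike.conj_mul,
      RCLike.real_smul_eq_coe_mul]
    push_cast
    ring
  have hpos := hP.re_dotProduct_pos hv
  rw [hquad, RCLike.smul_re] at hpos
  have hμ_sq : 0 < 1 - ‖μ‖ ^ 2 := pos_of_mul_pos_left hpos (hK.re_dotProduct_nonneg v)
  nlinarith [norm_nonneg μ]

theorem conjTranspose_map_ofReal {m n : Type*} (C : Matrix m n ℝ) :
    (C.map (algebraMap ℝ ℂ))ᴴ = Cᵀ.map (algebraMap ℝ ℂ) := by
  rw [← conjTranspose_eq_transpose_of_trivial, conjTranspose_map]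
  intro x
  simp

theorem PosSemidef.map_ofReal {n : Type*} [Fintype n] {P : Matrix n n ℝ} (hP : P.PosSemidef) :
    (P.map (algebraMap ℝ ℂ)).PosSemidef := by
  classical
  open scoped MatrixOrder Matrix.Norms.L2Operator in
  obtain ⟨C, rfl⟩ := CStarAlgebra.nonneg_iff_eq_star_mul_self.mp hP.nonneg
  rw [star_eq_conjTranspose, Matrix.map_mul, conjTranspose_eq_transpose_of_trivial,
    ← conjTranspose_map_ofReal]
  exact posSemidef_conjTranspose_mul_self _

theorem PosDef.map_ofReal {n : Type*} [Fintype n] [DecidableEq n] {P : Matrix n n ℝ}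
    (hP : P.PosDef) : (P.map (algebraMap ℝ ℂ)).PosDef := by
  rw [hP.posSemidef.map_ofReal.posDef_iff_det_ne_zero, ← RingHom.mapMatrix_apply,
    ← RingHom.map_det]
  simpa using hP.det_pos.ne'

end Matrix

theorem specRadiusLtOne_of_lyapunov {p : ℕ} {M K : Matrix (Fin p) (Fin p) ℝ}
    (hK : K.PosSemidef) (hP : (K - Mᵀ * K * M).PosDef) : SpecRadiusLtOne M := by
  intro μ hμ
  obtain ⟨v, hv, hMv⟩ := exists_mulVec_eq_smul_of_isRoot_charpoly hμ
  refine norm_eigenvalue_lt_one_of_lyapunov hK.map_ofReal ?_ hv hMv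
  have hPc := hP.map_ofReal
  rwa [Matrix.map_sub _ (map_sub _), Matrix.map_mul, Matrix.map_mul,
    ← conjTranspose_map_ofReal] at hPc

/-- if a positive semidefinite `K` solves the discrete algebraic Riccati equation,
then the feedback `L = -(BᵀKB + R)⁻¹BᵀKA` stabilizes: `A + B * L` has spectral radius
less than one. -/
theorem riccati_solution_gives_stabilizer {p r : ℕ}
    (Q : Matrix (Fin p) (Fin p) ℝ) (R : Matrix (Fin r) (Fin r) ℝ)
    (A : Matrix (Fin p) (Fin p) ℝ) (B : Matrix (Fin p) (Fin r) ℝ)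
    (hQ : Q.PosDef) (hR : R.PosDef)
    (K : Matrix (Fin p) (Fin p) ℝ) (hK : K.PosSemidef)
    (hric : K = Q + Aᵀ * K * A - Aᵀ * K * B * (Bᵀ * K * B + R)⁻¹ * (Bᵀ * K * A))
    (L : Matrix (Fin r) (Fin p) ℝ) (hL : L = -(Bᵀ * K * B + R)⁻¹ * (Bᵀ * K * A)) :
    SpecRadiusLtOne (A + B * L) := by
  have hS : (Bᵀ * K * B + R).PosDef :=
    PosDef.posSemidef_add (hK.conjTranspose_mul_mul_same B) hR
  refine specRadiusLtOne_of_lyapunov hK ?_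
  rw [lyapunov_closedLoop_of_riccati ((isUnit_iff_isUnit_det _).mp hS.isUnit) hric hL]
  exact hQ.add_posSemidef (hR.posSemidef.conjTranspose_mul_mul_same L)
end

section
/- Let Q ∈ ℝ^{p×p}, R ∈ ℝ^{r×r} be positive definite, [A₀,B₀] stabilizable, and K₀ the unique positive semidefinite solution of the Riccati equation for (A₀,B₀,Q,R). Let {w(t)}_{t≥1} be independent random vectors in ℝ^p with mean zero and positive definite covariance matrix C, x(0) a deterministic initial state, and let x(t+1) = A₀x(t) + B₀u(t) + w(t+1), where for every t the control u(t) is an ℝ^r-valued random vector measurable with respect to σ(x(0),…,x(t)). Then for c_t = x(t)ᵀQx(t) + u(t)ᵀRu(t) it holds that limsup_{T→∞} (1/T) Σ_{t=1}^{T} E[c_t] ≥ tr(K₀ C). -/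
/-!
Completing the square with the Riccati equation gives, for every state `x` and input `u`,
`xᵀK₀x ≤ xᵀQx + uᵀRu + (A₀x + B₀u)ᵀK₀(A₀x + B₀u)`. The drift `A₀x(t) + B₀u(t)` is measurable
with respect to `σ(w 1, …, w t)`, hence independent of the centred noise `w (t + 1)`, so taking
expectations yields `V t + tr(K₀C) ≤ E c(t) + V (t + 1)` for `V t = E[x(t)ᵀK₀x(t)]`, and by
telescoping `T tr(K₀C) ≤ ∑_{t ≤ T} E c(t) + V (T + 1)`. If the average cost stayed below some
`β < tr(K₀C)`, then `V` would grow linearly; as `Q` dominates a multiple of `K₀`, so would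
`E c(t)`, and the cumulative cost would grow quadratically, which is absurd. An infinite expected
cost makes the limsup infinite.
-/

open Matrix MeasureTheory ProbabilityTheory

/-- The pair `[A, B]` is stabilizable. -/
def Stabilizable {p r : ℕ} (A : Matrix (Fin p) (Fin p) ℝ) (B : Matrix (Fin p) (Fin r) ℝ) : Prop :=
  ∃ L : Matrix (Fin r) (Fin p) ℝ, SpecRadiusLtOne (A + B * L)

namespace Matrix

variable {n m : Type*} [Fintype n] [Fintype m]

lemma PosSemidef.dotProduct_mulVec_self_nonneg {M : Matrix n n ℝ} (hM : M.PosSemidef)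
    (v : n → ℝ) : 0 ≤ v ⬝ᵥ M *ᵥ v := by
  simpa using hM.dotProduct_mulVec_nonneg v

lemma dotProduct_mulVec_eq_transpose_mulVec_dotProduct (M : Matrix n m ℝ) (v : n → ℝ)
    (w : m → ℝ) : v ⬝ᵥ M *ᵥ w = (Mᵀ *ᵥ v) ⬝ᵥ w := by
  rw [dotProduct_mulVec, mulVec_transpose]

lemma mulVec_dotProduct_eq_dotProduct_transpose_mulVec (M : Matrix n m ℝ) (w : m → ℝ)
    (v : n → ℝ) : (M *ᵥ w) ⬝ᵥ v = w ⬝ᵥ Mᵀ *ᵥ v := by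
  rw [dotProduct_comm, dotProduct_mulVec_eq_transpose_mulVec_dotProduct, dotProduct_comm]

lemma PosDef.exists_sq_le_mul_dotProduct_mulVec [DecidableEq n] {M : Matrix n n ℝ}
    (hM : M.PosDef) (i : n) : ∃ κ, 0 ≤ κ ∧ ∀ v : n → ℝ, v i ^ 2 ≤ κ * (v ⬝ᵥ M *ᵥ v) := by
  obtain ⟨y, hy⟩ := mulVec_surjective_iff_isUnit.2 hM.isUnit (Pi.single i 1)
  have hpsd := hM.posSemidef.dotProduct_mulVec_self_nonneg
  refine ⟨y ⬝ᵥ M *ᵥ y, hpsd y, fun v => ?_⟩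
  have hvy : v ⬝ᵥ M *ᵥ y = v i := by simp [hy]
  have hyv : y ⬝ᵥ M *ᵥ v = v i := by
    rw [dotProduct_mulVec_eq_transpose_mulVec_dotProduct, (isHermitian_iff_isSymm.1 hM.1).eq,
      dotProduct_comm, hvy]
  -- Cauchy–Schwarz for the form of `M`, tested against `y = M⁻¹ eᵢ`
  have hCS := LinearMap.BilinForm.apply_mul_apply_le_of_forall_zero_le (toLinearMap₂' ℝ M)
    (fun x => (toLinearMap₂'_apply' M x x).trans_ge (hpsd x)) v y
  simp only [toLinearMap₂'_apply', hvy, hyv] at hCS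
  linarith [sq (v i)]

lemma dotProduct_mulVec_self_le_sum_abs_mul_sum_sq (K : Matrix n n ℝ) (v : n → ℝ) :
    v ⬝ᵥ K *ᵥ v ≤ (∑ i, ∑ j, |K i j|) * ∑ i, v i ^ 2 := by
  have hcoord : ∀ i j, |v i * v j| ≤ ∑ k, v k ^ 2 := fun i j => by
    have hi := Finset.single_le_sum (fun k _ => sq_nonneg (v k)) (Finset.mem_univ i)
    have hj := Finset.single_le_sum (fun k _ => sq_nonneg (v k)) (Finset.mem_univ j)
    rw [abs_mul]
    nlinarith [two_mul_le_add_sq |v i| |v j|, sq_abs (v i), sq_abs (v j)]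
  calc v ⬝ᵥ K *ᵥ v = ∑ i, ∑ j, v i * (K i j * v j) := by
        simp only [dotProduct, mulVec, Finset.mul_sum]
    _ ≤ ∑ i, ∑ j, |K i j| * ∑ k, v k ^ 2 := by
      refine Finset.sum_le_sum fun i _ => Finset.sum_le_sum fun j _ => ?_
      calc v i * (K i j * v j) ≤ |K i j| * |v i * v j| := by
            rw [← abs_mul, mul_left_comm]; exact le_abs_self _
        _ ≤ |K i j| * ∑ k, v k ^ 2 := mul_le_mul_of_nonneg_left (hcoord i j) (abs_nonneg _)
    _ = _ := by simp only [Finset.sum_mul]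

lemma PosDef.exists_pos_mul_dotProduct_mulVec_le [DecidableEq n] {Q : Matrix n n ℝ}
    (hQ : Q.PosDef) (K : Matrix n n ℝ) :
    ∃ α, 0 < α ∧ ∀ v : n → ℝ, α * (v ⬝ᵥ K *ᵥ v) ≤ v ⬝ᵥ Q *ᵥ v := by
  choose κ hκ0 hκ using hQ.exists_sq_le_mul_dotProduct_mulVec
  set L := ∑ i, ∑ j, |K i j|
  have hL : 0 ≤ L := by positivity
  have hκS : 0 ≤ ∑ i, κ i := Finset.sum_nonneg fun i _ => hκ0 i
  refine ⟨(L * ∑ i, κ i + 1)⁻¹, by positivity, fun v => ?_⟩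
  have hQv := hQ.posSemidef.dotProduct_mulVec_self_nonneg v
  have hsum : ∑ i, v i ^ 2 ≤ (∑ i, κ i) * (v ⬝ᵥ Q *ᵥ v) := by
    rw [Finset.sum_mul]; exact Finset.sum_le_sum fun i _ => hκ i v
  have hK := (dotProduct_mulVec_self_le_sum_abs_mul_sum_sq K v).trans
    (mul_le_mul_of_nonneg_left hsum hL)
  rw [inv_mul_le_iff₀ (by positivity)]
  nlinarith

lemma PosDef.dotProduct_mulVec_add_two_mul_dotProduct_add_inv_nonneg [DecidableEq m]
    {S : Matrix m m ℝ} (hS : S.PosDef) (u g : m → ℝ) :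
    0 ≤ u ⬝ᵥ S *ᵥ u + 2 * (u ⬝ᵥ g) + g ⬝ᵥ S⁻¹ *ᵥ g := by
  set v := S⁻¹ *ᵥ g
  have hSv : S *ᵥ v = g := by
    rw [mulVec_mulVec, mul_nonsing_inv _ ((isUnit_iff_isUnit_det S).1 hS.isUnit), one_mulVec]
  have hvS : ∀ w, v ⬝ᵥ S *ᵥ w = g ⬝ᵥ w := fun w => by
    rw [dotProduct_mulVec_eq_transpose_mulVec_dotProduct, (isHermitian_iff_isSymm.1 hS.1).eq, hSv]
  have hsq := hS.posSemidef.dotProduct_mulVec_self_nonneg (u + v)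
  rw [mulVec_add, add_dotProduct, dotProduct_add, dotProduct_add, hvS, hvS, hSv,
    dotProduct_comm g u] at hsq
  linarith [dotProduct_comm g v]

theorem dotProduct_mulVec_le_of_riccati [DecidableEq m] {Q K A : Matrix n n ℝ}
    {R : Matrix m m ℝ} {B : Matrix n m ℝ} (hR : R.PosDef) (hK : K.PosSemidef)
    (hric : K = Q + Aᵀ * K * A - Aᵀ * K * B * (Bᵀ * K * B + R)⁻¹ * (Bᵀ * K * A))
    (x : n → ℝ) (u : m → ℝ) :
    x ⬝ᵥ K *ᵥ x ≤ x ⬝ᵥ Q *ᵥ x + u ⬝ᵥ R *ᵥ u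
      + (A *ᵥ x + B *ᵥ u) ⬝ᵥ K *ᵥ (A *ᵥ x + B *ᵥ u) := by
  set S := Bᵀ * K * B + R
  have hS : S.PosDef :=
    PosDef.posSemidef_add (by simpa using hK.conjTranspose_mul_mul_same B) hR
  have hKt : Kᵀ = K := (isHermitian_iff_isSymm.1 hK.1).eq
  set g := Bᵀ *ᵥ K *ᵥ A *ᵥ x
  have hQ : Q = K - Aᵀ * K * A + Aᵀ * K * B * S⁻¹ * (Bᵀ * K * A) := by
    calc Q = (Q + Aᵀ * K * A - Aᵀ * K * B * S⁻¹ * (Bᵀ * K * A))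
          - Aᵀ * K * A + Aᵀ * K * B * S⁻¹ * (Bᵀ * K * A) := by abel
      _ = _ := by rw [← hric]
  have hQx : x ⬝ᵥ Q *ᵥ x = x ⬝ᵥ K *ᵥ x - (A *ᵥ x) ⬝ᵥ K *ᵥ (A *ᵥ x) + g ⬝ᵥ S⁻¹ *ᵥ g := by
    rw [hQ]
    simp only [sub_mulVec, add_mulVec, dotProduct_sub, dotProduct_add, ← mulVec_mulVec,
      dotProduct_mulVec_eq_transpose_mulVec_dotProduct Aᵀ x, transpose_transpose]
    rw [dotProduct_mulVec_eq_transpose_mulVec_dotProduct K (A *ᵥ x) (B *ᵥ _), hKt,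
      dotProduct_mulVec_eq_transpose_mulVec_dotProduct B]
  have hy : (A *ᵥ x + B *ᵥ u) ⬝ᵥ K *ᵥ (A *ᵥ x + B *ᵥ u)
      = (A *ᵥ x) ⬝ᵥ K *ᵥ (A *ᵥ x) + 2 * (u ⬝ᵥ g) + u ⬝ᵥ (Bᵀ * K * B) *ᵥ u := by
    simp only [mulVec_add, dotProduct_add, add_dotProduct, ← mulVec_mulVec]
    rw [dotProduct_comm (A *ᵥ x) (K *ᵥ B *ᵥ u),
      mulVec_dotProduct_eq_dotProduct_transpose_mulVec K, hKt]
    simp only [mulVec_dotProduct_eq_dotProduct_transpose_mulVec B u]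
    ring
  have hSu : u ⬝ᵥ S *ᵥ u = u ⬝ᵥ (Bᵀ * K * B) *ᵥ u + u ⬝ᵥ R *ᵥ u := by
    simp only [S, add_mulVec, dotProduct_add]
  linarith [hS.dotProduct_mulVec_add_two_mul_dotProduct_add_inv_nonneg u g]

end Matrix

section SquareIntegrable

variable {Ω : Type*} [MeasurableSpace Ω] {μ : Measure Ω} {n m : Type*}

lemma integral_mul_eq_zero_of_indepFun {Z : Ω → n → ℝ} {W : Ω → m → ℝ}
    (hZ : AEStronglyMeasurable Z μ) (hW : AEStronglyMeasurable W μ) (hZW : IndepFun Z W μ)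
    (hW0 : ∀ j, ∫ ω, W ω j ∂μ = 0) (i : n) (j : m) : ∫ ω, Z ω i * W ω j ∂μ = 0 := by
  calc ∫ ω, Z ω i * W ω j ∂μ = (∫ ω, Z ω i ∂μ) * ∫ ω, W ω j ∂μ :=
        (hZW.comp (measurable_pi_apply i) (measurable_pi_apply j)).integral_fun_mul_eq_mul_integral
          ((continuous_apply i).comp_aestronglyMeasurable hZ)
          ((continuous_apply j).comp_aestronglyMeasurable hW)
    _ = 0 := by rw [hW0 j, mul_zero]

variable [Fintype n] [Fintype m]

lemma MeasureTheory.MemLp.mulVec {p : ENNReal} {f : Ω → m → ℝ} (hf : MemLp f p μ)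
    (M : Matrix n m ℝ) : MemLp (fun ω => M *ᵥ f ω) p μ :=
  M.mulVecLin.toContinuousLinearMap.comp_memLp' hf

lemma integrable_dotProduct {f g : Ω → n → ℝ} (hf : MemLp f 2 μ) (hg : MemLp g 2 μ) :
    Integrable (fun ω => f ω ⬝ᵥ g ω) μ :=
  integrable_finsetSum _ fun i _ => (hf.eval i).integrable_mul (hg.eval i)

lemma integral_dotProduct_mulVec {f : Ω → n → ℝ} {g : Ω → m → ℝ} (hf : MemLp f 2 μ)
    (hg : MemLp g 2 μ) (N : Matrix n m ℝ) :
    ∫ ω, f ω ⬝ᵥ N *ᵥ g ω ∂μ = ∑ i, ∑ j, N i j * ∫ ω, f ω i * g ω j ∂μ := by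
  have hfg : ∀ i j, Integrable (fun ω => N i j * (f ω i * g ω j)) μ := fun i j =>
    ((hf.eval i).integrable_mul (hg.eval j)).const_mul _
  simp_rw [dotProduct, mulVec, dotProduct, Finset.mul_sum, mul_left_comm (f _ _)]
  rw [integral_finsetSum _ fun i _ => integrable_finsetSum _ fun j _ => hfg i j]
  simp_rw [integral_finsetSum _ fun j _ => hfg _ j, integral_const_mul]

lemma integral_add_dotProduct_mulVec_add_of_indepFun {Z W : Ω → n → ℝ} (hZ : MemLp Z 2 μ)
    (hW : MemLp W 2 μ) (hZW : IndepFun Z W μ) (hW0 : ∀ i, ∫ ω, W ω i ∂μ = 0)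
    (K : Matrix n n ℝ) :
    ∫ ω, (Z ω + W ω) ⬝ᵥ K *ᵥ (Z ω + W ω) ∂μ
      = ∫ ω, Z ω ⬝ᵥ K *ᵥ Z ω ∂μ + ∫ ω, W ω ⬝ᵥ K *ᵥ W ω ∂μ := by
  have hprod : ∀ {f g : Ω → n → ℝ}, MemLp f 2 μ → MemLp g 2 μ → ∀ i j,
      Integrable (fun ω => f ω i * g ω j) μ := fun hf hg i j =>
    (hf.eval i).integrable_mul (hg.eval j)
  have hcross := integral_mul_eq_zero_of_indepFun hZ.1 hW.1 hZW hW0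
  have hsum : MemLp (fun ω => Z ω + W ω) 2 μ := hZ.add hW
  simp_rw [integral_dotProduct_mulVec hsum hsum, integral_dotProduct_mulVec hZ hZ,
    integral_dotProduct_mulVec hW hW, ← Finset.sum_add_distrib, ← mul_add]
  refine Finset.sum_congr rfl fun i _ => Finset.sum_congr rfl fun j _ => congrArg _ ?_
  have hsq : Integrable (fun ω => Z ω i * Z ω j + W ω i * W ω j) μ :=
    (hprod hZ hZ i j).add (hprod hW hW i j)
  have hmixed : Integrable (fun ω => Z ω i * W ω j + Z ω j * W ω i) μ :=
    (hprod hZ hW i j).add (hprod hZ hW j i)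
  calc ∫ ω, (Z ω + W ω) i * (Z ω + W ω) j ∂μ
        = ∫ ω, (Z ω i * Z ω j + W ω i * W ω j) + (Z ω i * W ω j + Z ω j * W ω i) ∂μ :=
          integral_congr_ae (ae_of_all _ fun ω => by simp only [Pi.add_apply]; ring)
    _ = _ := by
      rw [integral_add hsq hmixed, integral_add (hprod hZ hW i j) (hprod hZ hW j i),
        integral_add (hprod hZ hZ i j) (hprod hW hW i j), hcross, hcross, add_zero, add_zero]

lemma integral_dotProduct_mulVec_self_eq_trace {W : Ω → n → ℝ} (hW : MemLp W 2 μ)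
    {C : Matrix n n ℝ} (hC : ∀ i j, ∫ ω, W ω i * W ω j ∂μ = C i j) (K : Matrix n n ℝ) :
    ∫ ω, W ω ⬝ᵥ K *ᵥ W ω ∂μ = (K * C).trace := by
  simp only [integral_dotProduct_mulVec hW hW, trace, diag, mul_apply]
  refine Finset.sum_congr rfl fun i _ => Finset.sum_congr rfl fun j _ => ?_
  simp_rw [← hC j i, mul_comm (W _ i)]

lemma memLp_two_of_dotProduct_mulVec_le [DecidableEq n] {M : Matrix n n ℝ}
    (hM : M.PosDef) {f : Ω → n → ℝ} {g : Ω → ℝ} (hf : AEStronglyMeasurable f μ)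
    (hg : Integrable g μ) (hfg : ∀ ω, f ω ⬝ᵥ M *ᵥ f ω ≤ g ω) : MemLp f 2 μ := by
  refine memLp_pi_iff.2 fun i => ?_
  obtain ⟨κ, hκ, hκM⟩ := hM.exists_sq_le_mul_dotProduct_mulVec i
  have hfi : AEStronglyMeasurable (fun ω => f ω i) μ :=
    (continuous_apply i).comp_aestronglyMeasurable hf
  refine (memLp_two_iff_integrable_sq hfi).2 <|
    (hg.const_mul κ).mono' (hfi.pow 2) (ae_of_all _ fun ω => ?_)
  rw [Real.norm_eq_abs, abs_of_nonneg (sq_nonneg _)]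
  exact (hκM _).trans (mul_le_mul_of_nonneg_left (hfg ω) hκ)

lemma memLp_two_of_integrable_mul_self {f : Ω → n → ℝ} (hf : Measurable f)
    (hf2 : ∀ i, Integrable (fun ω => f ω i * f ω i) μ) : MemLp f 2 μ :=
  memLp_pi_iff.2 fun i =>
    (memLp_two_iff_integrable_sq ((measurable_pi_apply i).comp hf).aestronglyMeasurable).2
      (by simpa only [sq, Function.comp_apply] using hf2 i)

lemma integrable_and_memLp_two_of_lintegral_ne_top [DecidableEq n] [DecidableEq m]
    {Q : Matrix n n ℝ} {R : Matrix m m ℝ} (hQ : Q.PosDef) (hR : R.PosDef) {X : Ω → n → ℝ}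
    {U : Ω → m → ℝ} {c : Ω → ℝ} (hX : Measurable X) (hU : Measurable U)
    (hc : ∀ ω, c ω = X ω ⬝ᵥ Q *ᵥ X ω + U ω ⬝ᵥ R *ᵥ U ω)
    (hfin : ∫⁻ ω, ENNReal.ofReal (c ω) ∂μ ≠ ⊤) :
    Integrable c μ ∧ MemLp X 2 μ ∧ MemLp U 2 μ := by
  have hXQ := fun ω => hQ.posSemidef.dotProduct_mulVec_self_nonneg (X ω)
  have hUR := fun ω => hR.posSemidef.dotProduct_mulVec_self_nonneg (U ω)
  have hcm : Measurable c := by rw [funext hc]; fun_prop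
  have hci : Integrable c μ := (lintegral_ofReal_ne_top_iff_integrable hcm.aestronglyMeasurable
    (ae_of_all _ fun ω => (add_nonneg (hXQ ω) (hUR ω)).trans_eq (hc ω).symm)).1 hfin
  exact ⟨hci,
    memLp_two_of_dotProduct_mulVec_le hQ hX.aestronglyMeasurable hci fun ω => by
      rw [hc]; linarith [hUR ω],
    memLp_two_of_dotProduct_mulVec_le hR hU.aestronglyMeasurable hci fun ω => by
      rw [hc]; linarith [hXQ ω]⟩

theorem integral_add_trace_le_of_riccati [DecidableEq m]
    {Q K A C : Matrix n n ℝ} {R : Matrix m m ℝ} {B : Matrix n m ℝ} (hR : R.PosDef)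
    (hK : K.PosSemidef)
    (hric : K = Q + Aᵀ * K * A - Aᵀ * K * B * (Bᵀ * K * B + R)⁻¹ * (Bᵀ * K * A))
    {X W Y : Ω → n → ℝ} {U : Ω → m → ℝ} {c : Ω → ℝ} (hX : MemLp X 2 μ) (hU : MemLp U 2 μ)
    (hW : MemLp W 2 μ) (hind : IndepFun (fun ω => A *ᵥ X ω + B *ᵥ U ω) W μ)
    (hW0 : ∀ i, ∫ ω, W ω i ∂μ = 0) (hWC : ∀ i j, ∫ ω, W ω i * W ω j ∂μ = C i j)
    (hY : Y = fun ω => A *ᵥ X ω + B *ᵥ U ω + W ω)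
    (hc : ∀ ω, c ω = X ω ⬝ᵥ Q *ᵥ X ω + U ω ⬝ᵥ R *ᵥ U ω) :
    ∫ ω, X ω ⬝ᵥ K *ᵥ X ω ∂μ + (K * C).trace ≤ ∫ ω, c ω ∂μ + ∫ ω, Y ω ⬝ᵥ K *ᵥ Y ω ∂μ := by
  have hZ : MemLp (fun ω => A *ᵥ X ω + B *ᵥ U ω) 2 μ := (hX.mulVec A).add (hU.mulVec B)
  have hci : Integrable c μ := by
    rw [funext hc]
    exact (integrable_dotProduct hX (hX.mulVec Q)).add (integrable_dotProduct hU (hU.mulVec R))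
  have hZK := integrable_dotProduct hZ (hZ.mulVec K)
  have hle := integral_mono (integrable_dotProduct hX (hX.mulVec K)) (hci.add hZK) fun ω => by
    simpa [hc] using dotProduct_mulVec_le_of_riccati hR hK hric (X ω) (U ω)
  rw [integral_add' hci hZK] at hle
  rw [hY, integral_add_dotProduct_mulVec_add_of_indepFun hZ hW hind hW0,
    integral_dotProduct_mulVec_self_eq_trace hW hWC]
  linarith

lemma mul_integral_dotProduct_mulVec_le_integral {Q K : Matrix n n ℝ} {R : Matrix m m ℝ} {α : ℝ}
    (hdom : ∀ v, α * (v ⬝ᵥ K *ᵥ v) ≤ v ⬝ᵥ Q *ᵥ v) (hR : R.PosSemidef) {X : Ω → n → ℝ}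
    {U : Ω → m → ℝ} {c : Ω → ℝ} (hX : MemLp X 2 μ) (hc : Integrable c μ)
    (hXU : ∀ ω, c ω = X ω ⬝ᵥ Q *ᵥ X ω + U ω ⬝ᵥ R *ᵥ U ω) :
    α * ∫ ω, X ω ⬝ᵥ K *ᵥ X ω ∂μ ≤ ∫ ω, c ω ∂μ := by
  rw [← integral_const_mul]
  refine integral_mono ((integrable_dotProduct hX (hX.mulVec K)).const_mul α) hc fun ω => ?_
  rw [hXU]
  linarith [hdom (X ω), hR.dotProduct_mulVec_self_nonneg (U ω)]

end SquareIntegrable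

section StrictPast

variable {Ω β : Type*} [mβ : MeasurableSpace β] {ξ : ℕ → Ω → β}

@[reducible] def strictPast (ξ : ℕ → Ω → β) (t : ℕ) : MeasurableSpace Ω :=
  ⨆ s ∈ Set.Iio t, mβ.comap (ξ s)

lemma strictPast_mono : Monotone (strictPast ξ) := fun _ _ hst =>
  biSup_mono fun _ hs => lt_of_lt_of_le hs hst

lemma measurable_strictPast_succ (t : ℕ) : Measurable[strictPast ξ (t + 1)] (ξ t) :=
  Measurable.of_comap_le <|
    le_iSup₂ (f := fun s (_ : s ∈ Set.Iio (t + 1)) => mβ.comap (ξ s)) t (Nat.lt_succ_self t)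

lemma strictPast_le {mΩ : MeasurableSpace Ω} (hξ : ∀ s, Measurable (ξ s)) (t : ℕ) :
    strictPast ξ t ≤ mΩ :=
  iSup₂_le fun s _ => (hξ s).comap_le

lemma indepFun_of_measurable_strictPast {mΩ : MeasurableSpace Ω} {μ : Measure Ω} {γ : Type*}
    [MeasurableSpace γ] (hξ : ∀ s, Measurable (ξ s)) (hind : iIndepFun ξ μ) {t : ℕ}
    {Z : Ω → γ} (hZ : Measurable[strictPast ξ t] Z) : IndepFun Z (ξ t) μ := by
  have h := indep_iSup_of_disjoint (fun s => (hξ s).comap_le)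
    ((iIndepFun_iff_iIndep _ _ _).1 hind) (S := Set.Iio t) (T := {t}) (by simp)
  rw [iSup_singleton] at h
  rw [IndepFun_iff_Indep]
  exact indep_of_indep_of_le_left h hZ.comap_le

end StrictPast

lemma Measurable.of_comap_history {Ω β γ : Type*} [MeasurableSpace β] [MeasurableSpace γ]
    {m : MeasurableSpace Ω} {x : ℕ → Ω → β} {v : Ω → γ} {t : ℕ}
    (hv : Measurable[MeasurableSpace.comap (fun ω => fun i : Fin (t + 1) => x (i : ℕ) ω)
      MeasurableSpace.pi] v)
    (hx : ∀ s ≤ t, Measurable[m] (x s)) : Measurable[m] v :=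
  hv.mono (measurable_pi_lambda _ fun i : Fin (t + 1) => hx i (Nat.lt_succ_iff.1 i.2)).comap_le
    le_rfl

lemma measurable_and_indepFun_of_feedback {Ω n m : Type*} [MeasurableSpace Ω] {μ : Measure Ω}
    [Fintype n] [Fintype m] {A : Matrix n n ℝ} {B : Matrix n m ℝ} {x0 : n → ℝ}
    {x w : ℕ → Ω → n → ℝ} {u : ℕ → Ω → m → ℝ} (hwmeas : ∀ t, Measurable (w (t + 1)))
    (hindep : iIndepFun (fun t => w (t + 1)) μ) (hx0 : x 0 = fun _ => x0)
    (hadapted : ∀ t : ℕ, Measurable[MeasurableSpace.comap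
      (fun ω => fun i : Fin (t + 1) => x (i : ℕ) ω) MeasurableSpace.pi] (u t))
    (hx : ∀ t, x (t + 1) = fun ω => A *ᵥ x t ω + B *ᵥ u t ω + w (t + 1) ω) (t : ℕ) :
    Measurable (x t) ∧ Measurable (u t) ∧
      IndepFun (fun ω => A *ᵥ x t ω + B *ᵥ u t ω) (w (t + 1)) μ := by
  have hpast : ∀ t, ∀ s ≤ t, Measurable[strictPast (fun s => w (s + 1)) t] (x s) := by
    intro t
    induction t with
    | zero =>
      intro s hs
      rw [Nat.le_zero.1 hs, hx0]
      exact measurable_const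
    | succ t ih =>
      have ih' : ∀ s ≤ t, Measurable[strictPast (fun s => w (s + 1)) (t + 1)] (x s) :=
        fun s hs => (ih s hs).mono (strictPast_mono t.le_succ) le_rfl
      intro s hs
      rcases hs.lt_or_eq with hs | rfl
      · exact ih' s (Nat.lt_succ_iff.1 hs)
      · have hxt := ih' t le_rfl
        have hut := (hadapted t).of_comap_history ih'
        have hwt := measurable_strictPast_succ (ξ := fun s => w (s + 1)) t
        rw [hx t]
        fun_prop
  have hxt := hpast t t le_rfl
  have hut := (hadapted t).of_comap_history (hpast t)
  exact ⟨hxt.mono (strictPast_le hwmeas t) le_rfl, hut.mono (strictPast_le hwmeas t) le_rfl,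
    indepFun_of_measurable_strictPast (ξ := fun s => w (s + 1)) hwmeas hindep (by fun_prop)⟩

section Averages

open Filter Finset ENNReal

variable {a V : ℕ → ℝ} {τ : ℝ}

lemma mul_add_le_sum_Icc_add_of_step (hstep : ∀ t, 1 ≤ t → V t + τ ≤ a t + V (t + 1))
    (T : ℕ) : T * τ + V 1 ≤ ∑ t ∈ Icc 1 T, a t + V (T + 1) := by
  induction T with
  | zero => simp
  | succ T ih =>
    rw [sum_Icc_succ_top (by omega), Nat.cast_succ]
    linarith [hstep (T + 1) (by omega)]

lemma frequently_mul_lt_sum_Icc_of_step {α β : ℝ} (ha : ∀ t, 0 ≤ a t) (hV : ∀ t, 0 ≤ V t)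
    (hα : 0 < α) (hstep : ∀ t, 1 ≤ t → V t + τ ≤ a t + V (t + 1))
    (hdom : ∀ t, 1 ≤ t → α * V t ≤ a t) (hβ : β < τ) :
    ∃ᶠ T : ℕ in atTop, T * β < ∑ t ∈ Icc 1 T, a t := by
  rw [frequently_atTop]
  intro T₀
  by_contra! hle
  have hε : 0 < τ - β := sub_pos.2 hβ
  have hgrow : ∀ T ≥ T₀, α * (T * (τ - β)) ≤ a (T + 1) := fun T hT => by
    have := mul_add_le_sum_Icc_add_of_step hstep T
    calc α * (T * (τ - β)) ≤ α * V (T + 1) := by gcongr; linarith [hle T hT, hV 1]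
      _ ≤ a (T + 1) := hdom _ (by omega)
  obtain ⟨N, hN⟩ := exists_nat_gt (max (2 * β / (α * (τ - β))) (T₀ + 1))
  have hNT₀ : T₀ + 1 ≤ N := by exact_mod_cast (le_max_right _ _).trans hN.le
  have hquad : N * (α * (N * (τ - β))) ≤ ∑ t ∈ Icc 1 (2 * N), a t := by
    calc N * (α * (N * (τ - β))) = ∑ t ∈ Icc (N + 1) (2 * N), α * (N * (τ - β)) := by
          rw [sum_const, Nat.card_Icc, show 2 * N + 1 - (N + 1) = N by omega, nsmul_eq_mul]
      _ ≤ ∑ t ∈ Icc (N + 1) (2 * N), a t := sum_le_sum fun t ht => by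
          obtain ⟨ht₁, ht₂⟩ := mem_Icc.1 ht
          obtain ⟨T, rfl⟩ : ∃ T, t = T + 1 := ⟨t - 1, by omega⟩
          calc α * (N * (τ - β)) ≤ α * (T * (τ - β)) := by
                gcongr; exact_mod_cast (by omega : N ≤ T)
            _ ≤ a (T + 1) := hgrow T (by omega)
      _ ≤ ∑ t ∈ Icc 1 (2 * N), a t :=
          sum_le_sum_of_subset_of_nonneg (Icc_subset_Icc_left (by omega)) fun t _ _ => ha t
  have hlin := hle (2 * N) (by omega)
  have hNpos : (0 : ℝ) < N := by exact_mod_cast (by omega : 0 < N)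
  have hN' : 2 * β < α * (τ - β) * N := by
    have := (le_max_left _ _).trans_lt hN
    rw [div_lt_iff₀ (by positivity)] at this
    linarith
  push_cast at hlin
  nlinarith

theorem ofReal_le_limsup_avg_of_step {α : ℝ} (ha : ∀ t, 0 ≤ a t) (hV : ∀ t, 0 ≤ V t)
    (hα : 0 < α) (hstep : ∀ t, 1 ≤ t → V t + τ ≤ a t + V (t + 1))
    (hdom : ∀ t, 1 ≤ t → α * V t ≤ a t) :
    ENNReal.ofReal τ ≤
      atTop.limsup (fun T : ℕ => (T : ℝ≥0∞)⁻¹ * ∑ t ∈ Icc 1 T, ENNReal.ofReal (a t)) := by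
  refine le_of_forall_lt_imp_le_of_dense fun b hb => ?_
  refine le_limsup_of_frequently_le ((frequently_mul_lt_sum_Icc_of_step ha hV hα hstep hdom
    (toReal_lt_of_lt_ofReal hb)).mono fun T hT => ?_)
  have hT0 : (0 : ℝ) < T := by
    rcases T.eq_zero_or_pos with rfl | hT0
    · simp at hT
    · exact_mod_cast hT0
  calc b = ENNReal.ofReal b.toReal := (ofReal_toReal hb.ne_top).symm
    _ ≤ ENNReal.ofReal ((T : ℝ)⁻¹ * ∑ t ∈ Icc 1 T, a t) :=
        ofReal_le_ofReal (by rw [le_inv_mul_iff₀ hT0]; exact hT.le)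
    _ = _ := by
        rw [ofReal_mul (by positivity), ofReal_inv_of_pos hT0, ofReal_natCast,
          ofReal_sum_of_nonneg fun t _ => ha t]

lemma limsup_avg_eq_top {f : ℕ → ℝ≥0∞} {t : ℕ} (ht : 1 ≤ t) (hf : f t = ⊤) :
    atTop.limsup (fun T : ℕ => (T : ℝ≥0∞)⁻¹ * ∑ s ∈ Icc 1 T, f s) = ⊤ := by
  refine (limsup_congr (eventually_atTop.2 ⟨t, fun T hT => ?_⟩)).trans (limsup_const ⊤)
  rw [ENNReal.sum_eq_top.2 ⟨t, mem_Icc.2 ⟨ht, hT⟩, hf⟩, ENNReal.mul_top (by simp)]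

end Averages

theorem average_cost_lower_bound_general {p r : ℕ}
    (Q : Matrix (Fin p) (Fin p) ℝ) (R : Matrix (Fin r) (Fin r) ℝ)
    (hQ : Q.PosDef) (hR : R.PosDef)
    (A₀ : Matrix (Fin p) (Fin p) ℝ) (B₀ : Matrix (Fin p) (Fin r) ℝ)
    (K₀ : Matrix (Fin p) (Fin p) ℝ) (hK₀ : K₀.PosSemidef)
    (hric : K₀ = Q + A₀ᵀ * K₀ * A₀
      - A₀ᵀ * K₀ * B₀ * (B₀ᵀ * K₀ * B₀ + R)⁻¹ * (B₀ᵀ * K₀ * A₀))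
    {Ω : Type*} [MeasurableSpace Ω] (μ : Measure Ω)
    (w : ℕ → Ω → (Fin p → ℝ)) (C : Matrix (Fin p) (Fin p) ℝ)
    (hwmeas : ∀ t : ℕ, Measurable (w (t + 1)))
    (hindep : iIndepFun (fun t : ℕ => w (t + 1)) μ)
    (hmean : ∀ (t : ℕ) (i : Fin p), ∫ ω, w (t + 1) ω i ∂μ = 0)
    (hcovint : ∀ (t : ℕ) (i j : Fin p),
      Integrable (fun ω => w (t + 1) ω i * w (t + 1) ω j) μ)
    (hcov : ∀ (t : ℕ) (i j : Fin p), ∫ ω, w (t + 1) ω i * w (t + 1) ω j ∂μ = C i j)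
    (x0 : Fin p → ℝ)
    (x : ℕ → Ω → (Fin p → ℝ)) (u : ℕ → Ω → (Fin r → ℝ))
    (hx0 : x 0 = fun _ => x0)
    (hadapted : ∀ t : ℕ,
      Measurable[MeasurableSpace.comap
          (fun ω => fun i : Fin (t + 1) => x (i : ℕ) ω) MeasurableSpace.pi]
        (u t))
    (hx : ∀ t : ℕ, x (t + 1) = fun ω => A₀.mulVec (x t ω) + B₀.mulVec (u t ω) + w (t + 1) ω)
    (c : ℕ → Ω → ℝ)
    (hc : ∀ (t : ℕ) (ω : Ω), c t ω = x t ω ⬝ᵥ Q.mulVec (x t ω) + u t ω ⬝ᵥ R.mulVec (u t ω)) :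
    ENNReal.ofReal ((K₀ * C).trace) ≤
      Filter.atTop.limsup (fun T : ℕ =>
        (T : ENNReal)⁻¹ * ∑ t ∈ Finset.Icc 1 T, ∫⁻ ω, ENNReal.ofReal (c t ω) ∂μ) := by
  choose hxm hum hind using measurable_and_indepFun_of_feedback hwmeas hindep hx0 hadapted hx
  have hc0 : ∀ t ω, 0 ≤ c t ω := fun t ω => by
    rw [hc]
    exact add_nonneg (hQ.posSemidef.dotProduct_mulVec_self_nonneg _)
      (hR.posSemidef.dotProduct_mulVec_self_nonneg _)
  by_cases hfin : ∀ t, 1 ≤ t → ∫⁻ ω, ENNReal.ofReal (c t ω) ∂μ ≠ ⊤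
  swap
  · push Not at hfin
    obtain ⟨t, ht, htop⟩ := hfin
    rw [limsup_avg_eq_top ht htop]
    exact le_top
  choose hci hX hU using fun t (ht : 1 ≤ t) =>
    integrable_and_memLp_two_of_lintegral_ne_top hQ hR (hxm t) (hum t) (hc t) (hfin t ht)
  have hW : ∀ t, MemLp (w (t + 1)) 2 μ := fun t =>
    memLp_two_of_integrable_mul_self (hwmeas t) (fun i => hcovint t i i)
  obtain ⟨α, hα, hdom⟩ := hQ.exists_pos_mul_dotProduct_mulVec_le K₀
  calc ENNReal.ofReal (K₀ * C).trace
      ≤ Filter.atTop.limsup (fun T : ℕ =>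
          (T : ENNReal)⁻¹ * ∑ t ∈ Finset.Icc 1 T, ENNReal.ofReal (∫ ω, c t ω ∂μ)) :=
        ofReal_le_limsup_avg_of_step (fun t => integral_nonneg (hc0 t))
          (fun t => integral_nonneg fun ω => hK₀.dotProduct_mulVec_self_nonneg _) hα
          (fun t ht => integral_add_trace_le_of_riccati hR hK₀ hric (hX t ht) (hU t ht) (hW t)
            (hind t) (hmean t) (hcov t) (hx t) (hc t))
          fun t ht => mul_integral_dotProduct_mulVec_le_integral hdom hR.posSemidef (hX t ht)
            (hci t ht) (hc t)
    _ = _ := Filter.limsup_congr <| .of_forall fun T => congrArg _ <|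
        Finset.sum_congr rfl fun t ht => ofReal_integral_eq_lintegral_ofReal
          (hci t (Finset.mem_Icc.1 ht).1) (ae_of_all _ (hc0 t))

/-- for any adapted control sequence, the limsup average expected cost is at
least `tr(K₀ C)`.  (Expected costs are taken in `ℝ≥0∞`, the costs being nonnegative.) -/
theorem average_cost_lower_bound {p r : ℕ}
    (Q : Matrix (Fin p) (Fin p) ℝ) (R : Matrix (Fin r) (Fin r) ℝ)
    (hQ : Q.PosDef) (hR : R.PosDef)
    (A₀ : Matrix (Fin p) (Fin p) ℝ) (B₀ : Matrix (Fin p) (Fin r) ℝ)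
    (hstab : Stabilizable A₀ B₀)
    (K₀ : Matrix (Fin p) (Fin p) ℝ) (hK₀ : K₀.PosSemidef)
    (hric : K₀ = Q + A₀ᵀ * K₀ * A₀
      - A₀ᵀ * K₀ * B₀ * (B₀ᵀ * K₀ * B₀ + R)⁻¹ * (B₀ᵀ * K₀ * A₀))
    {Ω : Type*} [MeasurableSpace Ω] (μ : Measure Ω) [IsProbabilityMeasure μ]
    (w : ℕ → Ω → (Fin p → ℝ)) (C : Matrix (Fin p) (Fin p) ℝ) (hC : C.PosDef)
    (hwmeas : ∀ t : ℕ, Measurable (w (t + 1)))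
    (hindep : iIndepFun (fun t : ℕ => w (t + 1)) μ)
    (hint : ∀ (t : ℕ) (i : Fin p), Integrable (fun ω => w (t + 1) ω i) μ)
    (hmean : ∀ (t : ℕ) (i : Fin p), ∫ ω, w (t + 1) ω i ∂μ = 0)
    (hcovint : ∀ (t : ℕ) (i j : Fin p),
      Integrable (fun ω => w (t + 1) ω i * w (t + 1) ω j) μ)
    (hcov : ∀ (t : ℕ) (i j : Fin p), ∫ ω, w (t + 1) ω i * w (t + 1) ω j ∂μ = C i j)
    (x0 : Fin p → ℝ)
    (x : ℕ → Ω → (Fin p → ℝ)) (u : ℕ → Ω → (Fin r → ℝ))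
    (hx0 : x 0 = fun _ => x0)
    (hadapted : ∀ t : ℕ,
      Measurable[MeasurableSpace.comap
          (fun ω => fun i : Fin (t + 1) => x (i : ℕ) ω) MeasurableSpace.pi]
        (u t))
    (hx : ∀ t : ℕ, x (t + 1) = fun ω => A₀.mulVec (x t ω) + B₀.mulVec (u t ω) + w (t + 1) ω)
    (c : ℕ → Ω → ℝ)
    (hc : ∀ (t : ℕ) (ω : Ω), c t ω = x t ω ⬝ᵥ Q.mulVec (x t ω) + u t ω ⬝ᵥ R.mulVec (u t ω)) :
    ENNReal.ofReal ((K₀ * C).trace) ≤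
      Filter.atTop.limsup (fun T : ℕ =>
        (T : ENNReal)⁻¹ * ∑ t ∈ Finset.Icc 1 T, ∫⁻ ω, ENNReal.ofReal (c t ω) ∂μ) :=
  average_cost_lower_bound_general Q R hQ hR A₀ B₀ K₀ hK₀ hric μ w C hwmeas hindep hmean hcovint
    hcov x0 x u hx0 hadapted hx c hc
end

section
/- Assume [A₀,B₀] is stabilizable, A₀ ∈ ℝ^{p×p}, B₀ ∈ ℝ^{p×r}. Let L ∈ ℝ^{r×p} be a random matrix whose p columns are mutually independent random vectors in ℝ^r, each having a linearly full rank distribution. Then, with probability one, the matrix A₀ + B₀L is regular: every complex eigenvalue λ of A₀+B₀L with |λ| > 1 satisfies rank_ℂ((A₀+B₀L) − λ I_p) ≥ p − 1. -/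
open Matrix MeasureTheory ProbabilityTheory


/-- A random vector in `ℝ^m` has a linearly full rank distribution: it lies in any fixed
affine hyperplane with probability zero. -/
def LinFullRankDistribution {m : ℕ} {Ω : Type*} [MeasurableSpace Ω] (μ : Measure Ω)
    (X : Ω → (Fin m → ℝ)) : Prop :=
  ∀ (a : Fin m → ℝ) (c : ℝ), a ≠ 0 → μ {ω | a ⬝ᵥ X ω = c} = 0

/-- A real square matrix is regular: for every complex eigenvalue `λ` with `|λ| > 1`
(i.e. geometric multiplicity considerations), `rank_ℂ(D - λI) ≥ p - 1`. -/
def RegularMatrix {p : ℕ} (D : Matrix (Fin p) (Fin p) ℝ) : Prop :=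
  ∀ lam : ℂ, ((D.map (algebraMap ℝ ℂ)).charpoly).IsRoot lam → 1 < ‖lam‖ →
    p - 1 ≤ (D.map (algebraMap ℝ ℂ) - lam • (1 : Matrix (Fin p) (Fin p) ℂ)).rank

namespace CLR

variable {p r : ℕ}

/-- column-configuration space -/
abbrev EE (p r : ℕ) := Fin p → Fin r → ℝ

noncomputable def Ac (A : Matrix (Fin p) (Fin p) ℝ) : Matrix (Fin p) (Fin p) ℂ :=
  A.map (algebraMap ℝ ℂ)

noncomputable def Bc (B : Matrix (Fin p) (Fin r) ℝ) : Matrix (Fin p) (Fin r) ℂ :=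
  B.map (algebraMap ℝ ℂ)

/-- complexified closed-loop matrix, built columnwise from `y` -/
noncomputable def DC (A : Matrix (Fin p) (Fin p) ℝ) (B : Matrix (Fin p) (Fin r) ℝ)
    (y : EE p r) : Matrix (Fin p) (Fin p) ℂ :=
  Matrix.of fun i k => ((A i k + ∑ s, B i s * y k s : ℝ) : ℂ)

lemma DC_eq (A : Matrix (Fin p) (Fin p) ℝ) (B : Matrix (Fin p) (Fin r) ℝ) (y : EE p r) :
    DC A B y = (A + B * Matrix.of fun s k => y k s).map (algebraMap ℝ ℂ) := by
  ext i k
  simp [DC, Matrix.mul_apply, Matrix.map_apply, Complex.coe_algebraMap]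

lemma DC_col_local (A : Matrix (Fin p) (Fin p) ℝ) (B : Matrix (Fin p) (Fin r) ℝ)
    {y y' : EE p r} {k : Fin p} (h : y k = y' k) (v : Fin p → ℂ) :
    (v ᵥ* DC A B y) k = (v ᵥ* DC A B y') k := by
  simp only [Matrix.vecMul, dotProduct, DC, Matrix.of_apply, h]

/-- membership in the left "almost-kernel" supported on `T` -/
def Wv (A : Matrix (Fin p) (Fin p) ℝ) (B : Matrix (Fin p) (Fin r) ℝ) (T : Finset (Fin p))
    (lam : ℂ) (y : EE p r) (v : Fin p → ℂ) : Prop :=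
  (∀ i, i ∉ T → v i = 0) ∧ ∀ k ∈ T, (v ᵥ* DC A B y) k = lam * v k

/-- two vectors in `ℂ^r` are linearly dependent -/
def Dep (a b : Fin r → ℂ) : Prop :=
  ∃ c d : ℂ, (c ≠ 0 ∨ d ≠ 0) ∧ c • a + d • b = 0

lemma dep_zero_left (b : Fin r → ℂ) : Dep (0 : Fin r → ℂ) b :=
  ⟨1, 0, Or.inl one_ne_zero, by simp⟩

lemma dep_zero_right (a : Fin r → ℂ) : Dep a (0 : Fin r → ℂ) :=
  ⟨0, 1, Or.inr one_ne_zero, by simp⟩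

/-- the bad event: some unstable `lam` whose left almost-kernel has a `2`-dimensional
image under `ᵥ* Bc` -/
def Bad (A : Matrix (Fin p) (Fin p) ℝ) (B : Matrix (Fin p) (Fin r) ℝ) (T : Finset (Fin p)) :
    Set (EE p r) :=
  {y | ∃ lam : ℂ, 1 < ‖lam‖ ∧ ∃ v w : Fin p → ℂ,
    Wv A B T lam y v ∧ Wv A B T lam y w ∧ ¬ Dep (v ᵥ* Bc B) (w ᵥ* Bc B)}

/-- the deterministic degeneracy condition ("case (b)") for column `j` -/
def Nb (A : Matrix (Fin p) (Fin p) ℝ) (B : Matrix (Fin p) (Fin r) ℝ) (T : Finset (Fin p))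
    (j : Fin p) (lam : ℂ) : Prop :=
  ∃ u : Fin p → ℂ, (∀ i, i ∉ T.erase j → u i = 0) ∧
    (∀ k ∈ T.erase j, (u ᵥ* Ac A) k = lam * u k) ∧
    u ᵥ* Bc B = 0 ∧ (u ᵥ* Ac A) j ≠ 0

/-- the auxiliary event whose probability is killed by the fresh randomness of column `j` -/
def FF (A : Matrix (Fin p) (Fin p) ℝ) (B : Matrix (Fin p) (Fin r) ℝ) (T : Finset (Fin p))
    (j : Fin p) : Set (EE p r) :=
  {y | ∃ lam : ℂ, 1 < ‖lam‖ ∧ ¬ Nb A B T j lam ∧ ∃ v : Fin p → ℂ,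
    (∀ i, i ∉ T.erase j → v i = 0) ∧
    (∀ k ∈ T.erase j, (v ᵥ* DC A B y) k = lam * v k) ∧
    v ᵥ* Bc B ≠ 0 ∧ (v ᵥ* DC A B y) j = 0}

/-! ### charpoly root machinery -/

lemma charpoly_eval {n : ℕ} (M : Matrix (Fin n) (Fin n) ℂ) (t : ℂ) :
    M.charpoly.eval t = (Matrix.scalar (Fin n) t - M).det := by
  rw [Matrix.charpoly, eval_det, matPolyEquiv_charmatrix]
  simp

lemma root_of_left_eig {n : ℕ} {M : Matrix (Fin n) (Fin n) ℂ} {lam : ℂ} {v : Fin n → ℂ}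
    (hv : v ≠ 0) (h : v ᵥ* M = lam • v) : M.charpoly.IsRoot lam := by
  have hdet : (M - lam • (1 : Matrix (Fin n) (Fin n) ℂ)).det = 0 := by
    rw [← Matrix.exists_vecMul_eq_zero_iff]
    refine ⟨v, hv, ?_⟩
    have h1 : v ᵥ* (lam • (1 : Matrix (Fin n) (Fin n) ℂ)) = lam • v := by
      funext k
      simp [Matrix.vecMul, dotProduct, Matrix.smul_apply, Matrix.one_apply, mul_ite,
        Finset.sum_ite_eq', mul_comm]
    rw [Matrix.vecMul_sub, h, h1, sub_self]
  have hsc : Matrix.scalar (Fin n) lam - M = -(M - lam • 1) := by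
    ext i k
    by_cases hik : i = k <;>
      simp [Matrix.scalar_apply, Matrix.diagonal_apply, Matrix.one_apply, hik]
  rw [Polynomial.IsRoot, charpoly_eval, hsc, Matrix.det_neg, hdet, mul_zero]

/-- the padded matrix used to confine constrained left eigenvalues -/
noncomputable def Pad (T' : Finset (Fin p)) (M : Matrix (Fin p) (Fin p) ℂ) :
    Matrix (Fin p) (Fin p) ℂ :=
  Matrix.of fun i k => if i ∈ T' ∧ k ∈ T' then M i k else if i = k then 1 else 0

lemma vecMul_pad {T' : Finset (Fin p)} {M : Matrix (Fin p) (Fin p) ℂ} {lam : ℂ}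
    {v : Fin p → ℂ} (hsupp : ∀ i, i ∉ T' → v i = 0)
    (heq : ∀ k ∈ T', (v ᵥ* M) k = lam * v k) :
    v ᵥ* Pad T' M = lam • v := by
  funext k
  by_cases hk : k ∈ T'
  · have : (v ᵥ* Pad T' M) k = (v ᵥ* M) k := by
      simp only [Matrix.vecMul, dotProduct, Pad, Matrix.of_apply]
      refine Finset.sum_congr rfl fun i _ => ?_
      by_cases hi : i ∈ T'
      · simp [hi, hk]
      · simp [hsupp i hi]
    rw [this, heq k hk]; rfl
  · have : (v ᵥ* Pad T' M) k = v k := by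
      simp only [Matrix.vecMul, dotProduct, Pad, Matrix.of_apply]
      rw [Finset.sum_eq_single k]
      · simp [hk]
      · intro i _ hik; simp [hk, hik]
      · intro h; exact absurd (Finset.mem_univ k) h
    rw [this]; simp [Pi.smul_apply, hsupp k hk]

lemma finite_spec (T' : Finset (Fin p)) (M : Matrix (Fin p) (Fin p) ℂ) :
    {lam : ℂ | ∃ v : Fin p → ℂ, v ≠ 0 ∧ (∀ i, i ∉ T' → v i = 0) ∧
      ∀ k ∈ T', (v ᵥ* M) k = lam * v k}.Finite := by
  refine Set.Finite.subset
    (Polynomial.finite_setOf_isRoot (Matrix.charpoly_monic (Pad T' M)).ne_zero) ?_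
  rintro lam ⟨v, hv, hsupp, heq⟩
  exact root_of_left_eig hv (vecMul_pad hsupp heq)


/-! ### part 2 : linear algebra -/

lemma vecMul_DC {A : Matrix (Fin p) (Fin p) ℝ} {B : Matrix (Fin p) (Fin r) ℝ} (y : EE p r)
    {u : Fin p → ℂ} (hB : u ᵥ* Bc B = 0) : u ᵥ* DC A B y = u ᵥ* Ac A := by
  rw [DC_eq, Matrix.map_add _ (map_add (algebraMap ℝ ℂ)), Matrix.map_mul,
    Matrix.vecMul_add, ← Matrix.vecMul_vecMul]
  rw [show (B.map (algebraMap ℝ ℂ)) = Bc B from rfl, hB, Matrix.zero_vecMul, add_zero]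
  rfl

lemma Wv.lin {A : Matrix (Fin p) (Fin p) ℝ} {B : Matrix (Fin p) (Fin r) ℝ}
    {T : Finset (Fin p)} {lam : ℂ} {y : EE p r} {v w : Fin p → ℂ}
    (hv : Wv A B T lam y v) (hw : Wv A B T lam y w) (c d : ℂ) :
    Wv A B T lam y (c • v + d • w) := by
  constructor
  · intro i hi
    simp [Pi.add_apply, Pi.smul_apply, hv.1 i hi, hw.1 i hi]
  · intro k hk
    rw [Matrix.add_vecMul, Matrix.smul_vecMul, Matrix.smul_vecMul]
    simp only [Pi.add_apply, Pi.smul_apply, smul_eq_mul, hv.2 k hk, hw.2 k hk]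
    ring

lemma vecMul_lin (M : Matrix (Fin p) (Fin r) ℂ) (v w : Fin p → ℂ) (c d : ℂ) :
    (c • v + d • w) ᵥ* M = c • (v ᵥ* M) + d • (w ᵥ* M) := by
  rw [Matrix.add_vecMul, Matrix.smul_vecMul, Matrix.smul_vecMul]

lemma vecMul_sub_smul_one (M : Matrix (Fin p) (Fin p) ℂ) (lam : ℂ) (v : Fin p → ℂ) (k : Fin p) :
    (v ᵥ* (M - lam • 1)) k = (v ᵥ* M) k - lam * v k := by
  have h1 : v ᵥ* (lam • (1 : Matrix (Fin p) (Fin p) ℂ)) = lam • v := by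
    funext k'
    simp [Matrix.vecMul, dotProduct, Matrix.smul_apply, Matrix.one_apply, mul_ite,
      Finset.sum_ite_eq', mul_comm]
  rw [Matrix.vecMul_sub, h1]
  simp

/-- If the degeneracy condition holds at every column of `T`, the constrained left kernel
is trivial. -/
lemma wv_eq_zero_of_allNb {A : Matrix (Fin p) (Fin p) ℝ} {B : Matrix (Fin p) (Fin r) ℝ}
    {T : Finset (Fin p)} {lam : ℂ} {y : EE p r}
    (hall : ∀ j ∈ T, Nb A B T j lam) {v : Fin p → ℂ} (hv : Wv A B T lam y v) : v = 0 := by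
  classical
  -- choose the witnesses
  have hu : ∀ j : Fin p, j ∈ T → ∃ u : Fin p → ℂ, (∀ i, i ∉ T.erase j → u i = 0) ∧
      (∀ k ∈ T.erase j, (u ᵥ* Ac A) k = lam * u k) ∧ u ᵥ* Bc B = 0 ∧ (u ᵥ* Ac A) j ≠ 0 :=
    hall
  set u : Fin p → Fin p → ℂ := fun j => if hj : j ∈ T then (hu j hj).choose else 0 with hu_def
  have husupp : ∀ j ∈ T, ∀ i, i ∉ T.erase j → u j i = 0 := by
    intro j hj; simp only [hu_def, dif_pos hj]; exact (hu j hj).choose_spec.1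
  have hueq : ∀ j ∈ T, ∀ k ∈ T.erase j, (u j ᵥ* Ac A) k = lam * u j k := by
    intro j hj; simp only [hu_def, dif_pos hj]; exact (hu j hj).choose_spec.2.1
  have huB : ∀ j ∈ T, u j ᵥ* Bc B = 0 := by
    intro j hj; simp only [hu_def, dif_pos hj]; exact (hu j hj).choose_spec.2.2.1
  have hune : ∀ j ∈ T, (u j ᵥ* Ac A) j ≠ 0 := by
    intro j hj; simp only [hu_def, dif_pos hj]; exact (hu j hj).choose_spec.2.2.2
  set al : Fin p → ℂ := fun j => (u j ᵥ* Ac A) j with hal_def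
  -- the submatrix of `DC - lam•1` and its explicit left inverse
  set S : Matrix T T ℂ :=
    Matrix.of fun i k : T => (DC A B y - lam • 1) (i : Fin p) (k : Fin p) with hS_def
  set Y : Matrix T T ℂ := Matrix.of fun j i : T => (al j)⁻¹ * u j i with hY_def
  -- key computation : row j of `u j ᵥ* (DC - lam•1)` restricted to T
  have hrow : ∀ j ∈ T, ∀ k ∈ T, (u j ᵥ* (DC A B y - lam • 1)) k = if k = j then al j else 0 := by
    intro j hj k hk
    have hDA : u j ᵥ* DC A B y = u j ᵥ* Ac A := vecMul_DC y (huB j hj)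
    rw [vecMul_sub_smul_one, hDA]
    by_cases hkj : k = j
    · have h0 : u j j = 0 := husupp j hj j (Finset.notMem_erase j T)
      rw [hkj]
      simp [h0, hal_def]
    · have hk' : k ∈ T.erase j := Finset.mem_erase.mpr ⟨hkj, hk⟩
      rw [hueq j hj k hk']
      simp [hkj]
  -- sums over the subtype compute vecMul against supported vectors
  have hsum : ∀ (z : Fin p → ℂ), (∀ i, i ∉ T → z i = 0) →
      ∀ k : Fin p, (∑ i : T, z i * (DC A B y - lam • 1) (i : Fin p) k)
        = (z ᵥ* (DC A B y - lam • 1)) k := by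
    intro z hz k
    rw [Finset.sum_coe_sort T (fun i => z i * (DC A B y - lam • 1) i k)]
    symm
    simp only [Matrix.vecMul, dotProduct]
    refine (Finset.sum_subset (Finset.subset_univ T) ?_).symm
    intro i _ hi
    simp [hz i hi]
  have hYS : Y * S = 1 := by
    ext j k
    rw [Matrix.mul_apply]
    have hstep1 : ∑ i : {x // x ∈ T}, Y j i * S i k
        = (al ↑j)⁻¹ * ∑ i : {x // x ∈ T}, u ↑j ↑i * (DC A B y - lam • (1 : Matrix (Fin p) (Fin p) ℂ)) ↑i ↑k := by
      rw [Finset.mul_sum]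
      refine Finset.sum_congr rfl fun i _ => ?_
      simp only [hY_def, hS_def, Matrix.of_apply]
      ring
    have hsupp' : ∀ i, i ∉ T → u (↑j : Fin p) i = 0 := fun i hi =>
      husupp ↑j j.2 i (fun hmem => hi (Finset.mem_of_mem_erase hmem))
    rw [hstep1, hsum (u ↑j) hsupp' ↑k, hrow ↑j j.2 ↑k k.2]
    by_cases hkj : k = j
    · rw [hkj]
      simp [inv_mul_cancel₀ (hune ↑j j.2), Matrix.one_apply]
      exact inv_mul_cancel₀ (hune ↑j j.2)
    · have hkj' : (↑k : Fin p) ≠ ↑j := fun h => hkj (Subtype.ext h)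
      rw [if_neg hkj', mul_zero, Matrix.one_apply_ne (fun h : j = k => hkj h.symm)]
  have hSY : S * Y = 1 := mul_eq_one_comm.mp hYS
  -- restrict v and conclude
  have hvS : (fun i : {x // x ∈ T} => v ↑i) ᵥ* S = 0 := by
    funext k
    have : ((fun i : {x // x ∈ T} => v ↑i) ᵥ* S) k
        = ∑ i : {x // x ∈ T}, v ↑i * (DC A B y - lam • (1 : Matrix (Fin p) (Fin p) ℂ)) ↑i ↑k := by
      simp only [Matrix.vecMul, dotProduct, hS_def, Matrix.of_apply]
    rw [this, hsum v hv.1 ↑k, vecMul_sub_smul_one, hv.2 ↑k k.2]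
    simp
  have hvT : (fun i : {x // x ∈ T} => v ↑i) = 0 := by
    have h1 : (fun i : {x // x ∈ T} => v ↑i) ᵥ* (S * Y) = 0 := by
      rw [← Matrix.vecMul_vecMul, hvS, Matrix.zero_vecMul]
    rwa [hSY, Matrix.vecMul_one] at h1
  funext i
  by_cases hi : i ∈ T
  · exact congrFun hvT ⟨i, hi⟩
  · exact hv.1 i hi

/-- the covering lemma : `Bad T` is covered by the events `FF T j`, `j ∈ T`. -/
lemma bad_subset_union (A : Matrix (Fin p) (Fin p) ℝ) (B : Matrix (Fin p) (Fin r) ℝ)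
    (T : Finset (Fin p)) : Bad A B T ⊆ ⋃ j ∈ T, FF A B T j := by
  rintro y ⟨lam, hlam, v, w, hv, hw, hdep⟩
  have hvB : v ᵥ* Bc B ≠ 0 := fun h => hdep (h ▸ dep_zero_left _)
  have hwB : w ᵥ* Bc B ≠ 0 := fun h => hdep (h ▸ dep_zero_right _)
  by_cases hall : ∀ j ∈ T, Nb A B T j lam
  · exact absurd (hdep) (fun _ => hvB (by rw [wv_eq_zero_of_allNb hall hv, Matrix.zero_vecMul]))
  · push_neg at hall
    obtain ⟨j, hjT, hnb⟩ := hall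
    -- construct the auxiliary vector with vanishing j-th coordinate
    obtain ⟨w', hw'W, hw'j, hw'B⟩ :
        ∃ w', Wv A B T lam y w' ∧ w' j = 0 ∧ w' ᵥ* Bc B ≠ 0 := by
      by_cases hvj : v j = 0
      · by_cases hwj : w j = 0
        · exact ⟨v, hv, hvj, hvB⟩
        · refine ⟨(w j) • v + (0 : ℂ) • w, hv.lin hw _ _, by simp [hvj], ?_⟩
          rw [vecMul_lin]
          simpa using smul_ne_zero hwj hvB
      · refine ⟨(w j) • v + (-(v j)) • w, hv.lin hw _ _, by ring_nf; simp [mul_comm], ?_⟩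
        rw [vecMul_lin]
        intro h
        exact hdep ⟨w j, -(v j), Or.inr (neg_ne_zero.mpr hvj), h⟩
    refine Set.mem_biUnion hjT ?_
    refine ⟨lam, hlam, hnb, w', ?_, ?_, hw'B, ?_⟩
    · intro i hi
      by_cases hij : i = j
      · rw [hij]; exact hw'j
      · exact hw'W.1 i (fun hiT => hi (Finset.mem_erase.mpr ⟨hij, hiT⟩))
    · exact fun k hk => hw'W.2 k (Finset.mem_of_mem_erase hk)
    · rw [hw'W.2 j hjT, hw'j, mul_zero]


/-! ### part 3 : the slice lemma -/

lemma col_j_expand (A : Matrix (Fin p) (Fin p) ℝ) (B : Matrix (Fin p) (Fin r) ℝ)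
    {y : EE p r} {j : Fin p} {x : Fin r → ℝ} (hyj : y j = x) (z : Fin p → ℂ) :
    (z ᵥ* DC A B y) j = (z ᵥ* Ac A) j + (z ᵥ* Bc B) ⬝ᵥ (fun s => ((x s : ℝ) : ℂ)) := by
  have hx : ∀ i : Fin p, (z i * ((A i j + ∑ s, B i s * x s : ℝ) : ℂ))
      = z i * (A i j : ℂ) + ∑ s, (z i * (B i s : ℂ)) * (x s : ℂ) := by
    intro i
    push_cast
    rw [mul_add, Finset.mul_sum]
    exact congrArg _ (Finset.sum_congr rfl fun s _ => by ring)
  simp only [Matrix.vecMul, dotProduct, DC, Ac, Bc, Matrix.of_apply, Matrix.map_apply,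
    Complex.coe_algebraMap, hyj]
  rw [Finset.sum_congr rfl (fun i _ => hx i), Finset.sum_add_distrib, Finset.sum_comm]
  congr 1
  exact Finset.sum_congr rfl fun s _ => by rw [Finset.sum_mul]

lemma FF_slice_null (A : Matrix (Fin p) (Fin p) ℝ) (B : Matrix (Fin p) (Fin r) ℝ)
    (T : Finset (Fin p)) (j : Fin p) (ν : Measure (Fin r → ℝ))
    (hν : ∀ (a : Fin r → ℝ) (c : ℝ), a ≠ 0 → ν {x | a ⬝ᵥ x = c} = 0)
    (y₀ : EE p r) (ys : (Fin r → ℝ) → EE p r)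
    (hys : ∀ x k, k ≠ j → ys x k = y₀ k) (hysj : ∀ x, ys x j = x)
    (hgood : ∀ lam : ℂ, 1 < ‖lam‖ → ∀ v w, Wv A B (T.erase j) lam y₀ v →
        Wv A B (T.erase j) lam y₀ w → Dep (v ᵥ* Bc B) (w ᵥ* Bc B)) :
    ν {x | ys x ∈ FF A B T j} = 0 := by
  classical
  -- the finite collection of relevant eigenvalues
  set SS : Set ℂ := {lam : ℂ | ∃ v : Fin p → ℂ, v ≠ 0 ∧ (∀ i, i ∉ T.erase j → v i = 0) ∧
      ∀ k ∈ T.erase j, (v ᵥ* DC A B y₀) k = lam * v k} with hSS_def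
  have hSSfin : SS.Finite := finite_spec (T.erase j) (DC A B y₀)
  set SS' : Set ℂ := {lam ∈ SS | 1 < ‖lam‖ ∧ ¬ Nb A B T j lam} with hSS'_def
  have hSS'fin : SS'.Finite := hSSfin.subset (Set.sep_subset _ _)
  -- eigen-equations w.r.t. `ys x` and w.r.t. `y₀` agree away from `j`
  have heqswap : ∀ (x : Fin r → ℝ) (v : Fin p → ℂ) (k : Fin p), k ∈ T.erase j →
      (v ᵥ* DC A B (ys x)) k = (v ᵥ* DC A B y₀) k := by
    intro x v k hk
    exact DC_col_local A B (hys x k (Finset.ne_of_mem_erase hk)) v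
  -- the per-eigenvalue witness sets
  set Hyp : ℂ → Set (Fin r → ℝ) := fun lam => {x | ∃ v : Fin p → ℂ,
    (∀ i, i ∉ T.erase j → v i = 0) ∧ (∀ k ∈ T.erase j, (v ᵥ* DC A B y₀) k = lam * v k) ∧
    v ᵥ* Bc B ≠ 0 ∧ (v ᵥ* DC A B (ys x)) j = 0} with hHyp_def
  have hcover : {x | ys x ∈ FF A B T j} ⊆ ⋃ lam ∈ SS', Hyp lam := by
    rintro x ⟨lam, hlam, hnb, v, hsupp, heq, hvB, heqj⟩
    have heq₀ : ∀ k ∈ T.erase j, (v ᵥ* DC A B y₀) k = lam * v k := fun k hk =>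
      (heqswap x v k hk).symm.trans (heq k hk)
    have hv0 : v ≠ 0 := fun h => hvB (by rw [h, Matrix.zero_vecMul])
    refine Set.mem_biUnion (show lam ∈ SS' from ⟨⟨v, hv0, hsupp, heq₀⟩, hlam, hnb⟩) ?_
    exact ⟨v, hsupp, heq₀, hvB, heqj⟩
  refine measure_mono_null hcover ?_
  rw [measure_biUnion_null_iff hSS'fin.countable]
  rintro lam ⟨hlamSS, hlam, hnb⟩
  -- if the witness set is empty we are done; otherwise reduce it to one hyperplane
  rcases Set.eq_empty_or_nonempty (Hyp lam) with hempty | ⟨x₀, v₀, hsupp₀, heq₀, hB₀, heqj₀⟩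
  · simp [hempty]
  -- the common hyperplane data
  set b : Fin r → ℂ := v₀ ᵥ* Bc B with hb_def
  set cc : ℂ := -(v₀ ᵥ* Ac A) j with hcc_def
  have hWv₀ : Wv A B (T.erase j) lam y₀ v₀ := ⟨hsupp₀, heq₀⟩
  have hkey : Hyp lam ⊆ {x | b ⬝ᵥ (fun s => ((x s : ℝ) : ℂ)) = cc} := by
    rintro x ⟨v, hsupp, heq, hvB, heqj⟩
    have hWv : Wv A B (T.erase j) lam y₀ v := ⟨hsupp, heq⟩
    obtain ⟨c, d, hcd, hsum⟩ := hgood lam hlam v₀ v hWv₀ hWv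
    have hd : d ≠ 0 := by
      rintro rfl
      rcases hcd with hc | hc
      · apply hB₀
        have := congrArg (fun z => c⁻¹ • z) hsum
        simpa [smul_smul, inv_mul_cancel₀ hc] using this
      · exact hc rfl
    have hc : c ≠ 0 := by
      rintro rfl
      apply hvB
      have := congrArg (fun z => d⁻¹ • z) hsum
      simpa [smul_smul, inv_mul_cancel₀ hd] using this
    -- the combined vector with vanishing B-image
    set u : Fin p → ℂ := c • v₀ + d • v with hu_def
    have huB : u ᵥ* Bc B = 0 := by rw [hu_def, vecMul_lin]; exact hsum
    have huW : Wv A B (T.erase j) lam y₀ u := hWv₀.lin hWv c d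
    have huA : ∀ k ∈ T.erase j, (u ᵥ* Ac A) k = lam * u k := by
      intro k hk
      rw [← vecMul_DC y₀ huB]
      exact huW.2 k hk
    have huAj : (u ᵥ* Ac A) j = 0 := by
      by_contra hne
      exact hnb ⟨u, huW.1, huA, huB, hne⟩
    -- expand the two `j`-column equations
    have hxeq : (v ᵥ* Ac A) j + (v ᵥ* Bc B) ⬝ᵥ (fun s => ((x s : ℝ) : ℂ)) = 0 := by
      rw [← col_j_expand A B (hysj x) v]; exact heqj
    have huAj' : c * (v₀ ᵥ* Ac A) j + d * (v ᵥ* Ac A) j = 0 := by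
      have : (u ᵥ* Ac A) j = c * (v₀ ᵥ* Ac A) j + d * (v ᵥ* Ac A) j := by
        rw [hu_def, vecMul_lin]; simp
      rw [← this, huAj]
    have hbb : c • b + d • (v ᵥ* Bc B) = 0 := hsum
    -- conclude the hyperplane equation for x
    show b ⬝ᵥ (fun s => ((x s : ℝ) : ℂ)) = cc
    have hdp : (c • b + d • (v ᵥ* Bc B)) ⬝ᵥ (fun s => ((x s : ℝ) : ℂ)) = 0 := by
      rw [hbb, zero_dotProduct]
    have hdp' : c * (b ⬝ᵥ (fun s => ((x s : ℝ) : ℂ)))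
        + d * ((v ᵥ* Bc B) ⬝ᵥ (fun s => ((x s : ℝ) : ℂ))) = 0 := by
      simpa [add_dotProduct, smul_dotProduct, smul_eq_mul] using hdp
    have hfin : c * (b ⬝ᵥ (fun s => ((x s : ℝ) : ℂ))) = c * cc := by
      rw [hcc_def]
      linear_combination hdp' - d * hxeq + huAj'
    exact mul_left_cancel₀ hc hfin
  -- a nonzero complex linear equation is contained in a real affine hyperplane
  refine measure_mono_null hkey ?_
  have hbne : ∃ s, b s ≠ 0 := by
    by_contra hall
    push_neg at hall
    exact hB₀ (funext hall)
  obtain ⟨s₀, hs₀⟩ := hbne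
  have hre : ∀ (x : Fin r → ℝ), b ⬝ᵥ (fun s => ((x s : ℝ) : ℂ)) = cc →
      ((fun s => (b s).re) ⬝ᵥ x = cc.re ∧ (fun s => (b s).im) ⬝ᵥ x = cc.im) := by
    intro x hx
    constructor
    · have := congrArg Complex.re hx
      simpa [dotProduct, Complex.re_sum] using this
    · have := congrArg Complex.im hx
      simpa [dotProduct, Complex.im_sum] using this
  by_cases hRe : (fun s => (b s).re) ≠ 0
  · exact measure_mono_null (fun x hx => (hre x hx).1) (hν _ _ hRe)
  · push_neg at hRe
    have hIm : (fun s => (b s).im) ≠ 0 := by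
      intro h
      apply hs₀
      have h1 : (b s₀).re = 0 := congrFun hRe s₀
      have h2 : (b s₀).im = 0 := congrFun h s₀
      exact Complex.ext h1 h2
    exact measure_mono_null (fun x hx => (hre x hx).2) (hν _ _ hIm)


/-! ### part 4 : measurability of `FF` -/

/-- the crude norm bound -/
noncomputable def Cb (A : Matrix (Fin p) (Fin p) ℝ) (B : Matrix (Fin p) (Fin r) ℝ) (t : ℝ) : ℝ :=
  ∑ k : Fin p, ∑ i : Fin p, (|A i k| + ∑ s : Fin r, |B i s| * t)

lemma Cb_mono (A : Matrix (Fin p) (Fin p) ℝ) (B : Matrix (Fin p) (Fin r) ℝ) {t t' : ℝ}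
    (h : t ≤ t') : Cb A B t ≤ Cb A B t' := by
  unfold Cb
  refine Finset.sum_le_sum fun k _ => Finset.sum_le_sum fun i _ => add_le_add le_rfl
    (Finset.sum_le_sum fun s _ => mul_le_mul_of_nonneg_left h (abs_nonneg _))

lemma nb_finite (A : Matrix (Fin p) (Fin p) ℝ) (B : Matrix (Fin p) (Fin r) ℝ)
    (T : Finset (Fin p)) (j : Fin p) : {lam : ℂ | Nb A B T j lam}.Finite := by
  refine (finite_spec (T.erase j) (Ac A)).subset ?_
  rintro lam ⟨u, hsupp, heq, _, hne⟩
  exact ⟨u, fun h => hne (by rw [h, Matrix.zero_vecMul]; rfl), hsupp, heq⟩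

/-- eigenvalue norm bound for normalized constrained left eigenvectors -/
lemma lam_bound (A : Matrix (Fin p) (Fin p) ℝ) (B : Matrix (Fin p) (Fin r) ℝ)
    {T' : Finset (Fin p)} {y : EE p r} {lam : ℂ} {v : Fin p → ℂ}
    (hsupp : ∀ i, i ∉ T' → v i = 0)
    (heq : ∀ k ∈ T', (v ᵥ* DC A B y) k = lam * v k)
    (hnv : ‖v‖ = 1) {t : ℝ} (hyt : ‖y‖ ≤ t) : ‖lam‖ ≤ Cb A B t := by
  rcases isEmpty_or_nonempty (Fin p) with hemp | hne
  · exfalso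
    have : v = 0 := Subsingleton.elim _ _
    rw [this, norm_zero] at hnv
    exact zero_ne_one hnv
  obtain ⟨k, hk⟩ := Finite.exists_max (fun i : Fin p => ‖v i‖)
  have hvk : ‖v k‖ = 1 := by
    refine le_antisymm (hnv ▸ norm_le_pi_norm v k) ?_
    rw [← hnv]
    exact (pi_norm_le_iff_of_nonneg (norm_nonneg _)).mpr hk
  have hkT : k ∈ T' := by
    by_contra hkT
    rw [hsupp k hkT, norm_zero] at hvk
    exact zero_ne_one hvk
  have hentry : ∀ i k' : Fin p, ‖DC A B y i k'‖ ≤ |A i k'| + ∑ s, |B i s| * t := by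
    intro i k'
    have h1 : ‖DC A B y i k'‖ = |A i k' + ∑ s, B i s * y k' s| :=
      (Complex.norm_real _).trans (Real.norm_eq_abs _)
    rw [h1]
    refine (abs_add_le _ _).trans (add_le_add le_rfl ?_)
    refine (Finset.abs_sum_le_sum_abs _ _).trans ?_
    refine Finset.sum_le_sum fun s _ => ?_
    rw [abs_mul]
    refine mul_le_mul_of_nonneg_left ?_ (abs_nonneg _)
    calc |y k' s| = ‖y k' s‖ := (Real.norm_eq_abs _).symm
      _ ≤ ‖y k'‖ := norm_le_pi_norm _ s
      _ ≤ ‖y‖ := norm_le_pi_norm _ k'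
      _ ≤ t := hyt
  have hmain : ‖lam‖ ≤ ∑ i, (|A i k| + ∑ s, |B i s| * t) := by
    have h0 : ‖lam‖ = ‖(v ᵥ* DC A B y) k‖ := by
      rw [heq k hkT, norm_mul]
      have hone : ‖v k‖ = 1 := hvk
      rw [hone, mul_one]
    rw [h0]
    have h1 : (v ᵥ* DC A B y) k = ∑ i, v i * DC A B y i k := rfl
    rw [h1]
    refine (norm_sum_le _ _).trans ?_
    refine Finset.sum_le_sum fun i _ => ?_
    rw [norm_mul]
    calc ‖v i‖ * ‖DC A B y i k‖ ≤ 1 * ‖DC A B y i k‖ := by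
          gcongr
          exact hnv ▸ norm_le_pi_norm v i
      _ = ‖DC A B y i k‖ := by rw [one_mul]
      _ ≤ |A i k| + ∑ s, |B i s| * t := hentry i k
  refine hmain.trans ?_
  unfold Cb
  have ht : (0 : ℝ) ≤ t := le_trans (norm_nonneg y) hyt
  refine Finset.single_le_sum
    (f := fun k' : Fin p => ∑ i : Fin p, (|A i k'| + ∑ s : Fin r, |B i s| * t))
    (fun k' _ => Finset.sum_nonneg fun i _ => by positivity) (Finset.mem_univ k)

/-- the compact pieces exhausting `FF` -/
def KK (A : Matrix (Fin p) (Fin p) ℝ) (B : Matrix (Fin p) (Fin r) ℝ) (T : Finset (Fin p))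
    (j : Fin p) (n : ℕ) : Set (EE p r × ℂ × (Fin p → ℂ)) :=
  {q | ‖q.1‖ ≤ (n : ℝ) + 1 ∧ ‖q.2.2‖ = 1 ∧
    1 + ((n : ℝ) + 1)⁻¹ ≤ ‖q.2.1‖ ∧ ‖q.2.1‖ ≤ Cb A B ((n : ℝ) + 1) ∧
    (∀ β ∈ {lam : ℂ | Nb A B T j lam}, ((n : ℝ) + 1)⁻¹ ≤ ‖q.2.1 - β‖) ∧
    ((n : ℝ) + 1)⁻¹ ≤ ‖q.2.2 ᵥ* Bc B‖ ∧
    (∀ i, i ∉ T.erase j → q.2.2 i = 0) ∧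
    (∀ k ∈ T.erase j, (q.2.2 ᵥ* DC A B q.1) k = q.2.1 * q.2.2 k) ∧
    (q.2.2 ᵥ* DC A B q.1) j = 0}

lemma FF_eq_union (A : Matrix (Fin p) (Fin p) ℝ) (B : Matrix (Fin p) (Fin r) ℝ)
    (T : Finset (Fin p)) (j : Fin p) :
    FF A B T j = ⋃ n : ℕ, Prod.fst '' KK A B T j n := by
  ext y
  constructor
  · rintro ⟨lam, hlam, hnb, v, hsupp, heq, hvB, heqj⟩
    -- normalize v
    have hv0 : v ≠ 0 := fun h => hvB (by rw [h, Matrix.zero_vecMul])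
    have hnv : (0 : ℝ) < ‖v‖ := norm_pos_iff.mpr hv0
    set v' : Fin p → ℂ := ‖v‖⁻¹ • v with hv'_def
    have hnv' : ‖v'‖ = 1 := by
      rw [hv'_def, norm_smul, norm_inv, norm_norm, inv_mul_cancel₀ hnv.ne']
    have hsupp' : ∀ i, i ∉ T.erase j → v' i = 0 := fun i hi => by
      simp [hv'_def, hsupp i hi]
    have heq' : ∀ k ∈ T.erase j, (v' ᵥ* DC A B y) k = lam * v' k := by
      intro k hk
      rw [hv'_def, Matrix.smul_vecMul]
      simp only [Pi.smul_apply, smul_eq_mul]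
      rw [heq k hk]
      simp [smul_eq_mul]
      ring
    have hv'B : v' ᵥ* Bc B ≠ 0 := by
      rw [hv'_def, Matrix.smul_vecMul]
      exact smul_ne_zero (inv_ne_zero (by exact_mod_cast hnv.ne')) hvB
    have heqj' : (v' ᵥ* DC A B y) j = 0 := by
      rw [hv'_def, Matrix.smul_vecMul]
      simp [heqj]
    -- distance to the finite bad set
    have hfin := nb_finite A B T j
    have heps : ∃ ε : ℝ, 0 < ε ∧ ∀ β ∈ {lam : ℂ | Nb A B T j lam},
        ε ≤ ‖lam - β‖ := by
      rcases Set.eq_empty_or_nonempty {lam : ℂ | Nb A B T j lam} with hempty | hne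
      · exact ⟨1, one_pos, by simp [hempty]⟩
      · refine ⟨Metric.infDist lam {lam : ℂ | Nb A B T j lam}, ?_, ?_⟩
        · exact (hfin.isClosed.notMem_iff_infDist_pos hne).mp hnb
        · intro β hβ
          rw [← Complex.dist_eq]
          exact Metric.infDist_le_dist_of_mem hβ
    obtain ⟨ε, hε, hεle⟩ := heps
    have hBpos : (0 : ℝ) < ‖v' ᵥ* Bc B‖ := norm_pos_iff.mpr hv'B
    have hlam1 : (0 : ℝ) < ‖lam‖ - 1 := by linarith
    -- choose n
    obtain ⟨n, hn⟩ := exists_nat_ge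
      (max ‖y‖ (max (‖lam‖ - 1)⁻¹ (max ε⁻¹ ‖v' ᵥ* Bc B‖⁻¹)))
    have hn1 : (0 : ℝ) < (n : ℝ) + 1 := by positivity
    have hny : ‖y‖ ≤ (n : ℝ) + 1 :=
      le_trans (le_trans (le_max_left _ _) hn) (by linarith)
    have hinv : ∀ c : ℝ, 0 < c → c⁻¹ ≤ (n : ℝ) + 1 → ((n : ℝ) + 1)⁻¹ ≤ c := by
      intro c hc h
      rw [← inv_inv c]
      exact inv_anti₀ (by positivity) h
    have h2 : ((n : ℝ) + 1)⁻¹ ≤ ‖lam‖ - 1 :=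
      hinv _ hlam1 (le_trans (le_trans (le_max_left _ _) (le_trans (le_max_right _ _) hn))
        (by linarith))
    have h3 : ((n : ℝ) + 1)⁻¹ ≤ ε :=
      hinv _ hε (le_trans (le_trans (le_max_left _ _) (le_trans (le_max_right _ _)
        (le_trans (le_max_right _ _) hn))) (by linarith))
    have h4 : ((n : ℝ) + 1)⁻¹ ≤ ‖v' ᵥ* Bc B‖ :=
      hinv _ hBpos (le_trans (le_trans (le_max_right _ _) (le_trans (le_max_right _ _)
        (le_trans (le_max_right _ _) hn))) (by linarith))
    refine Set.mem_iUnion.mpr ⟨n, ⟨(y, lam, v'), ?_, rfl⟩⟩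
    refine ⟨hny, hnv', by linarith, ?_, fun β hβ => le_trans h3 (hεle β hβ), h4,
      hsupp', heq', heqj'⟩
    exact (lam_bound A B hsupp' heq' hnv' hny)
  · rintro ⟨_, ⟨n, rfl⟩, ⟨q, hq, rfl⟩⟩
    obtain ⟨hq1, hq2, hq3, hq4, hq5, hq6, hq7, hq8, hq9⟩ := hq
    have hn1 : (0 : ℝ) < ((n : ℝ) + 1)⁻¹ := by positivity
    refine ⟨q.2.1, by linarith, ?_, q.2.2, hq7, hq8, ?_, hq9⟩
    · intro hnb
      have := hq5 q.2.1 hnb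
      simp at this
      linarith
    · intro h
      rw [h, norm_zero] at hq6
      linarith

lemma cont_vecMulDC (A : Matrix (Fin p) (Fin p) ℝ) (B : Matrix (Fin p) (Fin r) ℝ) (k : Fin p) :
    Continuous fun q : EE p r × ℂ × (Fin p → ℂ) => (q.2.2 ᵥ* DC A B q.1) k := by
  have hrfl : (fun q : EE p r × ℂ × (Fin p → ℂ) => (q.2.2 ᵥ* DC A B q.1) k)
      = fun q => ∑ i, q.2.2 i * ((A i k + ∑ s, B i s * q.1 k s : ℝ) : ℂ) := rfl
  rw [hrfl]
  refine continuous_finset_sum _ fun i _ => Continuous.mul ?_ ?_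
  · exact (continuous_apply i).comp (continuous_snd.comp continuous_snd)
  · refine Complex.continuous_ofReal.comp ?_
    refine Continuous.add continuous_const ?_
    refine continuous_finset_sum _ fun s _ => ?_
    exact continuous_const.mul ((continuous_apply s).comp ((continuous_apply k).comp
      continuous_fst))

lemma cont_vecMulB (B : Matrix (Fin p) (Fin r) ℝ) :
    Continuous fun q : EE p r × ℂ × (Fin p → ℂ) => q.2.2 ᵥ* Bc B := by
  refine continuous_pi fun s => ?_
  have hrfl : (fun q : EE p r × ℂ × (Fin p → ℂ) => (q.2.2 ᵥ* Bc B) s)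
      = fun q => ∑ i, q.2.2 i * Bc B i s := rfl
  rw [hrfl]
  exact continuous_finset_sum _ fun i _ =>
    ((continuous_apply i).comp (continuous_snd.comp continuous_snd)).mul continuous_const

lemma KK_compact (A : Matrix (Fin p) (Fin p) ℝ) (B : Matrix (Fin p) (Fin r) ℝ)
    (T : Finset (Fin p)) (j : Fin p) (n : ℕ) : IsCompact (KK A B T j n) := by
  have hclosed : IsClosed (KK A B T j n) := by
    have habs : Continuous fun q : EE p r × ℂ × (Fin p → ℂ) => ‖q.2.1‖ :=
      continuous_norm.comp (continuous_fst.comp continuous_snd)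
    have hc5 : IsClosed {q : EE p r × ℂ × (Fin p → ℂ) |
        ∀ β ∈ {lam : ℂ | Nb A B T j lam}, ((n : ℝ) + 1)⁻¹ ≤ ‖q.2.1 - β‖} := by
      have hrw : {q : EE p r × ℂ × (Fin p → ℂ) |
          ∀ β ∈ {lam : ℂ | Nb A B T j lam}, ((n : ℝ) + 1)⁻¹ ≤ ‖q.2.1 - β‖}
          = ⋂ β ∈ {lam : ℂ | Nb A B T j lam},
            {q : EE p r × ℂ × (Fin p → ℂ) | ((n : ℝ) + 1)⁻¹ ≤ ‖q.2.1 - β‖} := by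
        ext q; simp
      rw [hrw]
      exact isClosed_biInter fun β _ => isClosed_le continuous_const
        (continuous_norm.comp ((continuous_fst.comp continuous_snd).sub
          continuous_const))
    have hc7 : IsClosed {q : EE p r × ℂ × (Fin p → ℂ) |
        ∀ i, i ∉ T.erase j → q.2.2 i = 0} := by
      have hrw : {q : EE p r × ℂ × (Fin p → ℂ) | ∀ i, i ∉ T.erase j → q.2.2 i = 0}
          = ⋂ i ∈ {i : Fin p | i ∉ T.erase j},
            {q : EE p r × ℂ × (Fin p → ℂ) | q.2.2 i = 0} := by
        ext q; simp
      rw [hrw]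
      exact isClosed_biInter fun i _ => isClosed_eq
        ((continuous_apply i).comp (continuous_snd.comp continuous_snd)) continuous_const
    have hc8 : IsClosed {q : EE p r × ℂ × (Fin p → ℂ) |
        ∀ k ∈ T.erase j, (q.2.2 ᵥ* DC A B q.1) k = q.2.1 * q.2.2 k} := by
      have hrw : {q : EE p r × ℂ × (Fin p → ℂ) |
          ∀ k ∈ T.erase j, (q.2.2 ᵥ* DC A B q.1) k = q.2.1 * q.2.2 k}
          = ⋂ k ∈ (T.erase j : Finset (Fin p)),
            {q : EE p r × ℂ × (Fin p → ℂ) | (q.2.2 ᵥ* DC A B q.1) k = q.2.1 * q.2.2 k} := by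
        ext q; simp
      rw [hrw]
      exact isClosed_biInter fun k _ => isClosed_eq (cont_vecMulDC A B k)
        ((continuous_fst.comp continuous_snd).mul
          ((continuous_apply k).comp (continuous_snd.comp continuous_snd)))
    unfold KK
    refine IsClosed.inter (isClosed_le (continuous_fst.norm) continuous_const) ?_
    refine IsClosed.inter (isClosed_eq ((continuous_snd.comp continuous_snd).norm)
      continuous_const) ?_
    refine IsClosed.inter (isClosed_le continuous_const habs) ?_
    refine IsClosed.inter (isClosed_le habs continuous_const) ?_
    refine IsClosed.inter hc5 ?_
    refine IsClosed.inter (isClosed_le continuous_const (cont_vecMulB B).norm) ?_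
    refine IsClosed.inter hc7 ?_
    refine IsClosed.inter hc8 ?_
    exact isClosed_eq (cont_vecMulDC A B j) continuous_const
  have hbox : IsCompact ((Metric.closedBall (0 : EE p r) ((n : ℝ) + 1)) ×ˢ
      ((Metric.closedBall (0 : ℂ) (Cb A B ((n : ℝ) + 1))) ×ˢ
        (Metric.closedBall (0 : Fin p → ℂ) 1))) :=
    (isCompact_closedBall _ _).prod ((isCompact_closedBall _ _).prod
      (isCompact_closedBall _ _))
  refine IsCompact.of_isClosed_subset hbox hclosed ?_
  rintro ⟨y, lam, v⟩ ⟨h1, h2, _, h4, _⟩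
  refine ⟨?_, ?_, ?_⟩
  · simpa [Metric.mem_closedBall, dist_zero_right] using h1
  · simpa [Metric.mem_closedBall, dist_zero_right] using h4
  · simp [Metric.mem_closedBall, dist_zero_right, h2]

lemma FF_measurable (A : Matrix (Fin p) (Fin p) ℝ) (B : Matrix (Fin p) (Fin r) ℝ)
    (T : Finset (Fin p)) (j : Fin p) : MeasurableSet (FF A B T j) := by
  rw [FF_eq_union]
  exact MeasurableSet.iUnion fun n =>
    (((KK_compact A B T j n).image continuous_fst).isClosed).measurableSet


/-! ### part 5 : the measure-theoretic induction -/

section Measure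

variable (A : Matrix (Fin p) (Fin p) ℝ) (B : Matrix (Fin p) (Fin r) ℝ)
variable (ν : Fin p → Measure (Fin r → ℝ)) [∀ j, IsProbabilityMeasure (ν j)]

instance uniq_not_ne (j : Fin p) : Unique {k : Fin p // ¬ k ≠ j} where
  default := ⟨j, by simp⟩
  uniq := by rintro ⟨x, hx⟩; simp only [ne_eq, not_not] at hx; exact Subtype.ext hx

/-- the decomposition of the product space isolating coordinate `j` -/
noncomputable def Psi (j : Fin p) :
    EE p r ≃ᵐ ((∀ _ : {k : Fin p // k ≠ j}, Fin r → ℝ) × (Fin r → ℝ)) :=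
  (MeasurableEquiv.piEquivPiSubtypeProd (fun _ : Fin p => Fin r → ℝ) (fun k => k ≠ j)).trans
    ((MeasurableEquiv.refl _).prodCongr (MeasurableEquiv.piUnique
      (fun _ : {k : Fin p // ¬ k ≠ j} => Fin r → ℝ)))

lemma Psi_preserving (j : Fin p) :
    MeasurePreserving (Psi (p := p) (r := r) j) (Measure.pi ν)
      ((Measure.pi fun k : {k : Fin p // k ≠ j} => ν k).prod (ν j)) := by
  have mp1 := measurePreserving_piEquivPiSubtypeProd (fun k : Fin p => ν k) (fun k => k ≠ j)
  have mp2 : MeasurePreserving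
      (Prod.map (id : (∀ _ : {k : Fin p // k ≠ j}, Fin r → ℝ) → _)
        (MeasurableEquiv.piUnique (fun _ : {k : Fin p // ¬ k ≠ j} => Fin r → ℝ)))
      ((Measure.pi fun k : {k : Fin p // k ≠ j} => ν k).prod
        (Measure.pi fun k : {k : Fin p // ¬ k ≠ j} => ν k))
      ((Measure.pi fun k : {k : Fin p // k ≠ j} => ν k).prod (ν j)) := by
    have h2 := measurePreserving_piUnique (fun k : {k : Fin p // ¬ k ≠ j} => ν k)
    exact (MeasurePreserving.id _).prod h2
  exact mp2.comp mp1

lemma Psi_symm_apply (j : Fin p) (z : ∀ _ : {k : Fin p // k ≠ j}, Fin r → ℝ)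
    (x : Fin r → ℝ) (k : Fin p) :
    (Psi (p := p) (r := r) j).symm (z, x) k = if h : k ≠ j then z ⟨k, h⟩ else x := by
  show ((MeasurableEquiv.piEquivPiSubtypeProd (fun _ : Fin p => Fin r → ℝ)
      (fun k => k ≠ j)).symm (((MeasurableEquiv.refl _).prodCongr (MeasurableEquiv.piUnique
      (fun _ : {k : Fin p // ¬ k ≠ j} => Fin r → ℝ))).symm (z, x))) k = _
  have h1 : ((MeasurableEquiv.refl (∀ _ : {k : Fin p // k ≠ j}, Fin r → ℝ)).prodCongr
      (MeasurableEquiv.piUnique (fun _ : {k : Fin p // ¬ k ≠ j} => Fin r → ℝ))).symm (z, x)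
      = (z, (MeasurableEquiv.piUnique
          (fun _ : {k : Fin p // ¬ k ≠ j} => Fin r → ℝ)).symm x) := rfl
  rw [h1]
  by_cases h : k ≠ j
  · simp [MeasurableEquiv.piEquivPiSubtypeProd, Equiv.piEquivPiSubtypeProd_symm_apply, h]
  · simp only [MeasurableEquiv.piEquivPiSubtypeProd, MeasurableEquiv.symm,
      MeasurableEquiv.coe_mk, Equiv.piEquivPiSubtypeProd_symm_apply, dif_neg h]
    have hd : (⟨k, h⟩ : {k : Fin p // ¬ k ≠ j}) = default := Subsingleton.elim _ _
    rw [hd]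
    rfl

lemma FF_null (hν : ∀ (j : Fin p) (a : Fin r → ℝ) (c : ℝ), a ≠ 0 → ν j {x | a ⬝ᵥ x = c} = 0)
    (T : Finset (Fin p)) (j : Fin p)
    (hind : ∃ N, MeasurableSet N ∧ Bad A B (T.erase j) ⊆ N ∧ Measure.pi ν N = 0) :
    Measure.pi ν (FF A B T j) = 0 := by
  obtain ⟨N, hNmeas, hNsub, hNnull⟩ := hind
  set Ψ := Psi (p := p) (r := r) j with hΨ_def
  have hpres := Psi_preserving ν j
  set S : Set ((∀ _ : {k : Fin p // k ≠ j}, Fin r → ℝ) × (Fin r → ℝ)) :=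
    Ψ.symm ⁻¹' (FF A B T j) with hS_def
  have hSmeas : MeasurableSet S := Ψ.symm.measurable (FF_measurable A B T j)
  set SN : Set ((∀ _ : {k : Fin p // k ≠ j}, Fin r → ℝ) × (Fin r → ℝ)) :=
    Ψ.symm ⁻¹' N with hSN_def
  have hSNmeas : MeasurableSet SN := Ψ.symm.measurable hNmeas
  have hpre : ∀ (W : Set (EE p r)), Ψ ⁻¹' (Ψ.symm ⁻¹' W) = W := by
    intro W; ext y; simp
  have hFFse : Measure.pi ν (FF A B T j)
      = ((Measure.pi fun k : {k : Fin p // k ≠ j} => ν k).prod (ν j)) S := by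
    rw [← hpres.measure_preimage hSmeas.nullMeasurableSet, hS_def, hpre]
  have hNse : ((Measure.pi fun k : {k : Fin p // k ≠ j} => ν k).prod (ν j)) SN = 0 := by
    rw [← hpre N, ← hSN_def] at hNnull
    rw [← hpres.measure_preimage hSNmeas.nullMeasurableSet]
    exact hNnull
  rw [hFFse, Measure.prod_apply hSmeas]
  have hae : ∀ᵐ z ∂(Measure.pi fun k : {k : Fin p // k ≠ j} => ν k),
      ν j (Prod.mk z ⁻¹' SN) = 0 := (Measure.measure_prod_null hSNmeas).mp hNse
  have hzero : ∀ᵐ z ∂(Measure.pi fun k : {k : Fin p // k ≠ j} => ν k),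
      ν j (Prod.mk z ⁻¹' S) = 0 := by
    filter_upwards [hae] with z hz
    -- the slice map
    set ys : (Fin r → ℝ) → EE p r := fun x => Ψ.symm (z, x) with hys_def
    have hys : ∀ x k, k ≠ j → ys x k = ys 0 k := by
      intro x k hk
      rw [hys_def]
      simp only []
      rw [Psi_symm_apply, Psi_symm_apply, dif_pos hk, dif_pos hk]
    have hysj : ∀ x, ys x j = x := by
      intro x
      rw [hys_def]
      simp only []
      rw [Psi_symm_apply, dif_neg (by simp)]
    -- the inductive goodness of the slice base point
    have hgood : ∀ lam : ℂ, 1 < ‖lam‖ → ∀ v w, Wv A B (T.erase j) lam (ys 0) v →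
        Wv A B (T.erase j) lam (ys 0) w → Dep (v ᵥ* Bc B) (w ᵥ* Bc B) := by
      by_contra hbad
      push_neg at hbad
      obtain ⟨lam, hlam, v, w, hv, hw, hdep⟩ := hbad
      have hall : ∀ x : Fin r → ℝ, ys x ∈ Bad A B (T.erase j) := by
        intro x
        refine ⟨lam, hlam, v, w, ⟨hv.1, ?_⟩, ⟨hw.1, ?_⟩, hdep⟩
        · intro k hk
          rw [DC_col_local A B (hys x k (Finset.ne_of_mem_erase hk)) v]
          exact hv.2 k hk
        · intro k hk
          rw [DC_col_local A B (hys x k (Finset.ne_of_mem_erase hk)) w]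
          exact hw.2 k hk
      have huniv : Prod.mk z ⁻¹' SN = Set.univ := by
        ext x
        simp only [Set.mem_preimage, Set.mem_univ, iff_true, hSN_def]
        exact hNsub (hall x)
      rw [huniv] at hz
      simp at hz
    have hsec : Prod.mk z ⁻¹' S = {x | ys x ∈ FF A B T j} := rfl
    rw [hsec]
    exact FF_slice_null A B T j (ν j) (hν j) (ys 0) ys
      (fun x k hk => hys x k hk) hysj hgood
  rw [lintegral_congr_ae hzero]
  simp

/-- the main induction : `Bad T` has a measurable null superset -/
lemma bad_null (hν : ∀ (j : Fin p) (a : Fin r → ℝ) (c : ℝ), a ≠ 0 → ν j {x | a ⬝ᵥ x = c} = 0)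
    (T : Finset (Fin p)) :
    ∃ N, MeasurableSet N ∧ Bad A B T ⊆ N ∧ Measure.pi ν N = 0 := by
  induction T using Finset.strongInduction with
  | _ T ih =>
    refine ⟨⋃ j ∈ T, FF A B T j, ?_, bad_subset_union A B T, ?_⟩
    · exact MeasurableSet.biUnion T.countable_toSet fun j _ => FF_measurable A B T j
    · have hrw : (⋃ j ∈ T, FF A B T j) = ⋃ j ∈ (T : Set (Fin p)), FF A B T j := by simp
      rw [hrw, measure_biUnion_null_iff T.countable_toSet]
      intro j hj
      exact FF_null A B ν hν T j (ih (T.erase j) (Finset.erase_ssubset hj))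

end Measure


/-! ### part 6 : PBH test and the top-level reduction -/

lemma pbh {A : Matrix (Fin p) (Fin p) ℝ} {B : Matrix (Fin p) (Fin r) ℝ}
    (hstab : Stabilizable A B) {lam : ℂ} (hlam : 1 < ‖lam‖)
    {u : Fin p → ℂ} (hA : u ᵥ* Ac A = lam • u) (hB : u ᵥ* Bc B = 0) : u = 0 := by
  obtain ⟨L₀, hL₀⟩ := hstab
  by_contra hu
  have hM : u ᵥ* ((A + B * L₀).map (algebraMap ℝ ℂ)) = lam • u := by
    rw [Matrix.map_add _ (map_add (algebraMap ℝ ℂ)), Matrix.map_mul, Matrix.vecMul_add,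
      ← Matrix.vecMul_vecMul]
    rw [show (B.map (algebraMap ℝ ℂ)) = Bc B from rfl, hB, Matrix.zero_vecMul, add_zero]
    exact hA
  have hroot := root_of_left_eig hu hM
  have := hL₀ lam hroot
  linarith

/-- extraction of an independent pair from a `≥ 2`-dimensional submodule -/
lemma exists_indep_pair {K : Submodule ℂ (Fin p → ℂ)} (h2 : 2 ≤ Module.finrank ℂ K) :
    ∃ v w : Fin p → ℂ, v ∈ K ∧ w ∈ K ∧ ∀ c d : ℂ, c • v + d • w = 0 → c = 0 ∧ d = 0 := by
  have hKbot : K ≠ ⊥ := by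
    intro h
    rw [h, finrank_bot] at h2
    omega
  obtain ⟨v, hvK, hv0⟩ := Submodule.exists_mem_ne_zero_of_ne_bot hKbot
  have hspan : ¬ (K ≤ Submodule.span ℂ {v}) := by
    intro hle
    have := Submodule.finrank_mono hle
    rw [finrank_span_singleton hv0] at this
    omega
  obtain ⟨w, hwK, hwspan⟩ := SetLike.not_le_iff_exists.mp hspan
  refine ⟨v, w, hvK, hwK, fun c d hcd => ?_⟩
  by_cases hd : d = 0
  · subst hd
    simp only [smul_zero, zero_smul, add_zero] at hcd
    rcases smul_eq_zero.mp hcd with hc | hv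
    · exact ⟨hc, rfl⟩
    · exact absurd hv hv0
  · exfalso
    apply hwspan
    have hw' : w = -((d⁻¹ * c) • v) := by
      have h1 : d • w = -(c • v) := by
        rw [eq_neg_iff_add_eq_zero, add_comm]; exact hcd
      have := congrArg (fun z => d⁻¹ • z) h1
      simpa only [smul_smul, inv_mul_cancel₀ hd, one_smul, smul_neg] using this
    rw [hw']
    exact Submodule.neg_mem _ (Submodule.smul_mem _ _ (Submodule.mem_span_singleton_self v))

lemma notReg_subset {A : Matrix (Fin p) (Fin p) ℝ} {B : Matrix (Fin p) (Fin r) ℝ}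
    (hstab : Stabilizable A B) :
    {y : EE p r | ¬ RegularMatrix (A + B * Matrix.of fun s k => y k s)}
      ⊆ Bad A B Finset.univ := by
  intro y hy
  simp only [Set.mem_setOf_eq, RegularMatrix, not_forall] at hy
  obtain ⟨lam, _, hlam, hrank⟩ := hy
  have hDCy : (A + B * Matrix.of fun s k => y k s).map (algebraMap ℝ ℂ) = DC A B y :=
    (DC_eq A B y).symm
  set G : Matrix (Fin p) (Fin p) ℂ := DC A B y - lam • 1 with hG_def
  rw [hDCy] at hrank
  rw [not_le] at hrank
  -- the kernel of the transposed matrix has dimension at least 2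
  set K : Submodule ℂ (Fin p → ℂ) := LinearMap.ker (Gᵀ).mulVecLin with hK_def
  have hrn := LinearMap.finrank_range_add_finrank_ker (Gᵀ).mulVecLin
  have hrankT : (Gᵀ).rank = G.rank := Matrix.rank_transpose G
  have hfinp : Module.finrank ℂ (Fin p → ℂ) = p := by
    simp [Module.finrank_pi]
  have hK2 : 2 ≤ Module.finrank ℂ K := by
    have h1 : Module.finrank ℂ (LinearMap.range (Gᵀ).mulVecLin) + Module.finrank ℂ K = p := by
      rw [hfinp] at hrn
      exact hrn
    have h3 : (Gᵀ).rank = Module.finrank ℂ (LinearMap.range (Gᵀ).mulVecLin) := rfl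
    have h2 : G.rank < p - 1 := hrank
    rw [← h3, hrankT] at h1
    omega
  obtain ⟨v, w, hvK, hwK, hindep⟩ := exists_indep_pair hK2
  -- kernel membership gives the eigen equations
  have hker : ∀ u : Fin p → ℂ, u ∈ K → ∀ k, (u ᵥ* DC A B y) k = lam * u k := by
    intro u hu k
    have h0 : u ᵥ* G = 0 := by
      rw [hK_def, LinearMap.mem_ker, Matrix.mulVecLin_apply, Matrix.mulVec_transpose] at hu
      exact hu
    have hck := congrFun h0 k
    simp only [Pi.zero_apply] at hck
    rw [hG_def, vecMul_sub_smul_one] at hck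
    linear_combination hck
  have hinj : ∀ u : Fin p → ℂ, u ∈ K → u ᵥ* Bc B = 0 → u = 0 := by
    intro u hu hB0
    have hDCu : u ᵥ* DC A B y = u ᵥ* Ac A := vecMul_DC y hB0
    have hAeq : u ᵥ* Ac A = lam • u := by
      funext k
      rw [← hDCu, hker u hu k]
      simp
    exact pbh hstab hlam hAeq hB0
  refine ⟨lam, hlam, v, w, ?_, ?_, ?_⟩
  · exact ⟨fun i hi => absurd (Finset.mem_univ i) hi, fun k _ => hker v hvK k⟩
  · exact ⟨fun i hi => absurd (Finset.mem_univ i) hi, fun k _ => hker w hwK k⟩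
  · rintro ⟨c, d, hcd, hsum⟩
    have hu : (c • v + d • w) ᵥ* Bc B = 0 := by rw [vecMul_lin]; exact hsum
    have h0 : c • v + d • w = 0 := hinj _ (K.add_mem (K.smul_mem c hvK) (K.smul_mem d hwK)) hu
    obtain ⟨hc, hd⟩ := hindep c d h0
    rcases hcd with h | h
    · exact h hc
    · exact h hd

end CLR

/-- closed-loop regularity: if the columns of the random feedback `L` are
independent with linearly full rank distributions, then `A₀ + B₀L` is regular a.s. -/
theorem closed_loop_regular {p r : ℕ}
    (A₀ : Matrix (Fin p) (Fin p) ℝ) (B₀ : Matrix (Fin p) (Fin r) ℝ)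
    (hstab : Stabilizable A₀ B₀)
    {Ω : Type*} [MeasurableSpace Ω] (μ : Measure Ω) [IsProbabilityMeasure μ]
    (L : Ω → Matrix (Fin r) (Fin p) ℝ)
    (hmeas : ∀ (i : Fin r) (j : Fin p), Measurable fun ω => L ω i j)
    (hindep : iIndepFun
      (fun (j : Fin p) (ω : Ω) (i : Fin r) => L ω i j) μ)
    (hfull : ∀ j : Fin p, LinFullRankDistribution μ (fun ω (i : Fin r) => L ω i j)) :
    μ {ω | RegularMatrix (A₀ + B₀ * L ω)} = 1 := by
  classical
  have hcol : ∀ j : Fin p, Measurable fun ω => (fun i => L ω i j) := fun j =>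
    measurable_pi_lambda _ fun i => hmeas i j
  set ν : Fin p → Measure (Fin r → ℝ) := fun j => Measure.map (fun ω i => L ω i j) μ
    with hν_def
  haveI : ∀ j, IsProbabilityMeasure (ν j) := fun j =>
    Measure.isProbabilityMeasure_map (hcol j).aemeasurable
  have hνnull : ∀ (j : Fin p) (a : Fin r → ℝ) (c : ℝ), a ≠ 0 → ν j {x | a ⬝ᵥ x = c} = 0 := by
    intro j a c ha
    have hdpm : Measurable fun x : Fin r → ℝ => a ⬝ᵥ x := by
      have hrfl : (fun x : Fin r → ℝ => a ⬝ᵥ x) = fun x => ∑ s, a s * x s := rfl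
      rw [hrfl]
      exact Finset.measurable_sum _ fun s _ => measurable_const.mul (measurable_pi_apply s)
    have hmeasset : MeasurableSet {x : Fin r → ℝ | a ⬝ᵥ x = c} :=
      hdpm (measurableSet_singleton c)
    rw [hν_def, Measure.map_apply (hcol j) hmeasset]
    exact hfull j a c ha
  set Φ : Ω → CLR.EE p r := fun ω => fun j i => L ω i j with hΦ_def
  have hΦmeas : Measurable Φ := measurable_pi_lambda _ fun j => hcol j
  haveI : ∀ j, SigmaFinite (ν j) := fun j => inferInstance
  have hmap : Measure.pi ν = Measure.map Φ μ := by
    refine Measure.pi_eq fun s hs => ?_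
    rw [Measure.map_apply hΦmeas (MeasurableSet.pi Set.countable_univ (fun j _ => hs j))]
    have hpre : Φ ⁻¹' (Set.pi Set.univ s) = ⋂ j ∈ Finset.univ, (fun ω i => L ω i j) ⁻¹' (s j) := by
      ext ω
      simp [Set.mem_pi, hΦ_def]
    rw [hpre]
    have hh := (iIndepFun_iff_measure_inter_preimage_eq_mul.mp hindep)
      Finset.univ (fun i _ => hs i)
    rw [hh]
    exact Finset.prod_congr rfl fun j _ => (Measure.map_apply (hcol j) (hs j)).symm
  obtain ⟨N, hNmeas, hNsub, hNnull⟩ := CLR.bad_null A₀ B₀ ν hνnull Finset.univ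
  have hsub : Φ ⁻¹' Nᶜ ⊆ {ω | RegularMatrix (A₀ + B₀ * L ω)} := by
    intro ω hω
    simp only [Set.mem_preimage, Set.mem_compl_iff] at hω
    by_contra hreg
    apply hω
    apply hNsub
    apply CLR.notReg_subset hstab
    have hLm : (Matrix.of fun s k => Φ ω k s) = L ω := rfl
    simp only [Set.mem_setOf_eq, hLm]
    exact hreg
  have hge : (1 : ENNReal) ≤ μ {ω | RegularMatrix (A₀ + B₀ * L ω)} := by
    calc (1 : ENNReal) = Measure.pi ν Nᶜ := by
          rw [measure_compl hNmeas (measure_ne_top _ _), hNnull, measure_univ, tsub_zero]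
      _ = μ (Φ ⁻¹' Nᶜ) := by rw [hmap, Measure.map_apply hΦmeas hNmeas.compl]
      _ ≤ μ {ω | RegularMatrix (A₀ + B₀ * L ω)} := measure_mono hsub
  exact le_antisymm prob_le_one hge
end

section
/- Let Y₁,…,Y_m be mutually independent random vectors in ℝ^m, each with a linearly full rank distribution, and let Y = [Y₁,…,Y_m] ∈ ℝ^{m×m} be the matrix with these columns. Let M(λ) be an m×m matrix each of whose entries is a polynomial in λ with real coefficients, and let f be a nonzero polynomial with real coefficients. Then ℙ( there exists λ ∈ ℂ with f(λ) ≠ 0 such that rank_ℂ( Y − M(λ)/f(λ) ) < m − 1 ) = 0. -/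
open Matrix MeasureTheory ProbabilityTheory

/-!
Write `A(z) = f(z) Y - M(z)`, so that `Y - M(z)/f(z) = A(z)/f(z)` wherever `f(z) ≠ 0`. We show by
induction on `n` that almost surely no such `z` makes the first `n` columns of `A(z)` have rank
`< n - 1`. If the first `n + 1` columns are that deficient but the first `n` are not, then the first
`n` columns are dependent at `z` and the new column lies in their span. Dependence makes `z` a
root of the polynomial `det (Aₙ(z)ᵀ Aₙ(z))` in the first `n` columns. This polynomial is nonzero
almost surely: at a real point `l` with `f(l) ≠ 0` the columns are real, affinely shifted copies of
independent vectors with full rank laws, and so are linearly independent. Given the first `n`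
columns, only finitely many `z` remain. For each of them, the new column must lie in a proper
complex affine subspace, which meets `ℝ^m` inside a real hyperplane, a null set. Independence and
Fubini then make the whole event null.
-/

open Set Submodule Polynomial

section LinearAlgebra

variable {K : Type*} [Field K]

theorem Submodule.exists_dotProduct_eq_zero_of_finrank_lt {d : ℕ} (W : Submodule K (Fin d → K))
    (hW : Module.finrank K W < d) : ∃ a : Fin d → K, a ≠ 0 ∧ ∀ w ∈ W, a ⬝ᵥ w = 0 := by
  have hlt : W < ⊤ := lt_top_iff_ne_top.2 fun h => by
    rw [h, finrank_top, Module.finrank_fin_fun] at hW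
    exact hW.false
  obtain ⟨φ, hφ, hWφ⟩ := W.exists_dual_map_eq_bot_of_lt_top hlt inferInstance
  refine ⟨(dotProductEquiv K (Fin d)).symm φ, by simpa using hφ, fun w hw => ?_⟩
  have : φ w = 0 := by simpa [hWφ] using mem_map_of_mem (f := φ) hw
  rwa [← dotProductEquiv_apply_apply, LinearEquiv.apply_symm_apply]

theorem not_linearIndependent_and_mem_span_of_finrank_span_snoc_lt {V : Type*} [AddCommGroup V]
    [Module K V] {n : ℕ} (v : Fin n → V) (x : V)
    (h : Module.finrank K (span K (range (Fin.snoc v x : Fin (n + 1) → V))) < n)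
    (h' : n ≤ Module.finrank K (span K (range v)) + 1) :
    ¬ LinearIndependent K v ∧ x ∈ span K (range v) := by
  have hle : span K (range v) ≤ span K (range (Fin.snoc v x : Fin (n + 1) → V)) :=
    span_mono (by rw [Fin.range_snoc]; exact subset_insert _ _)
  have := FiniteDimensional.span_of_finite K (finite_range (Fin.snoc v x : Fin (n + 1) → V))
  have hrank := Submodule.finrank_mono hle
  refine ⟨fun hv => ?_, ?_⟩
  · rw [finrank_span_eq_card hv, Fintype.card_fin] at hrank
    omega
  · rw [Submodule.eq_of_le_of_finrank_le hle (by omega)]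
    exact subset_span ⟨Fin.last n, Fin.snoc_last _ _⟩

variable {m n R : Type*} [Fintype m] [Fintype n] [DecidableEq n]

theorem Matrix.det_transpose_mul_self_eq_zero [CommRing R] [IsDomain R] {A : Matrix m n R}
    (h : ¬ LinearIndependent R A.col) : (Aᵀ * A).det = 0 := by
  rw [← mulVec_injective_iff] at h
  obtain ⟨v, hAv, hv⟩ : ∃ v, A *ᵥ v = 0 ∧ v ≠ 0 := by
    rw [← coe_mulVecLin, injective_iff_map_eq_zero] at h
    simpa [not_forall] using h
  refine exists_mulVec_eq_zero_iff.mp ⟨v, hv, ?_⟩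
  rw [← mulVec_mulVec, hAv, mulVec_zero]

theorem Matrix.det_transpose_mul_self_ne_zero [Field R] [LinearOrder R] [IsStrictOrderedRing R]
    {A : Matrix m n R} (h : LinearIndependent R A.col) : (Aᵀ * A).det ≠ 0 := by
  intro hdet
  obtain ⟨v, hv, hAAv⟩ := exists_mulVec_eq_zero_iff.mpr hdet
  have hAv : v ∈ LinearMap.ker A.mulVecLin := by
    rw [← ker_mulVecLin_transpose_mul_self]
    exact hAAv
  exact hv (mulVec_injective_iff.mpr h (by simpa using hAv))

end LinearAlgebra

theorem measurableSet_setOf_exists_of_isClosed {X Z : Type*} [TopologicalSpace X]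
    [MeasurableSpace X] [OpensMeasurableSpace X] [TopologicalSpace Z] [SigmaCompactSpace Z]
    {C : Set (X × Z)} (hC : IsClosed C) : MeasurableSet {x | ∃ z, (x, z) ∈ C} := by
  have hcover : {x | ∃ z, (x, z) ∈ C} = ⋃ k, {x | ∃ z ∈ compactCovering Z k, (x, z) ∈ C} := by
    ext x
    simp only [mem_ofPred_eq, mem_iUnion]
    exact ⟨fun ⟨z, hz⟩ => ⟨_, z, (exists_mem_compactCovering z).choose_spec, hz⟩,
      fun ⟨_, z, _, hz⟩ => ⟨z, hz⟩⟩
  rw [hcover]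
  refine MeasurableSet.iUnion fun k => IsClosed.measurableSet ?_
  have : CompactSpace (compactCovering Z k) :=
    isCompact_iff_compactSpace.mp (isCompact_compactCovering Z k)
  convert isClosedMap_fst_of_compactSpace (X := X) (Y := compactCovering Z k) _
    (hC.preimage (continuous_fst.prodMk (continuous_subtype_val.comp continuous_snd))) using 1
  ext x
  exact ⟨fun ⟨z, hz, hxz⟩ => ⟨(x, ⟨z, hz⟩), hxz, rfl⟩, fun ⟨⟨_, z⟩, hxz, hx⟩ => ⟨z, z.2, hx ▸ hxz⟩⟩

theorem measurableSet_mem_span_range {n d : ℕ} :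
    MeasurableSet {p : (Fin n → Fin d → ℝ) × (Fin d → ℝ) | p.2 ∈ span ℝ (range p.1)} := by
  simp only [mem_span_range_iff_exists_fun]
  exact measurableSet_setOf_exists_of_isClosed
    (C := {q : ((Fin n → Fin d → ℝ) × (Fin d → ℝ)) × (Fin n → ℝ) | ∑ j, q.2 j • q.1.1 j = q.1.2})
    (isClosed_eq (by fun_prop) (by fun_prop))

/-- Writing `t ≠ 0` as `∃ s, t * s = 1` and span membership as `∃ a, A *ᵥ a = v` turns the set into
the projection of a closed set along the σ-compact space `ℂ × ℂ × ℂⁿ`. -/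
theorem measurableSet_exists_mem_span_cols {X : Type*} [TopologicalSpace X] [MeasurableSpace X]
    [OpensMeasurableSpace X] {n d : ℕ} {t g : X × ℂ → ℂ} {A : X × ℂ → Matrix (Fin d) (Fin n) ℂ}
    {v : X × ℂ → Fin d → ℂ} (ht : Continuous t) (hg : Continuous g) (hA : Continuous A)
    (hv : Continuous v) :
    MeasurableSet
      {x | ∃ z, t (x, z) ≠ 0 ∧ g (x, z) = 0 ∧ v (x, z) ∈ span ℂ (range (A (x, z)).col)} := by
  have hset : {x | ∃ z, t (x, z) ≠ 0 ∧ g (x, z) = 0 ∧ v (x, z) ∈ span ℂ (range (A (x, z)).col)} =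
      {x | ∃ q : ℂ × ℂ × (Fin n → ℂ), (x, q) ∈ {p : X × ℂ × ℂ × (Fin n → ℂ) |
        t (p.1, p.2.1) * p.2.2.1 = 1 ∧ g (p.1, p.2.1) = 0 ∧
          A (p.1, p.2.1) *ᵥ p.2.2.2 = v (p.1, p.2.1)}} := by
    ext x
    simp only [mem_ofPred_eq, ← Matrix.range_mulVecLin, LinearMap.mem_range, mulVecLin_apply]
    constructor
    · rintro ⟨z, htz, hgz, a, ha⟩
      exact ⟨(z, (t (x, z))⁻¹, a), mul_inv_cancel₀ htz, hgz, ha⟩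
    · rintro ⟨⟨z, s, a⟩, hts, hgz, ha⟩
      exact ⟨z, left_ne_zero_of_mul_eq_one hts, hgz, a, ha⟩
  rw [hset]
  refine measurableSet_setOf_exists_of_isClosed ((isClosed_eq ?_ continuous_const).inter
    ((isClosed_eq ?_ continuous_const).inter (isClosed_eq ?_ ?_))) <;> fun_prop

section Independence

variable {Ω E F : Type*} [MeasurableSpace Ω] [MeasurableSpace E] [MeasurableSpace F]
  {μ : Measure Ω}

theorem ProbabilityTheory.IndepFun.measure_preimage_eq_zero_of_fibers [IsFiniteMeasure μ]
    {U : Ω → F} {V : Ω → E} (hUV : IndepFun U V μ) (hU : Measurable U) (hV : Measurable V)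
    {S : Set (F × E)} (hS : MeasurableSet S) (hfib : ∀ y, μ.map V (Prod.mk y ⁻¹' S) = 0) :
    μ ((fun ω => (U ω, V ω)) ⁻¹' S) = 0 := by
  rw [← Measure.map_apply (hU.prodMk hV) hS,
    hUV.map_prod_eq_prod_map_map hU.aemeasurable hV.aemeasurable, Measure.prod_apply hS]
  simp [hfib]

theorem ProbabilityTheory.iIndepFun.indepFun_init_last {n : ℕ} {X : Fin (n + 1) → Ω → E}
    (h : iIndepFun X μ) (hX : ∀ j, Measurable (X j)) :
    IndepFun (fun ω j => X (Fin.castSucc j) ω) (X (Fin.last n)) μ := by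
  have hdisj : Disjoint (Finset.univ.map Fin.castSuccEmb) {Fin.last n} := by
    simp [Fin.castSucc_ne_last]
  let init (g : Finset.univ.map Fin.castSuccEmb → E) (j : Fin n) : E :=
    g ⟨Fin.castSucc j, by simp⟩
  let last (g : ({Fin.last n} : Finset (Fin (n + 1))) → E) : E := g ⟨Fin.last n, by simp⟩
  exact (h.indepFun_finset _ _ hdisj hX).comp (φ := init) (ψ := last) (by fun_prop) (by fun_prop)

theorem ProbabilityTheory.iIndepFun.measure_init_last_mem_eq_zero {n : ℕ}
    {X : Fin (n + 1) → Ω → E} (h : iIndepFun X μ) (hX : ∀ j, Measurable (X j))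
    {S : Set ((Fin n → E) × E)} (hS : MeasurableSet S)
    (hfib : ∀ y, μ.map (X (Fin.last n)) (Prod.mk y ⁻¹' S) = 0) :
    μ {ω | ((fun j => X (Fin.castSucc j) ω), X (Fin.last n) ω) ∈ S} = 0 := by
  have := h.isProbabilityMeasure
  exact (h.indepFun_init_last hX).measure_preimage_eq_zero_of_fibers
    (measurable_pi_lambda _ fun j => hX _) (hX _) hS hfib

end Independence

namespace LinFullRankDistribution

variable {d : ℕ} {Ω : Type*} [MeasurableSpace Ω] {μ : Measure Ω} {X : Ω → Fin d → ℝ}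

theorem map_id (h : LinFullRankDistribution μ X) (hX : Measurable X) :
    LinFullRankDistribution (μ.map X) id := fun a c ha => by
  rw [Measure.map_apply hX
    (measurableSet_eq_fun (continuous_const.dotProduct continuous_id).measurable measurable_const)]
  exact h a c ha

theorem smul_sub_const (h : LinFullRankDistribution μ X) {t : ℝ} (ht : t ≠ 0) (b : Fin d → ℝ) :
    LinFullRankDistribution μ (fun ω => t • X ω - b) := fun a c ha => by
  convert h (t • a) (c + a ⬝ᵥ b) (smul_ne_zero ht ha) using 2
  ext ω
  change a ⬝ᵥ (t • X ω - b) = c ↔ (t • a) ⬝ᵥ X ω = c + a ⬝ᵥ b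
  rw [dotProduct_sub, dotProduct_smul, smul_dotProduct, sub_eq_iff_eq_add]

variable {ν : Measure (Fin d → ℝ)}

theorem measure_eq_zero_of_finrank_lt (hν : LinFullRankDistribution ν id)
    {W : Submodule ℝ (Fin d → ℝ)} (hW : Module.finrank ℝ W < d) : ν W = 0 := by
  obtain ⟨a, ha, haW⟩ := W.exists_dotProduct_eq_zero_of_finrank_lt hW
  exact measure_mono_null (fun x hx => haW x hx) (hν a 0 ha)

theorem measure_smul_ofReal_sub_mem_eq_zero (hν : LinFullRankDistribution ν id)
    {W : Submodule ℂ (Fin d → ℂ)} (hW : Module.finrank ℂ W < d) {t : ℂ} (ht : t ≠ 0)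
    (b : Fin d → ℂ) : ν {x | t • (fun i => (x i : ℂ)) - b ∈ W} = 0 := by
  obtain ⟨a, ha, haW⟩ := W.exists_dotProduct_eq_zero_of_finrank_lt hW
  set w := a ⬝ᵥ b / t
  have hdot : ∀ x ∈ {x : Fin d → ℝ | t • (fun i => (x i : ℂ)) - b ∈ W},
      ∑ i, a i * x i = w := fun x hx => by
    have := haW _ hx
    rw [dotProduct_sub, dotProduct_smul, smul_eq_mul, sub_eq_zero] at this
    rw [eq_div_iff ht, ← this, mul_comm]
    rfl
  by_cases hre : (fun i => (a i).re) = 0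
  · have him : (fun i => (a i).im) ≠ 0 := fun him =>
      ha (funext fun i => Complex.ext (congrFun hre i) (congrFun him i))
    refine measure_mono_null (fun x hx => ?_) (hν _ w.im him)
    simpa [dotProduct, Complex.im_sum] using congrArg Complex.im (hdot x hx)
  · refine measure_mono_null (fun x hx => ?_) (hν _ w.re hre)
    simpa [dotProduct, Complex.re_sum] using congrArg Complex.re (hdot x hx)

theorem measure_exists_root_eq_zero {n : ℕ} (hν : LinFullRankDistribution ν id) {G : ℝ[X]}
    (hG : G ≠ 0) (hn : n < d) (t : ℂ → ℂ) (A : ℂ → Matrix (Fin d) (Fin n) ℂ) (b : ℂ → Fin d → ℂ) :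
    ν {x | ∃ z, t z ≠ 0 ∧ aeval z G = 0 ∧
      t z • (fun i => (x i : ℂ)) - b z ∈ span ℂ (range (A z).col)} = 0 := by
  have hsub : {x : Fin d → ℝ | ∃ z, t z ≠ 0 ∧ aeval z G = 0 ∧
      t z • (fun i => (x i : ℂ)) - b z ∈ span ℂ (range (A z).col)} ⊆
      ⋃ z ∈ (G.aroots ℂ).toFinset,
        {x | t z ≠ 0 ∧ t z • (fun i => (x i : ℂ)) - b z ∈ span ℂ (range (A z).col)} := by
    rintro x ⟨z, htz, hGz, hx⟩
    exact mem_biUnion (by simp [hG, hGz]) ⟨htz, hx⟩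
  refine measure_mono_null hsub
    ((measure_biUnion_null_iff (Finset.countable_toSet _)).2 fun z _ => ?_)
  by_cases htz : t z = 0
  · simp [htz]
  · exact measure_mono_null (fun x hx => hx.2) (hν.measure_smul_ofReal_sub_mem_eq_zero
      ((finrank_range_le_card _).trans_lt (by simpa using hn)) htz (b z))

end LinFullRankDistribution

theorem measure_not_linearIndependent_eq_zero {Ω : Type*} [MeasurableSpace Ω] {μ : Measure Ω}
    {n d : ℕ} (hn : n ≤ d) (X : Fin n → Ω → Fin d → ℝ) (hX : ∀ j, Measurable (X j))
    (hind : iIndepFun X μ) (hfull : ∀ j, LinFullRankDistribution μ (X j)) :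
    μ {ω | ¬ LinearIndependent ℝ (fun j => X j ω)} = 0 := by
  induction n with
  | zero => simp
  | succ n ih =>
    have hinit := ih (by omega) (fun j => X j.castSucc) (fun j => hX _)
      (hind.precomp (Fin.castSucc_injective n)) (fun j => hfull _)
    have hlast := hind.measure_init_last_mem_eq_zero hX measurableSet_mem_span_range fun y =>
      ((hfull _).map_id (hX _)).measure_eq_zero_of_finrank_lt
        ((finrank_range_le_card y).trans_lt (by simpa using hn))
    refine measure_mono_null (fun ω hω => ?_) (measure_union_null hinit hlast)
    rw [mem_ofPred_eq, ← Fin.snoc_init_self (fun j => X j ω), linearIndependent_finSnoc,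
      not_and_or, not_not] at hω
    exact hω

section NumeratorMatrix

variable {d : ℕ} {ι : Type*} (f : ℝ[X]) (N : Matrix (Fin d) ι ℝ[X])
  (x : ι → Fin d → ℝ)

/-- At `z` with `f z ≠ 0`, `(numeratorMatrix f N x).map (aeval z)` is `f z • (x - N z / f z)`, with
the columns of `x` as columns; clearing the denominator makes every entry polynomial in `z`. -/
noncomputable def numeratorMatrix : Matrix (Fin d) ι ℝ[X] :=
  Matrix.of fun i j => f * C (x j i) - N i j

@[simp]
theorem numeratorMatrix_map_aeval_apply (z : ℂ) (i : Fin d) (j : ι) :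
    (numeratorMatrix f N x).map (aeval z) i j = aeval z f * x j i - aeval z (N i j) := by
  simp [numeratorMatrix]

theorem continuous_numeratorMatrix_map_aeval :
    Continuous fun p : (ι → Fin d → ℝ) × ℂ => (numeratorMatrix f N p.1).map (aeval p.2) := by
  refine continuous_matrix fun i j => ?_
  simp only [numeratorMatrix_map_aeval_apply]
  fun_prop

variable [Fintype ι] [DecidableEq ι]

/-- Without complex conjugation, `det (Aᵀ A)` stays a polynomial in `z`. Its vanishing at `z` is
implied by, but does not imply, dependence of the columns at `z`. -/
noncomputable def gramDet : ℝ[X] :=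
  ((numeratorMatrix f N x)ᵀ * numeratorMatrix f N x).det

theorem aeval_gramDet (z : ℂ) :
    aeval z (gramDet f N x) =
      (((numeratorMatrix f N x).map (aeval z))ᵀ * (numeratorMatrix f N x).map (aeval z)).det := by
  rw [gramDet, AlgHom.map_det, AlgHom.mapMatrix_apply, Matrix.map_mul, transpose_map]

theorem continuous_aeval_gramDet :
    Continuous fun p : (ι → Fin d → ℝ) × ℂ => aeval p.2 (gramDet f N p.1) := by
  simp only [aeval_gramDet]
  have := continuous_numeratorMatrix_map_aeval f N
  fun_prop

variable {f N x}

theorem aeval_gramDet_eq_zero {z : ℂ}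
    (h : ¬ LinearIndependent ℂ ((numeratorMatrix f N x).map (aeval z)).col) :
    aeval z (gramDet f N x) = 0 := by
  rw [aeval_gramDet]
  exact det_transpose_mul_self_eq_zero h

theorem aeval_ofReal_gramDet_ne_zero {l : ℝ}
    (h : LinearIndependent ℝ fun j => eval l f • x j - fun i => eval l (N i j)) :
    aeval (l : ℂ) (gramDet f N x) ≠ 0 := by
  have hcol : ((numeratorMatrix f N x).map (eval l)).col =
      fun j => eval l f • x j - fun i => eval l (N i j) := by
    ext j i
    simp [numeratorMatrix]
  rw [← Complex.coe_algebraMap, aeval_algebraMap_apply_eq_algebraMap_eval, Complex.coe_algebraMap,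
    Complex.ofReal_ne_zero, gramDet, ← coe_evalRingHom, RingHom.map_det, RingHom.mapMatrix_apply,
    Matrix.map_mul, transpose_map]
  exact det_transpose_mul_self_ne_zero (hcol ▸ h)

theorem col_numeratorMatrix_snoc_map_aeval {n : ℕ} (N : Matrix (Fin d) (Fin (n + 1)) ℝ[X])
    (y : Fin n → Fin d → ℝ) (x : Fin d → ℝ) (z : ℂ) :
    ((numeratorMatrix f N (Fin.snoc y x)).map (aeval z)).col =
      Fin.snoc ((numeratorMatrix f (N.submatrix id Fin.castSucc) y).map (aeval z)).col
        (aeval z f • (fun i => (x i : ℂ)) - fun i => aeval z (N i (Fin.last n))) := by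
  ext j i
  refine Fin.lastCases ?_ (fun j => ?_) j <;> simp [numeratorMatrix]

end NumeratorMatrix

theorem rank_sub_div_eq_rank_numeratorMatrix {d : ℕ} {ι : Type*} [Fintype ι] {f : ℝ[X]}
    {N : Matrix (Fin d) ι ℝ[X]} {x : ι → Fin d → ℝ} {z : ℂ} (hz : aeval z f ≠ 0) :
    (Matrix.of fun i j => (x j i : ℂ) - aeval z (N i j) / aeval z f).rank =
      ((numeratorMatrix f N x).map (aeval z)).rank := by
  rw [← rank_smul_of_mem_nonZeroDivisors ((numeratorMatrix f N x).map (aeval z))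
    (mem_nonZeroDivisors_of_ne_zero (inv_ne_zero hz))]
  congr 1
  ext i j
  simp [numeratorMatrix]
  field_simp

section BadExtension

variable {n d : ℕ} (f : ℝ[X]) (N : Matrix (Fin d) (Fin (n + 1)) ℝ[X]) (l : ℝ)

/-- Pairs (first `n` columns, next column) where the next column drops into the span of the first
`n` at a root `z` of their Gram determinant. Nonvanishing at the real point `l` keeps that
determinant a nonzero polynomial, so only finitely many `z` are involved. -/
noncomputable def badExtension : Set ((Fin n → Fin d → ℝ) × (Fin d → ℝ)) :=
  {p : (Fin n → Fin d → ℝ) × (Fin d → ℝ) |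
    aeval (l : ℂ) (gramDet f (N.submatrix id Fin.castSucc) p.1) ≠ 0 ∧
    ∃ z : ℂ, aeval z f ≠ 0 ∧ aeval z (gramDet f (N.submatrix id Fin.castSucc) p.1) = 0 ∧
      aeval z f • (fun i => (p.2 i : ℂ)) - (fun i => aeval z (N i (Fin.last n))) ∈
        span ℂ (range ((numeratorMatrix f (N.submatrix id Fin.castSucc) p.1).map (aeval z)).col)}

theorem measurableSet_badExtension : MeasurableSet (badExtension f N l) := by
  have hG := continuous_aeval_gramDet f (N.submatrix id Fin.castSucc)
  have hA := continuous_numeratorMatrix_map_aeval f (N.submatrix id Fin.castSucc)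
  have h1 : MeasurableSet {p : (Fin n → Fin d → ℝ) × (Fin d → ℝ) |
      aeval (l : ℂ) (gramDet f (N.submatrix id Fin.castSucc) p.1) ≠ 0} :=
    (isOpen_ne_fun (hG.comp (continuous_fst.prodMk continuous_const))
      continuous_const).measurableSet
  have h2 := measurableSet_exists_mem_span_cols (X := (Fin n → Fin d → ℝ) × (Fin d → ℝ))
    (t := fun q => aeval q.2 f)
    (g := fun q => aeval q.2 (gramDet f (N.submatrix id Fin.castSucc) q.1.1))
    (A := fun q => (numeratorMatrix f (N.submatrix id Fin.castSucc) q.1.1).map (aeval q.2))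
    (v := fun q =>
      aeval q.2 f • (fun i => (q.1.2 i : ℂ)) - fun i => aeval q.2 (N i (Fin.last n)))
    (by fun_prop) (hG.comp (continuous_fst.fst.prodMk continuous_snd))
    (hA.comp (continuous_fst.fst.prodMk continuous_snd)) (by fun_prop)
  exact h1.inter h2

variable {f N l}

theorem measure_prodMk_preimage_badExtension_eq_zero {ν : Measure (Fin d → ℝ)}
    (hν : LinFullRankDistribution ν id) (hn : n < d) (y : Fin n → Fin d → ℝ) :
    ν (Prod.mk y ⁻¹' badExtension f N l) = 0 := by
  by_cases hy : aeval (l : ℂ) (gramDet f (N.submatrix id Fin.castSucc) y) = 0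
  · simp [badExtension, hy]
  · exact measure_mono_null (fun x hx => hx.2)
      (hν.measure_exists_root_eq_zero (G := gramDet f (N.submatrix id Fin.castSucc) y)
        (fun h => hy (by simp [h])) hn (fun z => aeval z f)
        (fun z => (numeratorMatrix f (N.submatrix id Fin.castSucc) y).map (aeval z))
        (fun z i => aeval z (N i (Fin.last n))))

theorem mk_mem_badExtension {y : Fin n → Fin d → ℝ} {x : Fin d → ℝ} {z : ℂ}
    (hl : aeval (l : ℂ) (gramDet f (N.submatrix id Fin.castSucc) y) ≠ 0) (hz : aeval z f ≠ 0)
    (hrank : ((numeratorMatrix f N (Fin.snoc y x)).map (aeval z)).rank + 1 < n + 1)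
    (hrank' : n ≤ ((numeratorMatrix f (N.submatrix id Fin.castSucc) y).map (aeval z)).rank + 1) :
    (y, x) ∈ badExtension f N l := by
  rw [rank_eq_finrank_span_cols, col_numeratorMatrix_snoc_map_aeval] at hrank
  rw [rank_eq_finrank_span_cols] at hrank'
  obtain ⟨hdep, hmem⟩ :=
    not_linearIndependent_and_mem_span_of_finrank_span_snoc_lt _ _ (Nat.lt_of_succ_lt_succ hrank)
      hrank'
  exact ⟨hl, z, hz, aeval_gramDet_eq_zero hdep, hmem⟩

end BadExtension

theorem measure_exists_rank_numeratorMatrix_add_one_lt_eq_zero {Ω : Type*} [MeasurableSpace Ω]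
    {μ : Measure Ω} {n d : ℕ} (hn : n ≤ d) (X : Fin n → Ω → Fin d → ℝ)
    (hX : ∀ j, Measurable (X j)) (hind : iIndepFun X μ)
    (hfull : ∀ j, LinFullRankDistribution μ (X j)) {f : ℝ[X]} (hf : f ≠ 0)
    (N : Matrix (Fin d) (Fin n) ℝ[X]) :
    μ {ω | ∃ z : ℂ, aeval z f ≠ 0 ∧
      ((numeratorMatrix f N fun j => X j ω).map (aeval z)).rank + 1 < n} = 0 := by
  obtain ⟨l, hl⟩ : ∃ l : ℝ, eval l f ≠ 0 :=
    (Polynomial.finite_setOfPred_isRoot hf).infinite_compl.nonempty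
  induction n with
  | zero => simp
  | succ n ih =>
    have hind' := hind.precomp (Fin.castSucc_injective n)
    have hprefix := ih (by omega) (fun j => X j.castSucc) (fun j => hX _) hind' (fun j => hfull _)
      (N.submatrix id Fin.castSucc)
    have hdep := measure_not_linearIndependent_eq_zero (by omega)
      (fun j ω => eval l f • X j.castSucc ω - fun i => eval l (N i j.castSucc))
      (fun j => by have := hX j.castSucc; fun_prop)
      (hind'.comp (fun j v => eval l f • v - fun i => eval l (N i j.castSucc)) fun j => by fun_prop)
      (fun j => (hfull _).smul_sub_const hl _)
    have hext := hind.measure_init_last_mem_eq_zero hX (measurableSet_badExtension f N l)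
      fun y => measure_prodMk_preimage_badExtension_eq_zero ((hfull _).map_id (hX _)) (by omega) y
    refine measure_mono_null (fun ω ⟨z, hz, hrank⟩ => ?_)
      (measure_union_null (measure_union_null hprefix hdep) hext)
    by_cases hrank' : ((numeratorMatrix f (N.submatrix id Fin.castSucc)
      fun j => X j.castSucc ω).map (aeval z)).rank + 1 < n
    · exact Or.inl (Or.inl ⟨z, hz, hrank'⟩)
    by_cases hli : LinearIndependent ℝ fun j : Fin n =>
      eval l f • X j.castSucc ω - fun i => eval l (N i j.castSucc)
    · rw [← Fin.snoc_init_self fun j => X j ω] at hrank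
      exact Or.inr (mk_mem_badExtension (aeval_ofReal_gramDet_ne_zero hli) hz hrank (by omega))
    · exact Or.inl (Or.inr hli)

theorem rank_deficiency_null_general {m : ℕ}
    {Ω : Type*} [MeasurableSpace Ω] (μ : Measure Ω)
    (Y : Fin m → Ω → (Fin m → ℝ))
    (hmeas : ∀ j : Fin m, Measurable (Y j))
    (hindep : iIndepFun Y μ)
    (hfull : ∀ j : Fin m, LinFullRankDistribution μ (Y j))
    (M : Matrix (Fin m) (Fin m) (Polynomial ℝ)) (f : Polynomial ℝ) (hf : f ≠ 0) :
    μ {ω | ∃ lam : ℂ, Polynomial.aeval lam f ≠ 0 ∧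
        (Matrix.of fun i j : Fin m =>
            ((Y j ω i : ℝ) : ℂ)
              - Polynomial.aeval lam (M i j) / Polynomial.aeval lam f).rank
          < m - 1} = 0 := by
  refine measure_mono_null ?_
    (measure_exists_rank_numeratorMatrix_add_one_lt_eq_zero le_rfl Y hmeas hindep hfull hf M)
  rintro ω ⟨z, hz, hrank⟩
  refine ⟨z, hz, ?_⟩
  rw [← rank_sub_div_eq_rank_numeratorMatrix hz]
  omega

/-- if `Y = [Y₁, …, Y_m]` has independent columns with linearly full rank
distributions, `M(λ)` has polynomial entries and `f ≠ 0` is a real polynomial, then almost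
surely there is no `λ ∈ ℂ` with `f(λ) ≠ 0` and `rank_ℂ(Y - M(λ)/f(λ)) < m - 1`. -/
theorem rank_deficiency_null {m : ℕ}
    {Ω : Type*} [MeasurableSpace Ω] (μ : Measure Ω) [IsProbabilityMeasure μ]
    (Y : Fin m → Ω → (Fin m → ℝ))
    (hmeas : ∀ j : Fin m, Measurable (Y j))
    (hindep : iIndepFun Y μ)
    (hfull : ∀ j : Fin m, LinFullRankDistribution μ (Y j))
    (M : Matrix (Fin m) (Fin m) (Polynomial ℝ)) (f : Polynomial ℝ) (hf : f ≠ 0) :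
    μ {ω | ∃ lam : ℂ, Polynomial.aeval lam f ≠ 0 ∧
        (Matrix.of fun i j : Fin m =>
            ((Y j ω i : ℝ) : ℂ)
              - Polynomial.aeval lam (M i j) / Polynomial.aeval lam f).rank
          < m - 1} = 0 :=
  rank_deficiency_null_general μ Y hmeas hindep hfull M f hf
end

section
/- Assume [A₀,B₀] is stabilizable, A₀ ∈ ℝ^{p×p}, B₀ ∈ ℝ^{p×r}. Then the set { L ∈ ℝ^{r×p} : A₀ + B₀L has a complex eigenvalue λ with |λ| = 1 } has Lebesgue measure zero in ℝ^{r×p}. -/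
open Matrix MeasureTheory

/-!
Over `ℂ`, `Φ(M) = det (charpolyRev M)(M)` equals `∏ᵢⱼ (1 - λᵢλⱼ)` over the eigenvalues of `M`,
so it vanishes exactly when two eigenvalues have product `1`. For a real `M` with an eigenvalue
`λ` on the unit circle, `conj λ = λ⁻¹` is an eigenvalue as well, so `Φ(M) = 0`; for a stable `M`
all `|λᵢλⱼ| < 1`, so `Φ(M) ≠ 0`. Hence `L ↦ Φ(A₀ + B₀L)` is a polynomial in the entries of `L`
which does not vanish at a stabilizing `L₀`, and the zero set of a nonzero real polynomial is
Lebesgue-null: by Fubini, for almost every value of the other variables some coefficient in the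
first variable is nonzero, and a nonzero univariate polynomial has finitely many roots.
-/

theorem MeasureTheory.volume_measurePreserving_uncurry (ι κ X : Type*) [Fintype ι] [Fintype κ]
    [MeasureSpace X] [SigmaFinite (volume : Measure X)] :
    MeasurePreserving (MeasurableEquiv.curry ι κ X).symm volume volume := by
  refine ⟨(MeasurableEquiv.curry ι κ X).symm.measurable, (Measure.pi_eq fun s _ => ?_).symm⟩
  have hpre : (MeasurableEquiv.curry ι κ X).symm ⁻¹' Set.univ.pi s
      = Set.univ.pi fun i => Set.univ.pi fun j => s (i, j) := by
    ext L
    simp [MeasurableEquiv.coe_curry_symm]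
  rw [MeasurableEquiv.map_apply, hpre, volume_pi_pi]
  simp_rw [volume_pi_pi]
  rw [Fintype.prod_prod_type]

namespace MvPolynomial

theorem measurableSet_setOf_eval_eq_zero {σ : Type*} [Countable σ] (P : MvPolynomial σ ℝ) :
    MeasurableSet {x : σ → ℝ | eval x P = 0} :=
  measurableSet_eq_fun (continuous_eval P).measurable measurable_const

theorem volume_setOf_eval_eq_zero_fin :
    ∀ {n : ℕ} {P : MvPolynomial (Fin n) ℝ}, P ≠ 0 → volume {x : Fin n → ℝ | eval x P = 0} = 0
  | 0, P, hP => by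
    obtain ⟨c, rfl⟩ := C_surjective (Fin 0) P
    have hc : c ≠ 0 := by rintro rfl; exact hP C_0
    simp [hc]
  | n + 1, P, hP => by
    set Q := finSuccEquiv ℝ n P
    obtain ⟨k, hk⟩ : ∃ k, Q.coeff k ≠ 0 := by
      by_contra! h
      exact hP ((finSuccEquiv ℝ n).map_eq_zero_iff.mp (Polynomial.ext h))
    let e : (Fin (n + 1) → ℝ) ≃ᵐ (Fin n → ℝ) × ℝ :=
      (MeasurableEquiv.piFinSuccAbove (fun _ => ℝ) 0).trans MeasurableEquiv.prodComm
    have he : MeasurePreserving e volume volume :=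
      Measure.measurePreserving_swap.comp (volume_preserving_piFinSuccAbove (fun _ => ℝ) 0)
    have he_symm (t : Fin n → ℝ) (y : ℝ) : e.symm (t, y) = Fin.cons y t := by
      simp [e]
      rfl
    rw [← he.symm.measure_preimage_equiv, Measure.volume_eq_prod,
      Measure.measure_prod_null ((measurableSet_setOf_eval_eq_zero P).preimage e.symm.measurable)]
    have hgood : ∀ᵐ t : Fin n → ℝ, eval t (Q.coeff k) ≠ 0 := by
      simpa [ae_iff] using volume_setOf_eval_eq_zero_fin hk
    filter_upwards [hgood] with t ht
    have hQt : Q.map (eval t) ≠ 0 := fun h => ht (by simpa using congrArg (·.coeff k) h)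
    have hfiber :
        Prod.mk t ⁻¹' (e.symm ⁻¹' {x | eval x P = 0}) = {y | (Q.map (eval t)).IsRoot y} := by
      ext y
      simp [he_symm, Q, eval_eq_eval_mv_eval']
    rw [Pi.zero_apply, hfiber]
    exact (Polynomial.finite_setOfPred_isRoot hQt).measure_zero volume

theorem volume_setOf_eval_eq_zero {σ : Type*} [Fintype σ] {P : MvPolynomial σ ℝ} (hP : P ≠ 0) :
    volume {x : σ → ℝ | eval x P = 0} = 0 := by
  let e := Fintype.equivFin σ
  have hmp := volume_measurePreserving_piCongrLeft (fun _ : σ => ℝ) e.symm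
  have hpre : MeasurableEquiv.piCongrLeft (fun _ => ℝ) e.symm ⁻¹' {x | eval x P = 0}
      = {y | eval y (rename e P) = 0} := by
    ext y
    have : MeasurableEquiv.piCongrLeft (fun _ => ℝ) e.symm y = y ∘ e := by
      funext x
      simp [MeasurableEquiv.coe_piCongrLeft, Equiv.piCongrLeft_apply_eq_cast]
    simp [eval_rename, this]
  rw [← hmp.measure_preimage_equiv, hpre]
  exact volume_setOf_eval_eq_zero_fin
    ((rename_injective e e.injective).ne_iff' (map_zero _) |>.2 hP)

theorem volume_setOf_eval_uncurry_eq_zero {ι κ : Type*} [Fintype ι] [Fintype κ]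
    {P : MvPolynomial (ι × κ) ℝ} (hP : P ≠ 0) :
    volume {L : ι → κ → ℝ | eval (Function.uncurry L) P = 0} = 0 := by
  rw [← volume_setOf_eval_eq_zero hP]
  exact (volume_measurePreserving_uncurry ι κ ℝ).measure_preimage_equiv {x | eval x P = 0}

end MvPolynomial

open Polynomial

namespace Matrix

variable {n : Type*} [Fintype n] [DecidableEq n]

theorem charpolyRev_map {R S : Type*} [CommRing R] [CommRing S] (f : R →+* S) (M : Matrix n n R) :
    (M.map f).charpolyRev = M.charpolyRev.map f := by
  simp only [charpolyRev, ← coe_mapRingHom, RingHom.map_det, RingHom.mapMatrix_apply]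
  congr 1
  ext i j
  by_cases h : i = j <;> simp [h]

theorem det_aeval_eq_zero_iff {K : Type*} [Field K] [IsAlgClosed K] (M : Matrix n n K) (q : K[X]) :
    (aeval M q).det = 0 ↔ ∃ μ, M.charpoly.IsRoot μ ∧ q.IsRoot μ := by
  cases isEmpty_or_nonempty n
  · simp [charpoly]
  rw [← not_not (a := _ = 0), ← ne_eq, ← isUnit_iff_ne_zero, ← isUnit_iff_isUnit_det,
    ← spectrum.zero_mem_iff K, spectrum.map_polynomial_aeval_of_nonempty _ _
      (spectrum.nonempty_of_isAlgClosed_of_finiteDimensional K M)]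
  simp [mem_spectrum_iff_isRoot_charpoly, IsRoot]

theorem isRoot_charpolyRev_iff {K : Type*} [Field K] (M : Matrix n n K) {μ : K} (hμ : μ ≠ 0) :
    M.charpolyRev.IsRoot μ ↔ M.charpoly.IsRoot μ⁻¹ := by
  have := invertibleOfNonzero (inv_ne_zero hμ)
  have h := eval₂_reverse_eq_zero_iff (RingHom.id K) μ⁻¹ M.charpoly
  rwa [invOf_eq_inv, inv_inv, reverse_charpoly] at h

noncomputable def detAevalCharpolyRev {R : Type*} [CommRing R] (M : Matrix n n R) : R :=
  (aeval M M.charpolyRev).det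

theorem map_detAevalCharpolyRev {R S : Type*} [CommRing R] [CommRing S] (f : R →+* S)
    (M : Matrix n n R) : f M.detAevalCharpolyRev = (M.map f).detAevalCharpolyRev := by
  have hf :
      (algebraMap S (Matrix n n S)).comp f = f.mapMatrix.comp (algebraMap R (Matrix n n R)) := by
    ext r i j
    by_cases h : i = j <;> simp [algebraMap_matrix_apply, h]
  rw [detAevalCharpolyRev, detAevalCharpolyRev, RingHom.map_det, map_aeval_eq_aeval_map hf,
    charpolyRev_map, RingHom.mapMatrix_apply]

theorem detAevalCharpolyRev_eq_zero_iff {K : Type*} [Field K] [IsAlgClosed K] (M : Matrix n n K) :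
    M.detAevalCharpolyRev = 0 ↔ ∃ μ ν, M.charpoly.IsRoot μ ∧ M.charpoly.IsRoot ν ∧ μ * ν = 1 := by
  rw [detAevalCharpolyRev, det_aeval_eq_zero_iff]
  constructor
  · rintro ⟨μ, hμ, hrev⟩
    have hμ0 : μ ≠ 0 := by
      rintro rfl
      simp [IsRoot] at hrev
    exact ⟨μ, μ⁻¹, hμ, (M.isRoot_charpolyRev_iff hμ0).1 hrev, mul_inv_cancel₀ hμ0⟩
  · rintro ⟨μ, ν, hμ, hν, hμν⟩
    have hμ0 : μ ≠ 0 := left_ne_zero_of_mul_eq_one hμν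
    rw [eq_inv_of_mul_eq_one_right hμν] at hν
    exact ⟨μ, hμ, (M.isRoot_charpolyRev_iff hμ0).2 hν⟩

theorem isRoot_charpoly_map_conj (D : Matrix n n ℝ) {μ : ℂ}
    (h : (D.map (algebraMap ℝ ℂ)).charpoly.IsRoot μ) :
    (D.map (algebraMap ℝ ℂ)).charpoly.IsRoot (starRingEnd ℂ μ) := by
  rw [charpoly_map, IsRoot, eval_map_algebraMap] at h ⊢
  rw [aeval_conj, h, map_zero]

theorem detAevalCharpolyRev_eq_zero_of_norm_eq_one (D : Matrix n n ℝ) {μ : ℂ} (hμ : ‖μ‖ = 1)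
    (h : (D.map (algebraMap ℝ ℂ)).charpoly.IsRoot μ) : D.detAevalCharpolyRev = 0 := by
  refine (map_eq_zero (algebraMap ℝ ℂ)).mp ?_
  rw [map_detAevalCharpolyRev, detAevalCharpolyRev_eq_zero_iff]
  refine ⟨μ, starRingEnd ℂ μ, h, D.isRoot_charpoly_map_conj h, ?_⟩
  rw [Complex.mul_conj, Complex.normSq_eq_norm_sq, hμ, one_pow, Complex.ofReal_one]

end Matrix

theorem SpecRadiusLtOne.detAevalCharpolyRev_ne_zero {p : ℕ} {D : Matrix (Fin p) (Fin p) ℝ}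
    (hD : SpecRadiusLtOne D) : D.detAevalCharpolyRev ≠ 0 := by
  rw [← (map_ne_zero (algebraMap ℝ ℂ)), map_detAevalCharpolyRev, Ne,
    detAevalCharpolyRev_eq_zero_iff]
  rintro ⟨μ, ν, hμ, hν, hμν⟩
  have h := congrArg norm hμν
  rw [norm_mul, norm_one] at h
  nlinarith [hD μ hμ, hD ν hν, norm_nonneg μ, norm_nonneg ν]

/-- for a stabilizable pair `[A₀, B₀]`, the set of feedback matrices `L` for
which `A₀ + B₀L` has an eigenvalue on the unit circle is Lebesgue-null. -/
theorem unit_eigenvalue_set_null {p r : ℕ}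
    (A₀ : Matrix (Fin p) (Fin p) ℝ) (B₀ : Matrix (Fin p) (Fin r) ℝ)
    (hstab : Stabilizable A₀ B₀) :
    volume {L : Fin r → Fin p → ℝ | ∃ lam : ℂ, ‖lam‖ = 1 ∧
      (((A₀ + B₀ * Matrix.of L).map (algebraMap ℝ ℂ)).charpoly).IsRoot lam} = 0 := by
  obtain ⟨L₀, hL₀⟩ := hstab
  let C := MvPolynomial.C (σ := Fin r × Fin p) (R := ℝ)
  let N := A₀.map C + B₀.map C * mvPolynomialX (Fin r) (Fin p) ℝ
  have hN (L : Fin r → Fin p → ℝ) : MvPolynomial.eval (Function.uncurry L) N.detAevalCharpolyRev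
      = (A₀ + B₀ * Matrix.of L).detAevalCharpolyRev := by
    rw [map_detAevalCharpolyRev]
    congr 1
    ext i j
    simp [N, C, Matrix.mul_apply]
  have hN0 : N.detAevalCharpolyRev ≠ 0 := fun h =>
    hL₀.detAevalCharpolyRev_ne_zero ((hN L₀).symm.trans (by rw [h, map_zero]))
  refine measure_mono_null ?_ (MvPolynomial.volume_setOf_eval_uncurry_eq_zero hN0)
  rintro L ⟨μ, hμ, hroot⟩
  show MvPolynomial.eval _ _ = 0
  rw [hN]
  exact detAevalCharpolyRev_eq_zero_of_norm_eq_one _ hμ hroot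
end

section
/- Let Q ∈ ℝ^{p×p} be positive semidefinite, R ∈ ℝ^{r×r} positive definite, A ∈ ℝ^{p×p}, B ∈ ℝ^{p×r}, and P ∈ ℝ^{p×p} positive semidefinite. Then for every L ∈ ℝ^{r×p}, in the Loewner (positive semidefinite) order: Q + AᵀPA − AᵀPB(BᵀPB+R)^{-1}BᵀPA ≼ Q + LᵀRL + (A+BL)ᵀP(A+BL). -/
open Matrix

/-- for positive semidefinite `Q`, `P` and positive definite `R`, the Riccati
map value is below `Q + LᵀRL + (A+BL)ᵀP(A+BL)` for every `L`, in the Loewner order. -/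
theorem riccati_map_le_policy_evaluation {p r : ℕ}
    (Q : Matrix (Fin p) (Fin p) ℝ) (R : Matrix (Fin r) (Fin r) ℝ)
    (A : Matrix (Fin p) (Fin p) ℝ) (B : Matrix (Fin p) (Fin r) ℝ)
    (P : Matrix (Fin p) (Fin p) ℝ)
    (hQ : Q.PosSemidef) (hR : R.PosDef) (hP : P.PosSemidef)
    (L : Matrix (Fin r) (Fin p) ℝ) :
    (Q + Lᵀ * R * L + (A + B * L)ᵀ * P * (A + B * L)
      - (Q + Aᵀ * P * A - Aᵀ * P * B * (Bᵀ * P * B + R)⁻¹ * (Bᵀ * P * A))).PosSemidef := by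
  set S := Bᵀ * P * B + R with hSdef
  have h1 : (Bᵀ * P * B).PosSemidef := by
    simpa using hP.conjTranspose_mul_mul_same B
  have hS : S.PosDef := Matrix.PosDef.posSemidef_add h1 hR
  have hSinv : IsUnit S.det := hS.det_pos.ne'.isUnit
  have hPsymm : Pᵀ = P := hP.isHermitian.eq
  have hRsymm : Rᵀ = R := hR.isHermitian.eq
  have hSsymm : Sᵀ = S := by
    rw [hSdef, Matrix.transpose_add, Matrix.transpose_mul, Matrix.transpose_mul,
      Matrix.transpose_transpose, hPsymm, hRsymm, Matrix.mul_assoc]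
  have hSinvsymm : (S⁻¹)ᵀ = S⁻¹ := by
    rw [Matrix.transpose_nonsing_inv, hSsymm]
  have hinvS : S⁻¹ * S = 1 := Matrix.nonsing_inv_mul S hSinv
  have hSinvS : S * S⁻¹ = 1 := Matrix.mul_nonsing_inv S hSinv
  have cancel1 : ∀ X : Matrix (Fin r) (Fin p) ℝ, S⁻¹ * (S * X) = X := fun X => by
    rw [← Matrix.mul_assoc, hinvS, Matrix.one_mul]
  have cancel2 : ∀ X : Matrix (Fin r) (Fin p) ℝ, S * (S⁻¹ * X) = X := fun X => by
    rw [← Matrix.mul_assoc, hSinvS, Matrix.one_mul]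
  set M := L + S⁻¹ * (Bᵀ * P * A) with hMdef
  have key : Q + Lᵀ * R * L + (A + B * L)ᵀ * P * (A + B * L)
      - (Q + Aᵀ * P * A - Aᵀ * P * B * S⁻¹ * (Bᵀ * P * A)) = Mᵀ * S * M := by
    rw [hMdef]
    simp only [Matrix.transpose_add, Matrix.transpose_mul, hSinvsymm, hPsymm,
      Matrix.transpose_transpose]
    simp only [Matrix.add_mul, Matrix.mul_add, Matrix.mul_assoc, cancel1, cancel2]
    rw [hSdef]
    simp only [Matrix.add_mul, Matrix.mul_add, Matrix.mul_assoc]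
    abel
  rw [key]
  simpa using hS.posSemidef.conjTranspose_mul_mul_same M
end

section
/- Let Q ∈ ℝ^{p×p} be positive definite, R ∈ ℝ^{r×r} positive definite, A ∈ ℝ^{p×p}, B ∈ ℝ^{p×r}. Define the Riccati iterates P₀ = 0 and P_{t+1} = Q + AᵀP_tA − AᵀP_tB(BᵀP_tB+R)^{-1}BᵀP_tA for t ≥ 0. Then for every t ≥ 0, P_t ≼ P_{t+1} in the Loewner order; in particular every P_t is positive semidefinite. -/
open Matrix

lemma riccati_square_id {p r : ℕ}
    (Q P A : Matrix (Fin p) (Fin p) ℝ) (R : Matrix (Fin r) (Fin r) ℝ)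
    (B : Matrix (Fin p) (Fin r) ℝ)
    (M N : Matrix (Fin r) (Fin r) ℝ) (K : Matrix (Fin r) (Fin p) ℝ)
    (hP : Pᵀ = P) (hN : Nᵀ = N) (hM : M = Bᵀ * P * B + R)
    (hMN : ∀ X : Matrix (Fin r) (Fin p) ℝ, M * (N * X) = X)
    (hNM : ∀ X : Matrix (Fin r) (Fin p) ℝ, N * (M * X) = X) :
    Q + Kᵀ * R * K + (A - B * K)ᵀ * P * (A - B * K)
      = (Q + Aᵀ * P * A - Aᵀ * P * B * N * (Bᵀ * P * A))
        + (K - N * (Bᵀ * P * A))ᵀ * M * (K - N * (Bᵀ * P * A)) := by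
  simp only [Matrix.transpose_sub, Matrix.transpose_mul, Matrix.transpose_transpose, hP, hN,
    Matrix.mul_assoc, Matrix.sub_mul, Matrix.mul_sub]
  simp only [hMN, hNM]
  subst hM
  simp only [Matrix.add_mul, Matrix.mul_add, Matrix.sub_mul, Matrix.mul_sub, Matrix.mul_assoc]
  abel

lemma psd_conj {m n : ℕ} {S : Matrix (Fin m) (Fin m) ℝ} (hS : S.PosSemidef)
    (X : Matrix (Fin m) (Fin n) ℝ) : (Xᵀ * S * X).PosSemidef := by
  have := hS.conjTranspose_mul_mul_same X
  rwa [conjTranspose_eq_transpose_of_trivial] at this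

lemma herm_transpose {n : ℕ} {M : Matrix (Fin n) (Fin n) ℝ} (h : M.IsHermitian) : Mᵀ = M := by
  rw [← conjTranspose_eq_transpose_of_trivial]; exact h

/-- the Riccati iterates started at `P₀ = 0` are nondecreasing in the Loewner
order; in particular every iterate is positive semidefinite. -/
theorem riccati_iterates_monotone {p r : ℕ}
    (Q : Matrix (Fin p) (Fin p) ℝ) (R : Matrix (Fin r) (Fin r) ℝ)
    (A : Matrix (Fin p) (Fin p) ℝ) (B : Matrix (Fin p) (Fin r) ℝ)
    (hQ : Q.PosDef) (hR : R.PosDef)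
    (P : ℕ → Matrix (Fin p) (Fin p) ℝ)
    (hP0 : P 0 = 0)
    (hPrec : ∀ t : ℕ, P (t + 1)
      = Q + Aᵀ * P t * A - Aᵀ * P t * B * (Bᵀ * P t * B + R)⁻¹ * (Bᵀ * P t * A)) :
    ∀ t : ℕ, (P (t + 1) - P t).PosSemidef ∧ (P t).PosSemidef := by
  -- facts about the matrix M(P) = BᵀPB + R for P PSD
  have hMfact : ∀ S : Matrix (Fin p) (Fin p) ℝ, S.PosSemidef →
      (Bᵀ * S * B + R).PosDef ∧ ((Bᵀ * S * B + R)⁻¹)ᵀ = (Bᵀ * S * B + R)⁻¹ ∧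
      (∀ X : Matrix (Fin r) (Fin p) ℝ, (Bᵀ * S * B + R) * ((Bᵀ * S * B + R)⁻¹ * X) = X) ∧
      (∀ X : Matrix (Fin r) (Fin p) ℝ, (Bᵀ * S * B + R)⁻¹ * ((Bᵀ * S * B + R) * X) = X) := by
    intro S hS
    have hpsd : (Bᵀ * S * B).PosSemidef := psd_conj hS B
    have hM : (Bᵀ * S * B + R).PosDef := Matrix.PosDef.posSemidef_add hpsd hR
    have hdet : IsUnit (Bᵀ * S * B + R).det := isUnit_iff_ne_zero.mpr hM.det_pos.ne'
    refine ⟨hM, herm_transpose hM.inv.isHermitian, fun X => ?_, fun X => ?_⟩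
    · rw [← Matrix.mul_assoc, Matrix.mul_nonsing_inv _ hdet, Matrix.one_mul]
    · rw [← Matrix.mul_assoc, Matrix.nonsing_inv_mul _ hdet, Matrix.one_mul]
  intro t
  induction t with
  | zero =>
    have h1 : P 1 = Q := by
      rw [hPrec 0, hP0]; simp
    refine ⟨?_, by rw [hP0]; exact Matrix.PosSemidef.zero⟩
    rw [h1, hP0, sub_zero]; exact hQ.posSemidef
  | succ t ih =>
    obtain ⟨h1, h2⟩ := ih
    have hPt1 : (P (t + 1)).PosSemidef := by
      have := h1.add h2
      rwa [sub_add_cancel] at this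
    refine ⟨?_, hPt1⟩
    -- notation
    obtain ⟨hM1, hN1, hMN1, hNM1⟩ := hMfact (P t) h2
    obtain ⟨hM2, hN2, hMN2, hNM2⟩ := hMfact (P (t + 1)) hPt1
    set M₁ := Bᵀ * P t * B + R with hM1def
    set M₂ := Bᵀ * P (t + 1) * B + R with hM2def
    set K₂ := M₂⁻¹ * (Bᵀ * P (t + 1) * A) with hK2def
    set K₁ := M₁⁻¹ * (Bᵀ * P t * A) with hK1def
    set C := A - B * K₂ with hCdef
    clear_value C K₁ K₂ M₂ M₁
    -- completion of square at P (t+1), with its own optimal gain K₂: square term vanishes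
    have e2 : P (t + 1 + 1) = Q + K₂ᵀ * R * K₂ + Cᵀ * P (t + 1) * C := by
      rw [hPrec (t + 1), ← hM2def]
      have := riccati_square_id Q (P (t + 1)) A R B M₂ M₂⁻¹ K₂
        (herm_transpose hPt1.isHermitian) hN2 hM2def hMN2 hNM2
      rw [hK2def, sub_self] at this
      simp only [Matrix.transpose_zero, Matrix.zero_mul, Matrix.mul_zero, add_zero] at this
      rw [← this, hCdef, hK2def]
    -- completion of square at P t, evaluated at K₂
    have e1 : Q + K₂ᵀ * R * K₂ + Cᵀ * P t * C
        = P (t + 1) + (K₂ - K₁)ᵀ * M₁ * (K₂ - K₁) := by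
      have := riccati_square_id Q (P t) A R B M₁ M₁⁻¹ K₂
        (herm_transpose h2.isHermitian) hN1 hM1def hMN1 hNM1
      rw [hCdef, this, hPrec t, ← hM1def, ← hK1def]
    -- difference is a sum of two PSD matrices
    have hdiff : P (t + 1 + 1) - P (t + 1)
        = Cᵀ * (P (t + 1) - P t) * C + (K₂ - K₁)ᵀ * M₁ * (K₂ - K₁) := by
      have expand : Cᵀ * (P (t + 1) - P t) * C = Cᵀ * P (t + 1) * C - Cᵀ * P t * C := by
        rw [Matrix.mul_sub, Matrix.sub_mul]
      have e1' : P (t + 1)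
          = (Q + K₂ᵀ * R * K₂ + Cᵀ * P t * C) - (K₂ - K₁)ᵀ * M₁ * (K₂ - K₁) := by
        rw [e1]; abel
      rw [expand, e2, e1']
      abel
    rw [hdiff]
    exact (psd_conj h1 C).add (psd_conj hM1.posSemidef (K₂ - K₁))
end

section
/- Let Q ∈ ℝ^{p×p} and R ∈ ℝ^{r×r} be positive definite, and suppose L ∈ ℝ^{r×p} is such that D = A + BL has spectral radius less than 1. Define the Riccati iterates P₀ = 0 and P_{t+1} = Q + AᵀP_tA − AᵀP_tB(BᵀP_tB+R)^{-1}BᵀP_tA. Then for every T ≥ 0, P_T ≼ Σ_{t=0}^{T−1} (Dᵀ)ᵗ (Q + LᵀRL) Dᵗ in the Loewner order; consequently the sequence {P_T} is bounded above by the convergent series Σ_{t=0}^{∞} (Dᵀ)ᵗ (Q + LᵀRL) Dᵗ. -/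
/-!
Completing the square in `K` shows that the Riccati map is the minimum, in the Loewner order,
of the one-step cost `Q + KᵀRK + (A + BK)ᵀP(A + BK)` of the feedback `u = Kx` over all gains
`K`, attained at `K = -(BᵀPB + R)⁻¹BᵀPA`. Hence the iterates stay positive semidefinite, and
playing the fixed gain `L` at every step can only cost more: by induction `P_T` lies below the
`T`-step cost `∑_{t<T} (Dᵀ)ᵗ(Q + LᵀRL)Dᵗ` of `L`. The series converges because, by Gelfand's
formula, `‖Dᵗ‖ ≤ rᵗ` eventually for some `r < 1`.
-/

open Matrix

open Filter
open scoped NNReal ENNReal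

theorem Matrix.PosSemidef.transpose_mul_mul_same {m n : Type*} [Fintype m] [Fintype n]
    {P : Matrix m m ℝ} (hP : P.PosSemidef) (B : Matrix m n ℝ) : (Bᵀ * P * B).PosSemidef := by
  simpa only [conjTranspose_eq_transpose_of_trivial] using hP.conjTranspose_mul_mul_same B

theorem Matrix.sum_range_succ_transpose_pow_mul_mul_pow {n α : Type*} [Fintype n]
    [DecidableEq n] [Semiring α] (D M : Matrix n n α) (T : ℕ) :
    ∑ t ∈ Finset.range (T + 1), (Dᵀ) ^ t * M * D ^ t =
      M + Dᵀ * (∑ t ∈ Finset.range T, (Dᵀ) ^ t * M * D ^ t) * D := by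
  rw [Finset.sum_range_succ', add_comm]
  simp only [pow_zero, Matrix.one_mul, Matrix.mul_one, Finset.mul_sum, Finset.sum_mul]
  congr 1
  refine Finset.sum_congr rfl fun t _ => ?_
  rw [pow_succ', pow_succ]
  simp only [Matrix.mul_assoc]

section Riccati

variable {m n : Type*} [Fintype m] [Fintype n]
  (Q : Matrix m m ℝ) (R : Matrix n n ℝ) (A : Matrix m m ℝ) (B : Matrix m n ℝ)

noncomputable def riccati [DecidableEq n] (P : Matrix m m ℝ) : Matrix m m ℝ :=
  Q + Aᵀ * P * A - Aᵀ * P * B * (Bᵀ * P * B + R)⁻¹ * (Bᵀ * P * A)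

def feedbackCost (K : Matrix n m ℝ) (P : Matrix m m ℝ) : Matrix m m ℝ :=
  Q + Kᵀ * R * K + (A + B * K)ᵀ * P * (A + B * K)

variable {Q R A B}

theorem feedbackCost_sub_riccati [DecidableEq n] {P : Matrix m m ℝ} (hP : Pᵀ = P)
    (hR : Rᵀ = R) (hG : IsUnit (Bᵀ * P * B + R).det) (K : Matrix n m ℝ) :
    feedbackCost Q R A B K P - riccati Q R A B P =
      (K + (Bᵀ * P * B + R)⁻¹ * (Bᵀ * P * A))ᵀ * (Bᵀ * P * B + R) *
        (K + (Bᵀ * P * B + R)⁻¹ * (Bᵀ * P * A)) := by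
  set G := Bᵀ * P * B + R with hGdef
  have hGt : Gᵀ = G := by simp [G, transpose_mul, hP, hR, Matrix.mul_assoc]
  calc feedbackCost Q R A B K P - riccati Q R A B P
      = Kᵀ * G * K + Kᵀ * (Bᵀ * P * A) + Aᵀ * P * B * K +
          Aᵀ * P * B * G⁻¹ * (Bᵀ * P * A) := by
        simp only [feedbackCost, riccati, hGdef, transpose_add, transpose_mul, Matrix.add_mul,
          Matrix.mul_add, Matrix.mul_assoc]
        abel
    _ = _ := by
        simp only [transpose_add, transpose_mul, transpose_transpose, transpose_nonsing_inv, hGt,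
          hP, Matrix.add_mul, Matrix.mul_add, Matrix.mul_assoc, mul_nonsing_inv_cancel_left _ _ hG,
          nonsing_inv_mul_cancel_left _ _ hG]
        abel

theorem posSemidef_feedbackCost_sub_riccati [DecidableEq n] (hR : R.PosDef) {P : Matrix m m ℝ}
    (hP : P.PosSemidef) (K : Matrix n m ℝ) :
    (feedbackCost Q R A B K P - riccati Q R A B P).PosSemidef := by
  have hG : (Bᵀ * P * B + R).PosDef := PosDef.posSemidef_add (hP.transpose_mul_mul_same B) hR
  rw [feedbackCost_sub_riccati (isHermitian_iff_isSymm.mp hP.isHermitian).eq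
    (isHermitian_iff_isSymm.mp hR.isHermitian).eq hG.det_pos.ne'.isUnit]
  exact hG.posSemidef.transpose_mul_mul_same _

theorem riccati_eq_feedbackCost [DecidableEq n] (hR : R.PosDef) {P : Matrix m m ℝ}
    (hP : P.PosSemidef) :
    riccati Q R A B P = feedbackCost Q R A B (-((Bᵀ * P * B + R)⁻¹ * (Bᵀ * P * A))) P := by
  have hG : (Bᵀ * P * B + R).PosDef := PosDef.posSemidef_add (hP.transpose_mul_mul_same B) hR
  rw [eq_comm, ← sub_eq_zero, feedbackCost_sub_riccati
    (isHermitian_iff_isSymm.mp hP.isHermitian).eq (isHermitian_iff_isSymm.mp hR.isHermitian).eq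
    hG.det_pos.ne'.isUnit, neg_add_cancel, transpose_zero, Matrix.zero_mul, Matrix.zero_mul]

theorem posSemidef_feedbackCost (hQ : Q.PosSemidef) (hR : R.PosSemidef) {P : Matrix m m ℝ}
    (hP : P.PosSemidef) (K : Matrix n m ℝ) : (feedbackCost Q R A B K P).PosSemidef :=
  (hQ.add (hR.transpose_mul_mul_same K)).add (hP.transpose_mul_mul_same _)

theorem posSemidef_riccati_iterate [DecidableEq n] (hQ : Q.PosSemidef) (hR : R.PosDef) (T : ℕ) :
    ((riccati Q R A B)^[T] 0).PosSemidef := by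
  induction T with
  | zero => exact PosSemidef.zero
  | succ T ih =>
    rw [Function.iterate_succ_apply', riccati_eq_feedbackCost hR ih]
    exact posSemidef_feedbackCost hQ hR.posSemidef ih _

theorem posSemidef_sum_sub_riccati_iterate [DecidableEq m] [DecidableEq n] (hQ : Q.PosSemidef)
    (hR : R.PosDef) (K : Matrix n m ℝ) (T : ℕ) :
    (∑ t ∈ Finset.range T, ((A + B * K)ᵀ) ^ t * (Q + Kᵀ * R * K) * (A + B * K) ^ t -
      (riccati Q R A B)^[T] 0).PosSemidef := by
  induction T with
  | zero => simpa using PosSemidef.zero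
  | succ T ih =>
    rw [Function.iterate_succ_apply', sum_range_succ_transpose_pow_mul_mul_pow]
    set S := ∑ t ∈ Finset.range T, ((A + B * K)ᵀ) ^ t * (Q + Kᵀ * R * K) * (A + B * K) ^ t
    set X := (riccati Q R A B)^[T] 0
    have hsplit : Q + Kᵀ * R * K + (A + B * K)ᵀ * S * (A + B * K) - riccati Q R A B X =
        (feedbackCost Q R A B K X - riccati Q R A B X) +
          (A + B * K)ᵀ * (S - X) * (A + B * K) := by
      rw [feedbackCost, Matrix.mul_sub, Matrix.sub_mul]
      abel
    rw [hsplit]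
    exact (posSemidef_feedbackCost_sub_riccati hR (posSemidef_riccati_iterate hQ hR T) K).add
      (ih.transpose_mul_mul_same _)

end Riccati

theorem spectrum.eventually_norm_pow_le_of_spectralRadius_lt {A : Type*} [NormedRing A]
    [NormedAlgebra ℂ A] [CompleteSpace A] {a : A} {r : ℝ≥0} (h : spectralRadius ℂ a < r) :
    ∀ᶠ n : ℕ in atTop, ‖a ^ n‖ ≤ r ^ n := by
  filter_upwards [(pow_nnnorm_pow_one_div_tendsto_nhds_spectralRadius a).eventually_lt_const h,
    eventually_ne_atTop 0] with n hn hn0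
  have := ENNReal.rpow_lt_rpow hn (by positivity : (0 : ℝ) < n)
  rw [← ENNReal.rpow_mul, one_div_mul_cancel (by exact_mod_cast hn0), ENNReal.rpow_one,
    ENNReal.rpow_natCast, ← ENNReal.coe_pow, ENNReal.coe_lt_coe] at this
  exact_mod_cast this.le

section Frobenius

-- The Frobenius norm is submultiplicative, invariant under transposition and under `ℝ → ℂ`.
open scoped Matrix.Norms.Frobenius

variable {n : Type*} [Fintype n] [DecidableEq n]

theorem SpecRadiusLtOne.spectralRadius_lt_one {p : ℕ} {D : Matrix (Fin p) (Fin p) ℝ}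
    (hD : SpecRadiusLtOne D) : spectralRadius ℂ (D.map (algebraMap ℝ ℂ)) < 1 := by
  rcases (spectrum ℂ (D.map (algebraMap ℝ ℂ))).eq_empty_or_nonempty with h | h
  · rw [spectralRadius, h]
    simp
  · refine spectrum.spectralRadius_lt_of_forall_lt_of_nonempty h fun z hz => ?_
    exact_mod_cast hD z (mem_spectrum_iff_isRoot_charpoly.mp hz)

theorem Matrix.eventually_frobenius_norm_pow_le_of_spectralRadius_lt {D : Matrix n n ℝ}
    {r : ℝ≥0} (hD : spectralRadius ℂ (D.map (algebraMap ℝ ℂ)) < r) :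
    ∀ᶠ t : ℕ in atTop, ‖D ^ t‖ ≤ r ^ t := by
  filter_upwards [spectrum.eventually_norm_pow_le_of_spectralRadius_lt hD] with t ht
  rwa [← (algebraMap ℝ ℂ).mapMatrix_apply, ← map_pow, RingHom.mapMatrix_apply,
    frobenius_norm_map_eq _ _ (by simp)] at ht

theorem Matrix.summable_transpose_pow_mul_mul_pow {D : Matrix n n ℝ}
    (hD : spectralRadius ℂ (D.map (algebraMap ℝ ℂ)) < 1) (M : Matrix n n ℝ) :
    Summable fun t : ℕ => (Dᵀ) ^ t * M * D ^ t := by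
  obtain ⟨r, hr, hr1⟩ := ENNReal.lt_iff_exists_nnreal_btwn.mp hD
  have hr2 : (r : ℝ) ^ 2 < 1 := by
    rw [sq_lt_one_iff₀ r.coe_nonneg]; exact_mod_cast hr1
  refine .of_norm_bounded_eventually_nat
    ((summable_geometric_of_lt_one (by positivity) hr2).mul_left ‖M‖) ?_
  filter_upwards [eventually_frobenius_norm_pow_le_of_spectralRadius_lt hr] with t ht
  calc ‖(Dᵀ) ^ t * M * D ^ t‖ ≤ ‖(Dᵀ) ^ t‖ * ‖M‖ * ‖D ^ t‖ := norm_mul₃_le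
    _ = ‖M‖ * ‖D ^ t‖ ^ 2 := by rw [← transpose_pow, frobenius_norm_transpose]; ring
    _ ≤ ‖M‖ * ((r : ℝ) ^ 2) ^ t := by
      rw [← pow_mul, mul_comm 2, pow_mul]; gcongr

end Frobenius

/-- if some feedback `L` makes `D = A + BL` have spectral radius less than one,
then every Riccati iterate (started at `0`) is dominated, in the Loewner order, by the partial
sums of the series `∑ₜ (Dᵀ)ᵗ (Q + LᵀRL) Dᵗ`; moreover that series converges (entrywise). -/
theorem riccati_iterates_bounded {p r : ℕ}
    (Q : Matrix (Fin p) (Fin p) ℝ) (R : Matrix (Fin r) (Fin r) ℝ)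
    (A : Matrix (Fin p) (Fin p) ℝ) (B : Matrix (Fin p) (Fin r) ℝ)
    (hQ : Q.PosDef) (hR : R.PosDef)
    (L : Matrix (Fin r) (Fin p) ℝ)
    (D : Matrix (Fin p) (Fin p) ℝ) (hD : D = A + B * L)
    (hstab : SpecRadiusLtOne D)
    (P : ℕ → Matrix (Fin p) (Fin p) ℝ)
    (hP0 : P 0 = 0)
    (hPrec : ∀ t : ℕ, P (t + 1)
      = Q + Aᵀ * P t * A - Aᵀ * P t * B * (Bᵀ * P t * B + R)⁻¹ * (Bᵀ * P t * A)) :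
    (∀ T : ℕ,
      ((∑ t ∈ Finset.range T, (Dᵀ) ^ t * (Q + Lᵀ * R * L) * D ^ t) - P T).PosSemidef) ∧
      ∀ i j : Fin p, Summable (fun t : ℕ => ((Dᵀ) ^ t * (Q + Lᵀ * R * L) * D ^ t) i j) := by
  have hP : ∀ T, P T = (riccati Q R A B)^[T] 0 := by
    intro T
    induction T with
    | zero => exact hP0
    | succ T ih => rw [hPrec, Function.iterate_succ_apply', ← ih, riccati]
  have hsum := summable_transpose_pow_mul_mul_pow hstab.spectralRadius_lt_one (Q + Lᵀ * R * L)
  refine ⟨fun T => ?_, fun i j => Pi.summable.mp (Pi.summable.mp hsum i) j⟩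
  rw [hP, hD]
  exact posSemidef_sum_sub_riccati_iterate hQ.posSemidef hR L T
end

section
/- Let p, r ≥ 1, q = p + r, and k ≥ 1 with kp ≥ q. Let L₁,…,L_k ∈ ℝ^{r×p} be random matrices such that all kp columns (each a random vector in ℝ^r) are mutually independent and each has a linearly full rank distribution. Let M = [ [I_p; L₁], …, [I_p; L_k] ] ∈ ℝ^{q×(kp)} be the matrix whose i-th block of p columns stacks I_p on top of L_i. Then, with probability one, rank(M) = q. -/
/-!
Write `X(i, j)` for the `j`-th column of `Lᵢ`. If `r` differences `X(i, j) - X(0, j)` with `i ≠ 0`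
and distinct `(i, j)` are linearly independent, then these columns of `M` together with the first
block form an invertible `q × q` submatrix, so `rank M = q`; `kp ≥ q` leaves room for such a choice.
The differences are almost surely independent by induction on their number: the new difference
`X - W` lies in the span of the previous ones, a proper subspace, only if `X` lies in an affine
hyperplane determined by `W` and the previous differences; these are independent of `X`, so by
Fubini this has probability zero.
-/

open Matrix MeasureTheory ProbabilityTheory

open Function Set Submodule

lemma span_range_ne_top_of_card_lt {K : Type*} [Field K] {m n : ℕ} (hmn : m < n)
    (v : Fin m → Fin n → K) : span K (range v) ≠ ⊤ := by
  intro htop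
  have := finrank_range_le_card (R := K) v
  rw [Set.finrank, htop, finrank_top, Module.finrank_fin_fun, Fintype.card_fin] at this
  omega

lemma LinFullRankDistribution.measure_sub_mem_eq_zero {n : ℕ} {Ω : Type*} [MeasurableSpace Ω]
    {μ : Measure Ω} {X : Ω → Fin n → ℝ} (hX : LinFullRankDistribution μ X)
    {V : Submodule ℝ (Fin n → ℝ)} (hV : V ≠ ⊤) (x₀ : Fin n → ℝ) :
    μ {ω | X ω - x₀ ∈ V} = 0 := by
  obtain ⟨f, hf, hVf⟩ := V.exists_le_ker_of_lt_top hV.lt_top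
  set a := (dotProductEquiv ℝ (Fin n)).symm f
  have hfa : ∀ x, f x = a ⬝ᵥ x := fun x => by
    rw [← (dotProductEquiv ℝ (Fin n)).apply_symm_apply f]; rfl
  have ha : a ≠ 0 := by simpa [a] using hf
  refine measure_mono_null (fun ω hω => ?_) (hX a (a ⬝ᵥ x₀) ha)
  have h0 : f (X ω - x₀) = 0 := hVf hω
  rwa [hfa, dotProduct_sub, sub_eq_zero] at h0

lemma ProbabilityTheory.IndepFun.measure_preimage_eq_zero_of_forall {Ω E F : Type*}
    [MeasurableSpace Ω] [MeasurableSpace E] [MeasurableSpace F] {μ : Measure Ω} [IsFiniteMeasure μ]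
    {X : Ω → E} {Z : Ω → F} (hX : Measurable X) (hZ : Measurable Z) (hXZ : IndepFun X Z μ)
    {S : Set (E × F)} (hS : MeasurableSet S) (h : ∀ z, μ {ω | (X ω, z) ∈ S} = 0) :
    μ {ω | (X ω, Z ω) ∈ S} = 0 := by
  have hslice : ∀ z, μ.map X ((fun x => (x, z)) ⁻¹' S) = 0 := fun z => by
    rw [Measure.map_apply hX (hS.preimage measurable_prodMk_right)]
    exact h z
  change μ ((fun ω => (X ω, Z ω)) ⁻¹' S) = 0
  rw [← Measure.map_apply (hX.prodMk hZ) hS,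
    (indepFun_iff_map_prod_eq_prod_map_map hX.aemeasurable hZ.aemeasurable).1 hXZ,
    Measure.prod_apply_symm hS]
  simp [hslice]

lemma measurableSet_linearIndependent_and_mem_span {m n : ℕ} :
    MeasurableSet {q : (Fin m → Fin n → ℝ) × (Fin n → ℝ) |
      LinearIndependent ℝ q.1 ∧ q.2 ∈ span ℝ (range q.1)} := by
  have hcons : Continuous fun q : (Fin m → Fin n → ℝ) × (Fin n → ℝ) =>
      (Fin.cons q.2 q.1 : Fin (m + 1) → Fin n → ℝ) :=
    (continuous_snd (X := Fin m → Fin n → ℝ)).finCons (A := fun _ => Fin n → ℝ) continuous_fst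
  have hli : ∀ l, MeasurableSet {v : Fin l → Fin n → ℝ | LinearIndependent ℝ v} :=
    fun l => isOpen_setOfPred_linearIndependent.measurableSet
  convert (measurable_fst (hli m)).inter (hcons.measurable (hli (m + 1))).compl using 1
  ext q
  simp only [mem_ofPred_eq, mem_inter_iff, mem_preimage, mem_compl_iff, linearIndependent_finCons]
  tauto

lemma ProbabilityTheory.IndepFun.measure_linearIndependent_and_sub_mem_span_eq_zero {m n : ℕ}
    (hmn : m < n) {Ω : Type*} [MeasurableSpace Ω] {μ : Measure Ω} [IsFiniteMeasure μ]
    {Y W : Ω → Fin n → ℝ} {G : Ω → Fin m → Fin n → ℝ} (hY : Measurable Y)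
    (hGW : Measurable fun ω => (G ω, W ω))
    (hind : IndepFun Y (fun ω => (G ω, W ω)) μ) (hfull : LinFullRankDistribution μ Y) :
    μ {ω | LinearIndependent ℝ (G ω) ∧ Y ω - W ω ∈ span ℝ (range (G ω))} = 0 := by
  have hS : MeasurableSet ((fun q : (Fin n → ℝ) × (Fin m → Fin n → ℝ) × (Fin n → ℝ) =>
      (q.2.1, q.1 - q.2.2)) ⁻¹' {q | LinearIndependent ℝ q.1 ∧ q.2 ∈ span ℝ (range q.1)}) :=
    (by fun_prop : Measurable _) measurableSet_linearIndependent_and_mem_span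
  refine hind.measure_preimage_eq_zero_of_forall hY hGW hS fun ⟨g, w⟩ => ?_
  by_cases hg : LinearIndependent ℝ g
  · exact measure_mono_null (fun ω hω => hω.2)
      (hfull.measure_sub_mem_eq_zero (span_range_ne_top_of_card_lt hmn g) w)
  · simp [hg]

theorem ae_linearIndependent_sub_of_iIndepFun {Ω ι : Type*} [MeasurableSpace Ω] {μ : Measure Ω}
    {n : ℕ} {X : ι → Ω → Fin n → ℝ} (hX : ∀ i, Measurable (X i)) (hindep : iIndepFun X μ)
    (hfull : ∀ i, LinFullRankDistribution μ (X i)) {m : ℕ} (hmn : m ≤ n) {α β : Fin m → ι}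
    (hα : Injective α) (hαβ : ∀ s t, α s ≠ β t) :
    ∀ᵐ ω ∂μ, LinearIndependent ℝ fun t => X (α t) ω - X (β t) ω := by
  have := hindep.isProbabilityMeasure
  induction m with
  | zero => simp
  | succ m ih =>
    classical
    have htail := ih (β := β ∘ Fin.succ) (by omega) (hα.comp (Fin.succ_injective _))
      (fun s t => hαβ _ _)
    set T : Finset ι := Finset.univ.image (fun t : Fin m => α t.succ) ∪ Finset.univ.image β
    have hT : Disjoint {α 0} T := by
      simp only [T, Finset.disjoint_singleton_left, Finset.mem_union, Finset.mem_image,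
        Finset.mem_univ, true_and, not_or, not_exists]
      exact ⟨fun t => hα.ne (Fin.succ_ne_zero t), fun t => (hαβ 0 t).symm⟩
    have hind : IndepFun (X (α 0))
        (fun ω => (fun t : Fin m => X (α t.succ) ω - X (β t.succ) ω, X (β 0) ω)) μ :=
      (hindep.indepFun_finset {α 0} T hT hX).comp
        (φ := fun v : ({α 0} : Finset ι) → Fin n → ℝ => v ⟨α 0, Finset.mem_singleton_self _⟩)
        (ψ := fun v : T → Fin n → ℝ => (fun t : Fin m => v ⟨α t.succ, by simp [T]⟩ -
          v ⟨β t.succ, by simp [T]⟩, v ⟨β 0, by simp [T]⟩))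
        (measurable_pi_apply _) (by fun_prop)
    have hnew := hind.measure_linearIndependent_and_sub_mem_span_eq_zero (by omega) (hX _)
      (by fun_prop) (hfull _)
    filter_upwards [htail, measure_eq_zero_iff_ae_notMem.1 hnew] with ω h1 h2
    rw [linearIndependent_finSucc]
    exact ⟨h1, fun h => h2 ⟨h1, h⟩⟩

lemma Matrix.rank_eq_card_of_isUnit_submatrix {m n K : Type*} [Fintype m] [Fintype n]
    [DecidableEq m] [Field K] (M : Matrix m n K) (φ : m → n) (h : IsUnit (M.submatrix id φ)) :
    M.rank = Fintype.card m :=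
  le_antisymm M.rank_le_card_height
    ((rank_of_isUnit _ h).symm.trans_le (M.rank_submatrix_le id φ))

/-- The paper's `M = [[I_p; L₁], …, [I_p; L_k]]`: column `(i, j)` is column `j` of `[I_p; Lᵢ]`. -/
def feedbackMatrix {K : Type*} [Field K] {p r k : ℕ} (L : Fin k → Matrix (Fin r) (Fin p) K) :
    Matrix (Fin p ⊕ Fin r) (Fin k × Fin p) K :=
  Matrix.of fun a x => Matrix.fromRows 1 (L x.1) a x.2

/-- The columns `(0, j)` and `(i + 1, j)` of `M` form a square matrix `[I_p, B; L₀, D]` where `B`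
selects columns of `I_p`, so its Schur complement `D - L₀ B` has the columns `Lᵢ₊₁ eⱼ - L₀ eⱼ`. -/
lemma rank_feedbackMatrix_of_linearIndependent {K : Type*} [Field K] {p r k : ℕ}
    (L : Fin (k + 1) → Matrix (Fin r) (Fin p) K) (ψ : Fin r → Fin k × Fin p)
    (h : LinearIndependent K fun s => (L (ψ s).1.succ - L 0).col (ψ s).2) :
    (feedbackMatrix L).rank = p + r := by
  set φ : Fin p ⊕ Fin r → Fin (k + 1) × Fin p :=
    Sum.elim (fun j => (0, j)) (fun s => ((ψ s).1.succ, (ψ s).2))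
  have hblocks : (feedbackMatrix L).submatrix id φ = fromBlocks 1
      ((1 : Matrix (Fin p) (Fin p) K).submatrix id fun s => (ψ s).2) (L 0)
      (of fun i s => L (ψ s).1.succ i (ψ s).2) := by
    ext (i | i) (j | j) <;> rfl
  rw [rank_eq_card_of_isUnit_submatrix _ φ, Fintype.card_sum, Fintype.card_fin, Fintype.card_fin]
  rw [hblocks, isUnit_iff_isUnit_det, det_fromBlocks_one₁₁, ← isUnit_iff_isUnit_det,
    ← linearIndependent_cols_iff_isUnit]
  convert h using 1
  ext s i
  simp [mul_apply, one_apply]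

theorem random_feedback_matrix_full_rank_general {p r k : ℕ}
    (hk : 1 ≤ k) (hkp : p + r ≤ k * p)
    {Ω : Type*} [MeasurableSpace Ω] (μ : Measure Ω) [IsProbabilityMeasure μ]
    (L : Fin k → Ω → Matrix (Fin r) (Fin p) ℝ)
    (hmeas : ∀ (i : Fin k) (a : Fin r) (b : Fin p), Measurable fun ω => L i ω a b)
    (hindep : iIndepFun
      (fun (x : Fin k × Fin p) (ω : Ω) (s : Fin r) => L x.1 ω s x.2) μ)
    (hfull : ∀ x : Fin k × Fin p,
      LinFullRankDistribution μ (fun ω (s : Fin r) => L x.1 ω s x.2)) :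
    μ {ω | (Matrix.of fun (a : Fin p ⊕ Fin r) (x : Fin k × Fin p) =>
        Matrix.fromRows (1 : Matrix (Fin p) (Fin p) ℝ) (L x.1 ω) a x.2).rank = p + r} = 1 := by
  obtain ⟨k, rfl⟩ := Nat.exists_eq_add_of_le' hk
  obtain ⟨ψ⟩ : Nonempty (Fin r ↪ Fin k × Fin p) := Function.Embedding.nonempty_of_card_le <| by
    simp only [Fintype.card_fin, Fintype.card_prod]
    linarith
  have hLI := ae_linearIndependent_sub_of_iIndepFun
    (fun x => measurable_pi_lambda _ fun s => hmeas x.1 s x.2) hindep hfull le_rfl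
    (α := Prod.map Fin.succ id ∘ ψ) (β := Prod.map (fun _ => 0) id ∘ ψ)
    (((Fin.succ_injective _).prodMap injective_id).comp ψ.injective)
    (fun s t h => Fin.succ_ne_zero _ (congrArg Prod.fst h))
  refine (measure_congr (ae_eq_univ.2 ?_)).trans measure_univ
  exact hLI.mono fun ω hω => rank_feedbackMatrix_of_linearIndependent (L · ω) ψ hω

/-- if all `kp` columns of the random feedbacks `L₁, …, L_k` are independent
with linearly full rank distributions and `kp ≥ q = p + r`, then the matrix
`M = [[I_p; L₁], …, [I_p; L_k]]` has full rank `q` almost surely. -/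
theorem random_feedback_matrix_full_rank {p r k : ℕ}
    (hp : 1 ≤ p) (hr : 1 ≤ r) (hk : 1 ≤ k) (hkp : p + r ≤ k * p)
    {Ω : Type*} [MeasurableSpace Ω] (μ : Measure Ω) [IsProbabilityMeasure μ]
    (L : Fin k → Ω → Matrix (Fin r) (Fin p) ℝ)
    (hmeas : ∀ (i : Fin k) (a : Fin r) (b : Fin p), Measurable fun ω => L i ω a b)
    (hindep : iIndepFun
      (fun (x : Fin k × Fin p) (ω : Ω) (s : Fin r) => L x.1 ω s x.2) μ)
    (hfull : ∀ x : Fin k × Fin p,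
      LinFullRankDistribution μ (fun ω (s : Fin r) => L x.1 ω s x.2)) :
    μ {ω | (Matrix.of fun (a : Fin p ⊕ Fin r) (x : Fin k × Fin p) =>
        Matrix.fromRows (1 : Matrix (Fin p) (Fin p) ℝ) (L x.1 ω) a x.2).rank = p + r} = 1 :=
  random_feedback_matrix_full_rank_general hk hkp μ L hmeas hindep hfull
end
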